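/- arXiv:1510.08633 — 12 statements merged into one kernel-verified Lean document; each statement's English description precedes it below -/
import Mathlib

section
/- Let Φ : ℝ → ℝ be a nonzero Bernstein function with Φ(0+) = 0 and lim_{s→∞} Φ(s)/s = 0, extended to [0,∞) by setting Φ(0) = 0. Then the function b ↦ Φ(|b|) is continuous on ℝ but is not differentiable at b = 0. -/
open Filter Set Topology

/-- A Bernstein function: infinitely differentiable on `(0,∞)`, nonnegative there,
with `(-1)^(k-1) Φ^(k)(s) ≥ 0` for all `k ≥ 1` and `s > 0`. -/
def IsBernstein (Φ : ℝ → ℝ) : Prop :=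
  ContDiffOn ℝ (⊤ : ℕ∞) Φ (Set.Ioi (0:ℝ)) ∧
  (∀ s : ℝ, 0 < s → 0 ≤ Φ s) ∧
  ∀ k : ℕ, 1 ≤ k → ∀ s : ℝ, 0 < s → 0 ≤ (-1 : ℝ) ^ (k - 1) * (deriv^[k] Φ) s

/-- for a nonzero Bernstein function `Φ` with `Φ(0+) = 0` and
`lim_{s→∞} Φ(s)/s = 0`, extended by `Φ 0 = 0`: the function `b ↦ Φ(|b|)` is continuous
on `ℝ` but not differentiable at `0`. -/
theorem stmt_1 (Φ : ℝ → ℝ)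
    (hB : IsBernstein Φ)
    (hnz : ∃ s : ℝ, 0 < s ∧ 0 < Φ s)
    (h0 : Tendsto Φ (nhdsWithin 0 (Set.Ioi 0)) (nhds 0))
    (hsub : Tendsto (fun s => Φ s / s) atTop (nhds 0))
    (hΦ0 : Φ 0 = 0) :
    Continuous (fun b : ℝ => Φ |b|) ∧
    ¬ DifferentiableAt ℝ (fun b : ℝ => Φ |b|) 0 := by
  obtain ⟨hsm, hpos, hder⟩ := hB
  obtain ⟨s₀, hs₀, hΦs₀⟩ := hnz
  have hopen : IsOpen (Ioi (0:ℝ)) := isOpen_Ioi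
  have hcontOn : ContinuousOn Φ (Ioi (0:ℝ)) := hsm.continuousOn
  -- concavity of Φ on (0,∞)
  have hdiff : DifferentiableOn ℝ Φ (interior (Ioi (0:ℝ))) := by
    rw [hopen.interior_eq]; exact hsm.differentiableOn (by simp)
  have hdiff' : DifferentiableOn ℝ (deriv Φ) (interior (Ioi (0:ℝ))) := by
    rw [hopen.interior_eq]
    exact (hsm.deriv_of_isOpen hopen (m := 1) (WithTop.coe_le_coe.2 (le_top : (1 + 1 : ℕ∞) ≤ ⊤))).differentiableOn (by norm_num)
  have hconc : ConcaveOn ℝ (Ioi (0:ℝ)) Φ := by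
    apply concaveOn_of_deriv2_nonpos (convex_Ioi 0) hcontOn hdiff hdiff'
    intro x hx
    rw [hopen.interior_eq] at hx
    have h2 := hder 2 (by norm_num) x hx
    norm_num at h2
    exact h2
  -- key lower bound: Φ s ≥ Φ s₀ * (s / (2 s₀)) for 0 < s < s₀
  have key : ∀ s : ℝ, 0 < s → s < s₀ → Φ s₀ * (s / (2 * s₀)) ≤ Φ s := by
    intro s hs hss
    have hd : (0:ℝ) < s₀ - s / 2 := by linarith
    set a : ℝ := (s₀ - s) / (s₀ - s / 2) with ha_def
    set b : ℝ := (s / 2) / (s₀ - s / 2) with hb_def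
    have ha : 0 ≤ a := div_nonneg (by linarith) hd.le
    have hb : 0 ≤ b := div_nonneg (by linarith) hd.le
    have hab : a + b = 1 := by
      rw [ha_def, hb_def, ← add_div, show s₀ - s + s / 2 = s₀ - s / 2 by ring,
        div_self hd.ne']
    have hcomb := hconc.2 (mem_Ioi.2 (by linarith : (0:ℝ) < s / 2))
      (mem_Ioi.2 hs₀) ha hb hab
    have harg : a • (s / 2) + b • s₀ = s := by
      simp only [smul_eq_mul, ha_def, hb_def]
      rw [div_mul_eq_mul_div, div_mul_eq_mul_div, ← add_div, div_eq_iff hd.ne']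
      ring
    rw [harg] at hcomb
    have hΦhalf : 0 ≤ Φ (s / 2) := hpos _ (by linarith)
    have hbge : s / (2 * s₀) ≤ b := by
      rw [hb_def, div_le_div_iff₀ (by linarith) hd]
      nlinarith
    have : Φ s₀ * (s / (2 * s₀)) ≤ b * Φ s₀ := by nlinarith
    simp only [smul_eq_mul] at hcomb
    nlinarith
  -- continuity
  have habs : Tendsto (fun b : ℝ => |b|) (nhdsWithin 0 {(0:ℝ)}ᶜ) (nhdsWithin 0 (Ioi 0)) := by
    apply tendsto_nhdsWithin_of_tendsto_nhds_of_eventually_within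
    · exact (continuous_abs.tendsto' 0 0 abs_zero).mono_left nhdsWithin_le_nhds
    · filter_upwards [self_mem_nhdsWithin] with b hb
      exact mem_Ioi.2 (abs_pos.2 hb)
  have hpt : Tendsto (fun b : ℝ => Φ |b|) (nhdsWithin 0 {(0:ℝ)}ᶜ) (nhds 0) :=
    h0.comp habs
  have hcont : Continuous (fun b : ℝ => Φ |b|) := by
    rw [continuous_iff_continuousAt]
    intro x
    rcases eq_or_ne x 0 with rfl | hx
    · have hpure : Tendsto (fun b : ℝ => Φ |b|) (pure (0:ℝ)) (nhds 0) := by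
        simpa [hΦ0] using tendsto_pure_nhds (fun b : ℝ => Φ |b|) 0
      have : Tendsto (fun b : ℝ => Φ |b|) (nhds 0) (nhds 0) := by
        exact (hpt.sup hpure).mono_left
          (le_of_eq (nhdsNE_sup_pure 0).symm)
      simpa [ContinuousAt, hΦ0] using this
    · have hax : 0 < |x| := abs_pos.2 hx
      have hΦc : ContinuousAt Φ |x| :=
        hcontOn.continuousAt (hopen.mem_nhds (mem_Ioi.2 hax))
      exact hΦc.comp continuous_abs.continuousAt
  refine ⟨hcont, ?_⟩
  intro hd
  set g : ℝ → ℝ := fun b => Φ |b| with hg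
  -- g is even, so its derivative at 0 is 0
  have hzero : deriv g 0 = 0 := by
    have hn := deriv_comp_neg (f := g) (x := (0:ℝ))
    have heq : (fun x : ℝ => g (-x)) = g := by
      funext b; simp [hg, abs_neg]
    rw [heq, neg_zero] at hn
    linarith
  have hhd : HasDerivAt g 0 0 := by simpa [hzero] using hd.hasDerivAt
  have hslope := hasDerivAt_iff_tendsto_slope.1 hhd
  have hright : Tendsto (fun b => Φ b / b) (nhdsWithin 0 (Ioi 0)) (nhds 0) := by
    have hmono : Tendsto (slope g 0) (nhdsWithin 0 (Ioi 0)) (nhds 0) :=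
      hslope.mono_left (nhdsWithin_mono 0 (fun x hx => ne_of_gt hx))
    apply hmono.congr'
    filter_upwards [self_mem_nhdsWithin] with b hb
    rw [slope_def_field]
    simp [hg, hΦ0, abs_of_pos (mem_Ioi.1 hb)]
  have hc : 0 < Φ s₀ / (2 * s₀) := div_pos hΦs₀ (by linarith)
  have hev : ∀ᶠ b in nhdsWithin 0 (Ioi 0), Φ s₀ / (2 * s₀) ≤ Φ b / b := by
    filter_upwards [Ioo_mem_nhdsGT_of_mem ⟨le_refl (0:ℝ), hs₀⟩] with b hb
    have hk := key b hb.1 hb.2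
    rw [le_div_iff₀ hb.1]
    calc Φ s₀ / (2 * s₀) * b = Φ s₀ * (b / (2 * s₀)) := by ring
      _ ≤ Φ b := hk
  have : Φ s₀ / (2 * s₀) ≤ 0 := ge_of_tendsto hright hev
  linarith
end

section
/- Let Φ : ℝ → ℝ be a nonzero Bernstein function with Φ(0+) = 0, lim_{s→∞} Φ(s)/s = 0 and Φ'(0+) = 1. Then for every b ∈ ℝ, lim_{α→0+} Φ(α|b|)/Φ(α) = |b| (with the convention Φ(0) = 0). Moreover, if in addition Φ''(0+) is finite, then lim_{α→0+} (−α² Φ''(0+))/Φ(α) = 0; that is, the maximum concavity ζ(Φ_α) of the rescaled penalty Φ_α(s) = Φ(αs)/Φ(α) tends to 0 as α → 0+. -/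
open Filter Set Topology

theorem key (Φ : ℝ → ℝ)
    (hB : IsBernstein Φ)
    (h0 : Tendsto Φ (nhdsWithin 0 (Set.Ioi 0)) (nhds 0))
    (hd1 : Tendsto (deriv Φ) (nhdsWithin 0 (Set.Ioi 0)) (nhds 1)) :
    Tendsto (fun α => Φ α / α) (nhdsWithin 0 (Set.Ioi 0)) (nhds 1) := by
  obtain ⟨hcd, hnn, hsign⟩ := hB
  have hdiff : ∀ s : ℝ, 0 < s → HasDerivAt Φ (deriv Φ s) s := by
    intro s hs
    have h1 : DifferentiableOn ℝ Φ (Ioi 0) := hcd.differentiableOn (by simp)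
    exact ((h1 s hs).differentiableAt (isOpen_Ioi.mem_nhds hs)).hasDerivAt
  have hcont : ContinuousOn Φ (Ioi 0) := hcd.continuousOn
  have hd2 : ∀ s : ℝ, 0 < s → deriv (deriv Φ) s ≤ 0 := by
    intro s hs
    have h := hsign 2 (by norm_num) s hs
    have h2 : (deriv^[2] Φ) s = deriv (deriv Φ) s := rfl
    rw [h2] at h
    norm_num at h
    linarith
  have hderiv_cd : ContDiffOn ℝ 1 (deriv Φ) (Ioi 0) :=
    hcd.deriv_of_isOpen isOpen_Ioi (WithTop.coe_le_coe.mpr le_top)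
  have hanti : AntitoneOn (deriv Φ) (Ioi 0) := by
    apply antitoneOn_of_deriv_nonpos (convex_Ioi 0) hderiv_cd.continuousOn
    · rw [interior_Ioi]
      exact fun x hx => (((hderiv_cd.differentiableOn one_ne_zero) x hx).differentiableAt
        (isOpen_Ioi.mem_nhds hx)).differentiableWithinAt
    · rw [interior_Ioi]; exact fun x hx => hd2 x hx
  have hdle1 : ∀ s : ℝ, 0 < s → deriv Φ s ≤ 1 := by
    intro s hs
    refine ge_of_tendsto hd1 ?_
    filter_upwards [Ioo_mem_nhdsGT_of_mem (left_mem_Ico.2 hs)] with t ht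
    exact hanti (mem_Ioi.2 ht.1) (mem_Ioi.2 hs) ht.2.le
  have htid : Tendsto (fun t : ℝ => t) (nhdsWithin 0 (Ioi 0)) (nhds 0) :=
    tendsto_id.mono_right nhdsWithin_le_nhds
  have hub : ∀ α : ℝ, 0 < α → Φ α ≤ α := by
    intro α hα
    have hg : Tendsto (fun t : ℝ => Φ t + (α - t)) (nhdsWithin 0 (Ioi 0)) (nhds α) := by
      have := h0.add ((tendsto_const_nhds (x := α)).sub htid)
      simpa using this
    refine ge_of_tendsto hg ?_
    filter_upwards [Ioo_mem_nhdsGT_of_mem (left_mem_Ico.2 hα)] with t ht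
    obtain ⟨ξ, hξ, hξeq⟩ := exists_hasDerivAt_eq_slope Φ (deriv Φ) ht.2
      (hcont.mono (fun x hx => lt_of_lt_of_le ht.1 hx.1))
      (fun x hx => hdiff x (ht.1.trans hx.1))
    have h1 : (Φ α - Φ t) / (α - t) ≤ 1 := hξeq ▸ hdle1 ξ (ht.1.trans hξ.1)
    have h2 : (0:ℝ) < α - t := by linarith [ht.2]
    nlinarith [(div_le_one h2).1 h1]
  have hlb : ∀ α : ℝ, 0 < α → α * deriv Φ α ≤ Φ α := by
    intro α hα
    have hg : Tendsto (fun t : ℝ => Φ t + deriv Φ α * (α - t)) (nhdsWithin 0 (Ioi 0))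
        (nhds (deriv Φ α * α)) := by
      have := h0.add ((tendsto_const_nhds (x := deriv Φ α)).mul
        ((tendsto_const_nhds (x := α)).sub htid))
      simpa using this
    have : deriv Φ α * α ≤ Φ α := by
      refine le_of_tendsto hg ?_
      filter_upwards [Ioo_mem_nhdsGT_of_mem (left_mem_Ico.2 hα)] with t ht
      obtain ⟨ξ, hξ, hξeq⟩ := exists_hasDerivAt_eq_slope Φ (deriv Φ) ht.2
        (hcont.mono (fun x hx => lt_of_lt_of_le ht.1 hx.1))
        (fun x hx => hdiff x (ht.1.trans hx.1))
      have h1 : deriv Φ α ≤ (Φ α - Φ t) / (α - t) :=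
        hξeq ▸ hanti (mem_Ioi.2 (ht.1.trans hξ.1)) (mem_Ioi.2 hα) hξ.2.le
      have h2 : (0:ℝ) < α - t := by linarith [ht.2]
      nlinarith [(le_div_iff₀ h2).1 h1]
    linarith [this]
  refine tendsto_of_tendsto_of_tendsto_of_le_of_le' hd1 (tendsto_const_nhds (x := (1:ℝ))) ?_ ?_
  · filter_upwards [self_mem_nhdsWithin] with α hα
    have := hlb α hα
    exact (le_div_iff₀ hα).2 (by linarith)
  · filter_upwards [self_mem_nhdsWithin] with α hα
    exact (div_le_one hα).2 (hub α hα)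

/-- for a nonzero Bernstein function `Φ` with `Φ(0+) = 0`,
`lim_{s→∞} Φ(s)/s = 0`, `Φ'(0+) = 1` (and `Φ 0 = 0`): for every `b`,
`Φ(α|b|)/Φ(α) → |b|` as `α → 0+`; moreover if `Φ''(0+) = c` is finite then the maximum
concavity `ζ(Φ_α) = -α²c/Φ(α)` tends to `0` as `α → 0+`. -/
theorem stmt_2 (Φ : ℝ → ℝ)
    (hB : IsBernstein Φ)
    (hnz : ∃ s : ℝ, 0 < s ∧ 0 < Φ s)
    (h0 : Tendsto Φ (nhdsWithin 0 (Set.Ioi 0)) (nhds 0))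
    (hsub : Tendsto (fun s => Φ s / s) atTop (nhds 0))
    (hΦ0 : Φ 0 = 0)
    (hd1 : Tendsto (deriv Φ) (nhdsWithin 0 (Set.Ioi 0)) (nhds 1)) :
    (∀ b : ℝ, Tendsto (fun α => Φ (α * |b|) / Φ α) (nhdsWithin 0 (Set.Ioi 0)) (nhds |b|)) ∧
    (∀ c : ℝ, Tendsto (deriv^[2] Φ) (nhdsWithin 0 (Set.Ioi 0)) (nhds c) →
      Tendsto (fun α => (-(α ^ 2) * c) / Φ α) (nhdsWithin 0 (Set.Ioi 0)) (nhds 0)) := by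
  have hk : Tendsto (fun α => Φ α / α) (nhdsWithin 0 (Set.Ioi 0)) (nhds 1) := key Φ hB h0 hd1
  have hinv : Tendsto (fun α => α / Φ α) (nhdsWithin 0 (Set.Ioi 0)) (nhds 1) := by
    have := hk.inv₀ one_ne_zero
    simp only [inv_div] at this
    simpa using this
  have hpos : ∀ᶠ α in nhdsWithin (0:ℝ) (Set.Ioi 0), 0 < Φ α := by
    have h1 : ∀ᶠ α in nhdsWithin (0:ℝ) (Set.Ioi 0), 0 < Φ α / α :=
      hk.eventually (eventually_gt_nhds (by norm_num))
    filter_upwards [h1, self_mem_nhdsWithin] with α h1 h2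
    exact (div_pos_iff.1 h1).resolve_right (fun h => absurd h2 (by simp; linarith [h.2])) |>.1
  constructor
  · intro b
    rcases eq_or_ne b 0 with hb | hb
    · simpa [hb, hΦ0] using (tendsto_const_nhds :
        Tendsto (fun _ : ℝ => (0:ℝ)) (nhdsWithin 0 (Set.Ioi 0)) (nhds 0))
    · have hbpos : 0 < |b| := abs_pos.2 hb
      have hmap : Tendsto (fun α : ℝ => α * |b|) (nhdsWithin 0 (Set.Ioi 0))
          (nhdsWithin 0 (Set.Ioi 0)) := by
        apply tendsto_nhdsWithin_of_tendsto_nhds_of_eventually_within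
        · have hcb : Tendsto (fun α : ℝ => α * |b|) (nhds 0) (nhds 0) := by
            simpa using (continuous_mul_right |b|).tendsto (0:ℝ)
          exact hcb.mono_left nhdsWithin_le_nhds
        · filter_upwards [self_mem_nhdsWithin] with α hα
          exact mul_pos hα hbpos
      have h1 : Tendsto (fun α => Φ (α * |b|) / (α * |b|)) (nhdsWithin 0 (Set.Ioi 0))
          (nhds 1) := hk.comp hmap
      have h2 := (h1.mul hinv).mul_const |b|
      refine Tendsto.congr' ?_ (by simpa using h2)
      filter_upwards [self_mem_nhdsWithin, hpos] with α hα hΦpos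
      have hα0 : (α:ℝ) ≠ 0 := ne_of_gt hα
      field_simp
  · intro c _
    have h1 : Tendsto (fun α : ℝ => -α * c) (nhdsWithin 0 (Set.Ioi 0)) (nhds 0) := by
      have hc : Continuous (fun α : ℝ => -α * c) := by continuity
      simpa using (hc.tendsto 0).mono_left nhdsWithin_le_nhds
    have h2 : Tendsto (fun α : ℝ => (-α * c) * (α / Φ α)) (nhdsWithin 0 (Set.Ioi 0))
        (nhds 0) := by simpa using h1.mul hinv
    refine Tendsto.congr (fun α => ?_) h2
    rw [mul_div_assoc']
    congr 1
    ring
end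

section
/- Let Φ : ℝ → ℝ be a nonzero Bernstein function with Φ(0+) = 0, lim_{s→∞} Φ(s)/s = 0 and Φ'(0+) = 1, and suppose that the limit γ = lim_{s→∞} s Φ'(s)/Φ(s) exists (necessarily γ ∈ [0,1]). Then for every b ≠ 0, lim_{α→∞} Φ(α|b|)/Φ(α) = |b|^γ; that is, Φ varies regularly at infinity with exponent γ. -/
open Filter Set Topology

/-- for a nonzero Bernstein function `Φ` with `Φ(0+) = 0`,
`lim_{s→∞} Φ(s)/s = 0`, `Φ'(0+) = 1`, if `γ = lim_{s→∞} sΦ'(s)/Φ(s)` exists then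
`γ ∈ [0,1]`, and for every `b ≠ 0`, `Φ(α|b|)/Φ(α) → |b|^γ` as `α → ∞`. -/
theorem stmt_3 (Φ : ℝ → ℝ)
    (hB : IsBernstein Φ)
    (hnz : ∃ s : ℝ, 0 < s ∧ 0 < Φ s)
    (h0 : Tendsto Φ (nhdsWithin 0 (Set.Ioi 0)) (nhds 0))
    (hsub : Tendsto (fun s => Φ s / s) atTop (nhds 0))
    (hΦ0 : Φ 0 = 0)
    (hd1 : Tendsto (deriv Φ) (nhdsWithin 0 (Set.Ioi 0)) (nhds 1))
    (γ : ℝ)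
    (hγ : Tendsto (fun s => s * deriv Φ s / Φ s) atTop (nhds γ)) :
    γ ∈ Set.Icc (0:ℝ) 1 ∧
    ∀ b : ℝ, b ≠ 0 →
      Tendsto (fun α => Φ (α * |b|) / Φ α) atTop (nhds (|b| ^ γ)) := by
  obtain ⟨hsm, hnn, hsign⟩ := hB
  obtain ⟨s₀, hs₀, hΦs₀⟩ := hnz
  have hcont : ContinuousOn Φ (Set.Ioi 0) := hsm.continuousOn
  have hdiff : ∀ s : ℝ, 0 < s → HasDerivAt Φ (deriv Φ s) s := fun s hs =>
    ((hsm.differentiableOn (by simp)).differentiableAt (Ioi_mem_nhds hs)).hasDerivAt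
  have hd_nonneg : ∀ s : ℝ, 0 < s → 0 ≤ deriv Φ s := by
    intro s hs
    have := hsign 1 le_rfl s hs
    simpa using this
  have hsm' : ContDiffOn ℝ (⊤ : ℕ∞) (deriv Φ) (Set.Ioi 0) :=
    hsm.deriv_of_isOpen isOpen_Ioi (by simp)
  have hd2 : ∀ s : ℝ, 0 < s → deriv (deriv Φ) s ≤ 0 := by
    intro s hs
    have h := hsign 2 (by norm_num) s hs
    have h2 : (deriv^[2]) Φ s = deriv (deriv Φ) s := by
      simp [Function.iterate_succ_apply']
    rw [h2] at h
    norm_num at h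
    linarith
  have hanti : AntitoneOn (deriv Φ) (Set.Ioi 0) := by
    apply antitoneOn_of_deriv_nonpos (convex_Ioi 0) hsm'.continuousOn
    · rw [interior_Ioi]; exact hsm'.differentiableOn (by simp)
    · rw [interior_Ioi]; exact fun x hx => hd2 x hx
  have hmono : MonotoneOn Φ (Set.Ioi 0) := by
    apply monotoneOn_of_deriv_nonneg (convex_Ioi 0) hcont
    · rw [interior_Ioi]; exact hsm.differentiableOn (by simp)
    · rw [interior_Ioi]; exact fun x hx => hd_nonneg x hx
  have hpos : ∀ s : ℝ, s₀ ≤ s → 0 < Φ s := fun s hs =>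
    lt_of_lt_of_le hΦs₀ (hmono (mem_Ioi.2 hs₀) (mem_Ioi.2 (lt_of_lt_of_le hs₀ hs)) hs)
  -- key concavity inequality : s Φ'(s) ≤ Φ(s)
  have hkey : ∀ s : ℝ, 0 < s → s * deriv Φ s ≤ Φ s := by
    intro s hs
    have hev : ∀ ε ∈ Set.Ioo (0:ℝ) s, (s - ε) * deriv Φ s ≤ Φ s - Φ ε := by
      intro ε hε
      obtain ⟨ξ, hξ, hslope⟩ := exists_hasDerivAt_eq_slope Φ (deriv Φ) hε.2
        (hcont.mono (fun x hx => lt_of_lt_of_le hε.1 hx.1))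
        (fun x hx => hdiff x (lt_trans hε.1 hx.1))
      have hξpos : (0:ℝ) < ξ := lt_trans hε.1 hξ.1
      have hle : deriv Φ s ≤ deriv Φ ξ := hanti (mem_Ioi.2 hξpos) (mem_Ioi.2 hs) (le_of_lt hξ.2)
      rw [hslope] at hle
      have hsε : 0 < s - ε := sub_pos.2 hε.2
      calc (s - ε) * deriv Φ s ≤ (s - ε) * ((Φ s - Φ ε) / (s - ε)) := by
            exact mul_le_mul_of_nonneg_left hle (le_of_lt hsε)
        _ = Φ s - Φ ε := by field_simp
    have hlim1 : Tendsto (fun ε => (s - ε) * deriv Φ s) (nhdsWithin 0 (Set.Ioi 0))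
        (nhds (s * deriv Φ s)) := by
      have : Tendsto (fun ε : ℝ => (s - ε) * deriv Φ s) (nhds 0) (nhds ((s - 0) * deriv Φ s)) :=
        ((continuous_const.sub continuous_id).mul continuous_const).tendsto 0
      simpa using this.mono_left nhdsWithin_le_nhds
    have hlim2 : Tendsto (fun ε => Φ s - Φ ε) (nhdsWithin 0 (Set.Ioi 0)) (nhds (Φ s - 0)) :=
      tendsto_const_nhds.sub h0
    rw [sub_zero] at hlim2
    exact le_of_tendsto_of_tendsto hlim1 hlim2
      (eventually_of_mem (Ioo_mem_nhdsGT_of_mem ⟨le_rfl, hs⟩) hev)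
  constructor
  · constructor
    · refine ge_of_tendsto hγ ?_
      filter_upwards [eventually_ge_atTop (max s₀ 1)] with s hs
      have hs1 : (0:ℝ) < s := lt_of_lt_of_le one_pos (le_trans (le_max_right _ _) hs)
      exact div_nonneg (mul_nonneg (le_of_lt hs1) (hd_nonneg s hs1)) (le_of_lt (hpos s (le_trans (le_max_left _ _) hs)))
    · refine le_of_tendsto hγ ?_
      filter_upwards [eventually_ge_atTop (max s₀ 1)] with s hs
      have hs1 : (0:ℝ) < s := lt_of_lt_of_le one_pos (le_trans (le_max_right _ _) hs)
      rw [div_le_one (hpos s (le_trans (le_max_left _ _) hs))]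
      exact hkey s hs1
  · intro b hb0
    have hb : (0:ℝ) < |b| := abs_pos.2 hb0
    set c := Real.log |b| with hc
    set h : ℝ → ℝ := fun x => Real.log (Φ (Real.exp x)) with hhdef
    set M₀ := Real.log s₀ with hM₀
    have hexp_ge : ∀ t : ℝ, M₀ ≤ t → s₀ ≤ Real.exp t := by
      intro t ht
      calc s₀ = Real.exp M₀ := (Real.exp_log hs₀).symm
        _ ≤ Real.exp t := Real.exp_le_exp.2 ht
    have hhd : ∀ t : ℝ, M₀ ≤ t →
        HasDerivAt h (deriv Φ (Real.exp t) * Real.exp t / Φ (Real.exp t)) t := by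
      intro t ht
      have hΦpos : 0 < Φ (Real.exp t) := hpos _ (hexp_ge t ht)
      exact ((hdiff _ (Real.exp_pos t)).comp t (Real.hasDerivAt_exp t)).log (ne_of_gt hΦpos)
    have hG : Tendsto (fun t => deriv Φ (Real.exp t) * Real.exp t / Φ (Real.exp t)) atTop
        (nhds γ) := by
      have := hγ.comp Real.tendsto_exp_atTop
      exact this.congr (fun t => by simp [Function.comp, mul_comm])
    -- main step
    have hmain : Tendsto (fun x => h (x + c) - h x) atTop (nhds (γ * c)) := by
      rw [Metric.tendsto_atTop]
      intro ε hε
      have hε' : 0 < ε / (|c| + 1) := by positivity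
      obtain ⟨N, hN⟩ := (Metric.tendsto_atTop.1 hG) (ε / (|c| + 1)) hε'
      set M := max N M₀ with hM
      refine ⟨M + |c| + 1, fun x hx => ?_⟩
      have hx1 : x ∈ Set.Ici M := by
        simp only [mem_Ici]; have := abs_nonneg c; linarith
      have hx2 : x + c ∈ Set.Ici M := by
        simp only [mem_Ici]; have := neg_abs_le c; linarith
      have hder : ∀ t ∈ Set.Ici M, HasDerivWithinAt (fun t => h t - γ * t)
          (deriv Φ (Real.exp t) * Real.exp t / Φ (Real.exp t) - γ) (Set.Ici M) t := by
        intro t ht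
        have h1 := hhd t (le_trans (le_max_right _ _) ht)
        have h2 : HasDerivAt (fun t : ℝ => γ * t) γ t := by
          simpa using (hasDerivAt_id t).const_mul γ
        exact (h1.sub h2).hasDerivWithinAt
      have hbound : ∀ t ∈ Set.Ici M,
          ‖deriv Φ (Real.exp t) * Real.exp t / Φ (Real.exp t) - γ‖ ≤ ε / (|c| + 1) := by
        intro t ht
        have := hN t (le_trans (le_max_left _ _) ht)
        rw [Real.dist_eq] at this
        exact le_of_lt this
      have key := (convex_Ici M).norm_image_sub_le_of_norm_hasDerivWithin_le hder hbound hx1 hx2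
      have e1 : (h (x + c) - γ * (x + c)) - (h x - γ * x) = h (x + c) - h x - γ * c := by ring
      have e2 : (x + c) - x = c := by ring
      rw [e1, e2] at key
      rw [Real.dist_eq]
      calc |h (x + c) - h x - γ * c| ≤ ε / (|c| + 1) * ‖c‖ := key
        _ = ε * (|c| / (|c| + 1)) := by rw [Real.norm_eq_abs]; ring
        _ < ε * 1 := by
            apply mul_lt_mul_of_pos_left _ hε
            rw [div_lt_one (by positivity)]
            linarith
        _ = ε := mul_one ε
    have hfinal : Tendsto (fun α => Real.exp (h (Real.log α + c) - h (Real.log α))) atTop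
        (nhds (Real.exp (γ * c))) :=
      (Real.continuous_exp.continuousAt.tendsto).comp (hmain.comp Real.tendsto_log_atTop)
    have heq : ∀ᶠ α in atTop, Real.exp (h (Real.log α + c) - h (Real.log α)) =
        Φ (α * |b|) / Φ α := by
      filter_upwards [eventually_ge_atTop (max (max s₀ 1) (s₀ / |b|))] with α hα
      have hαs₀ : s₀ ≤ α := le_trans (le_trans (le_max_left _ _) (le_max_left _ _)) hα
      have hα0 : (0:ℝ) < α := lt_of_lt_of_le hs₀ hαs₀
      have hαb : s₀ ≤ α * |b| := by
        rw [← div_le_iff₀ hb]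
        exact le_trans (le_max_right _ _) hα
      have hΦα : 0 < Φ α := hpos α hαs₀
      have hΦαb : 0 < Φ (α * |b|) := hpos _ hαb
      have hexp : Real.exp (Real.log α + c) = α * |b| := by
        rw [Real.exp_add, Real.exp_log hα0, hc, Real.exp_log hb]
      simp only [hhdef, hexp, Real.exp_log hα0]
      rw [Real.exp_sub, Real.exp_log hΦαb, Real.exp_log hΦα]
    have : Tendsto (fun α => Φ (α * |b|) / Φ α) atTop (nhds (Real.exp (γ * c))) :=
      hfinal.congr' heq
    convert this using 2
    rw [Real.rpow_def_of_pos hb, hc, mul_comm]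
end

section
/- Let Φ : ℝ → ℝ be a nonzero Bernstein function with Φ(0+) = 0, lim_{s→∞} Φ(s)/s = 0 and Φ'(0+) = 1, and suppose that γ = lim_{s→∞} s Φ'(s)/Φ(s) exists with γ ∈ (0,1). Then for every b ≠ 0, lim_{α→∞} Φ'(α|b|)/Φ'(α) = |b|^{γ−1}; that is, Φ' varies regularly at infinity with exponent γ − 1. -/
open Filter Set Topology

/-- for a nonzero Bernstein function `Φ` with `Φ(0+) = 0`,
`lim_{s→∞} Φ(s)/s = 0`, `Φ'(0+) = 1`, if `γ = lim_{s→∞} sΦ'(s)/Φ(s)` exists with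
`γ ∈ (0,1)`, then for every `b ≠ 0`, `Φ'(α|b|)/Φ'(α) → |b|^(γ-1)` as `α → ∞`. -/
theorem stmt_4 (Φ : ℝ → ℝ)
    (hB : IsBernstein Φ)
    (hnz : ∃ s : ℝ, 0 < s ∧ 0 < Φ s)
    (h0 : Tendsto Φ (nhdsWithin 0 (Set.Ioi 0)) (nhds 0))
    (hsub : Tendsto (fun s => Φ s / s) atTop (nhds 0))
    (hΦ0 : Φ 0 = 0)
    (hd1 : Tendsto (deriv Φ) (nhdsWithin 0 (Set.Ioi 0)) (nhds 1))
    (γ : ℝ) (hγmem : γ ∈ Set.Ioo (0:ℝ) 1)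
    (hγ : Tendsto (fun s => s * deriv Φ s / Φ s) atTop (nhds γ)) :
    ∀ b : ℝ, b ≠ 0 →
      Tendsto (fun α => deriv Φ (α * |b|) / deriv Φ α) atTop (nhds (|b| ^ (γ - 1))) := by
  obtain ⟨hsm, hpos0, hsign⟩ := hB
  obtain ⟨s₀, hs₀, hΦs₀⟩ := hnz
  have hγpos : 0 < γ := hγmem.1
  intro b hb
  set b' := |b| with hb'def
  have hb'pos : 0 < b' := abs_pos.mpr hb
  -- differentiability of Φ on (0, ∞)
  have hdiff : ∀ x : ℝ, 0 < x → HasDerivAt Φ (deriv Φ x) x := by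
    intro x hx
    have hd := (hsm.differentiableOn (by norm_num)).differentiableAt
      (isOpen_Ioi.mem_nhds hx)
    exact hd.hasDerivAt
  have hD0 : ∀ s : ℝ, 0 < s → 0 ≤ deriv Φ s := by
    intro s hs
    have := hsign 1 le_rfl s hs
    simpa using this
  have hmono : MonotoneOn Φ (Ici s₀) := by
    apply monotoneOn_of_deriv_nonneg (convex_Ici s₀)
    · exact hsm.continuousOn.mono (fun x hx => lt_of_lt_of_le hs₀ hx)
    · intro x hx
      rw [interior_Ici] at hx
      exact ((hdiff x (hs₀.trans hx)).differentiableAt).differentiableWithinAt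
    · intro x hx
      rw [interior_Ici] at hx
      exact hD0 x (hs₀.trans hx)
  have hΦpos : ∀ s, s₀ ≤ s → 0 < Φ s := fun s hs =>
    lt_of_lt_of_le hΦs₀ (hmono self_mem_Ici hs hs)
  -- G = log ∘ Φ ∘ exp
  set G : ℝ → ℝ := fun s => Real.log (Φ (Real.exp s)) with hGdef
  have hGd : ∀ s : ℝ, s₀ ≤ Real.exp s →
      HasDerivAt G (Real.exp s * deriv Φ (Real.exp s) / Φ (Real.exp s)) s := by
    intro s hs
    have h1 : HasDerivAt (fun t => Φ (Real.exp t)) (deriv Φ (Real.exp s) * Real.exp s) s :=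
      (hdiff _ (lt_of_lt_of_le hs₀ hs)).comp s (Real.hasDerivAt_exp s)
    have h2 := h1.log (ne_of_gt (hΦpos _ hs))
    convert h2 using 1
    ring
  -- key: increments of G converge
  have hkey : ∀ h : ℝ, Tendsto (fun s => G (s + h) - G s) atTop (nhds (γ * h)) := by
    intro h
    rcases eq_or_ne h 0 with rfl | hne
    · simpa using (tendsto_const_nhds : Tendsto (fun _ : ℝ => (0:ℝ)) atTop (nhds 0))
    rw [Metric.tendsto_atTop]
    intro ε hε
    have hεh : 0 < ε / |h| := div_pos hε (abs_pos.mpr hne)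
    have h1 : ∀ᶠ t in atTop,
        dist (Real.exp t * deriv Φ (Real.exp t) / Φ (Real.exp t)) γ < ε / |h| := by
      have hc : Tendsto (fun t => Real.exp t * deriv Φ (Real.exp t) / Φ (Real.exp t))
          atTop (nhds γ) := hγ.comp Real.tendsto_exp_atTop
      exact (Metric.tendsto_nhds.mp hc) _ hεh
    have h2 : ∀ᶠ t in atTop, s₀ ≤ Real.exp t :=
      Real.tendsto_exp_atTop.eventually (eventually_ge_atTop s₀)
    obtain ⟨S, hS⟩ := eventually_atTop.mp (h1.and h2)
    refine ⟨S + |h|, fun s hs => ?_⟩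
    have hsS : S ≤ s := le_trans (le_add_of_nonneg_right (abs_nonneg h)) hs
    have hshS : S ≤ s + h := by
      have := neg_abs_le h
      linarith
    -- MVT on interval between s and s+h
    have hmvt : ∃ ξ : ℝ, S ≤ ξ ∧ G (s + h) - G s =
        h * (Real.exp ξ * deriv Φ (Real.exp ξ) / Φ (Real.exp ξ)) := by
      rcases lt_or_gt_of_ne hne with hneg | hpos
      · -- h < 0 : interval [s+h, s]
        have hab : s + h < s := by linarith
        obtain ⟨ξ, hξmem, hξeq⟩ := exists_hasDerivAt_eq_slope G
          (fun t => Real.exp t * deriv Φ (Real.exp t) / Φ (Real.exp t)) hab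
          (fun t ht => ((hGd t (hS t (le_trans hshS ht.1)).2).continuousAt).continuousWithinAt)
          (fun t ht => hGd t (hS t (le_trans hshS ht.1.le)).2)
        refine ⟨ξ, le_trans hshS hξmem.1.le, ?_⟩
        rw [hξeq, show s - (s + h) = -h by ring, div_neg, mul_neg, ← mul_div_assoc, mul_div_cancel_left₀ _ hne]
        ring
      · have hab : s < s + h := by linarith
        obtain ⟨ξ, hξmem, hξeq⟩ := exists_hasDerivAt_eq_slope G
          (fun t => Real.exp t * deriv Φ (Real.exp t) / Φ (Real.exp t)) hab
          (fun t ht => ((hGd t (hS t (le_trans hsS ht.1)).2).continuousAt).continuousWithinAt)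
          (fun t ht => hGd t (hS t (le_trans hsS ht.1.le)).2)
        refine ⟨ξ, le_trans hsS hξmem.1.le, ?_⟩
        rw [hξeq]
        rw [show s + h - s = h by ring, mul_div_cancel₀ _ hne]
    obtain ⟨ξ, hξS, hξeq⟩ := hmvt
    have hdist := (hS ξ hξS).1
    rw [Real.dist_eq] at hdist ⊢
    rw [hξeq]
    have : h * (Real.exp ξ * deriv Φ (Real.exp ξ) / Φ (Real.exp ξ)) - γ * h =
        h * (Real.exp ξ * deriv Φ (Real.exp ξ) / Φ (Real.exp ξ)) - h * γ := by ring
    rw [this, ← mul_sub, abs_mul]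
    calc |h| * |Real.exp ξ * deriv Φ (Real.exp ξ) / Φ (Real.exp ξ) - γ|
        < |h| * (ε / |h|) := by
          exact mul_lt_mul_of_pos_left hdist (abs_pos.mpr hne)
      _ = ε := by field_simp
  -- Φ is regularly varying with index γ
  have hratio : Tendsto (fun α => Φ (α * b') / Φ α) atTop (nhds (b' ^ γ)) := by
    have h2 : Tendsto (fun α => G (Real.log α + Real.log b') - G (Real.log α)) atTop
        (nhds (γ * Real.log b')) := (hkey (Real.log b')).comp Real.tendsto_log_atTop
    have h3 := (Real.continuous_exp.tendsto _).comp h2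
    have hval : Real.exp (γ * Real.log b') = b' ^ γ := by
      rw [Real.rpow_def_of_pos hb'pos, mul_comm]
    rw [hval] at h3
    refine h3.congr' ?_
    filter_upwards [eventually_ge_atTop s₀, eventually_gt_atTop 0,
      eventually_ge_atTop (s₀ / b')] with α hα1 hα2 hα3
    have hαb : s₀ ≤ α * b' := (div_le_iff₀ hb'pos).mp hα3
    have hαbpos : 0 < Φ (α * b') := hΦpos _ hαb
    have hαpos : 0 < Φ α := hΦpos _ hα1
    show Real.exp (G (Real.log α + Real.log b') - G (Real.log α)) = Φ (α * b') / Φ α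
    have he1 : Real.exp (Real.log α + Real.log b') = α * b' := by
      rw [Real.exp_add, Real.exp_log hα2, Real.exp_log hb'pos]
    have he2 : Real.exp (Real.log α) = α := Real.exp_log hα2
    rw [hGdef]
    simp only [he1, he2]
    rw [Real.exp_sub, Real.exp_log hαbpos, Real.exp_log hαpos]
  -- deriv Φ is eventually positive
  have hDpos : ∀ᶠ α in atTop, 0 < deriv Φ α := by
    have h1 : ∀ᶠ s in atTop, γ / 2 < s * deriv Φ s / Φ s :=
      hγ.eventually (eventually_gt_nhds (by linarith))
    filter_upwards [h1, eventually_ge_atTop s₀, eventually_gt_atTop 0] with s hs1 hs2 hs3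
    by_contra hle
    push_neg at hle
    have hz : deriv Φ s = 0 := le_antisymm hle (hD0 s hs3)
    rw [hz] at hs1
    simp at hs1
    linarith
  -- assemble the final limit
  have hg1 : Tendsto (fun α => α * b' * deriv Φ (α * b') / Φ (α * b')) atTop (nhds γ) :=
    hγ.comp (tendsto_id.atTop_mul_const hb'pos)
  have hg2 : Tendsto (fun α => (α * deriv Φ α / Φ α)⁻¹) atTop (nhds γ⁻¹) :=
    hγ.inv₀ (ne_of_gt hγpos)
  have hFull : Tendsto (fun α => (α * b' * deriv Φ (α * b') / Φ (α * b')) *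
      (Φ (α * b') / Φ α) * (α * deriv Φ α / Φ α)⁻¹ * b'⁻¹) atTop
      (nhds (γ * b' ^ γ * γ⁻¹ * b'⁻¹)) :=
    ((hg1.mul hratio).mul hg2).mul tendsto_const_nhds
  have hlim : γ * b' ^ γ * γ⁻¹ * b'⁻¹ = b' ^ (γ - 1) := by
    rw [Real.rpow_sub hb'pos, Real.rpow_one]
    field_simp
  rw [hlim] at hFull
  refine hFull.congr' ?_
  filter_upwards [hDpos, eventually_ge_atTop s₀, eventually_gt_atTop 0,
    eventually_ge_atTop (s₀ / b')] with α hα0 hα1 hα2 hα3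
  have hαb : s₀ ≤ α * b' := (div_le_iff₀ hb'pos).mp hα3
  have hαbpos : (0:ℝ) < Φ (α * b') := hΦpos _ hαb
  have hαpos : (0:ℝ) < Φ α := hΦpos _ hα1
  field_simp
end

section
/- For the family Φ_ρ of Bernstein functions induced by the generalized Gamma measure: if −∞ < ρ₁ < ρ₂ ≤ 1, then for every s ≥ 0 one has Φ'_{ρ₁}(s) ≥ Φ'_{ρ₂}(s) and Φ_{ρ₁}(s) ≥ Φ_{ρ₂}(s); consequently, for every α > 0 the maximum concavities of the rescaled penalties satisfy α²/Φ_{ρ₁}(α) ≤ α²/Φ_{ρ₂}(α). -/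
/-!
With `t = 1 - ρ`, `Φ'_ρ(s) = (1 + t s)^(-1/t) = exp (-log (1 + t s) / t)`. Bernoulli's inequality
`1 + t₁ s ≤ (1 + t₂ s)^(t₁/t₂)` for `t₂ ≤ t₁` shows this increases with `t`, and `1 + t s ≤ exp (t s)`
gives the limiting case `Φ'_1(s) = exp (-s)`. Since every `Φ_ρ` vanishes at `0`, the comparison of
derivatives integrates to `Φ_{ρ₂} ≤ Φ_{ρ₁}` on `[0, ∞)`; as `Φ_{ρ₂} ≥ Φ_1 = 1 - exp (-s) > 0` for
`s > 0`, dividing `α²` by these values reverses the inequality.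
-/

open Filter Set Topology

/-- The family `Φ_ρ` of Bernstein functions induced by the generalized Gamma measure. -/
noncomputable def PhiRho (ρ s : ℝ) : ℝ :=
  if ρ = 0 then Real.log (1 + s)
  else if ρ = 1 then 1 - Real.exp (-s)
  else (1 / ρ) * (1 - (1 + (1 - ρ) * s) ^ (-(ρ / (1 - ρ))))

/-- The first derivative `Φ'_ρ` of `Φ_ρ`. -/
noncomputable def PhiRho' (ρ s : ℝ) : ℝ :=
  if ρ = 0 then 1 / (1 + s)
  else if ρ = 1 then Real.exp (-s)
  else (1 + (1 - ρ) * s) ^ (-(1 / (1 - ρ)))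

lemma phiRho_zero (ρ : ℝ) : PhiRho ρ 0 = 0 := by
  unfold PhiRho
  split_ifs <;> simp

lemma phiRho'_of_ne_one {ρ : ℝ} (h : ρ ≠ 1) (s : ℝ) :
    PhiRho' ρ s = (1 + (1 - ρ) * s) ^ (-(1 / (1 - ρ))) := by
  rcases eq_or_ne ρ 0 with rfl | h0
  · simp [PhiRho', Real.rpow_neg_one]
  · simp [PhiRho', h0, h]

lemma one_add_sub_mul_pos {ρ s : ℝ} (hρ : ρ ≤ 1) (hs : 0 ≤ s) : 0 < 1 + (1 - ρ) * s := by
  nlinarith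

lemma one_add_mul_rpow_neg_inv_le_of_le {t₁ t₂ s : ℝ} (ht₂ : 0 < t₂) (ht : t₂ ≤ t₁)
    (hs : 0 ≤ s) : (1 + t₂ * s) ^ (-(1 / t₂)) ≤ (1 + t₁ * s) ^ (-(1 / t₁)) := by
  have ht₁ : 0 < t₁ := ht₂.trans_le ht
  have bernoulli : 1 + t₁ * s ≤ (1 + t₂ * s) ^ (t₁ / t₂) := by
    calc 1 + t₁ * s = 1 + t₁ / t₂ * (t₂ * s) := by field_simp
      _ ≤ (1 + t₂ * s) ^ (t₁ / t₂) :=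
        one_add_mul_self_le_rpow_one_add (by nlinarith) ((one_le_div ht₂).2 ht)
  calc (1 + t₂ * s) ^ (-(1 / t₂)) = ((1 + t₂ * s) ^ (t₁ / t₂)) ^ (-(1 / t₁)) := by
        rw [← Real.rpow_mul (by nlinarith)]
        congr 1
        field_simp
    _ ≤ (1 + t₁ * s) ^ (-(1 / t₁)) :=
        Real.rpow_le_rpow_of_nonpos (by nlinarith) bernoulli (by simp [ht₁.le])

lemma exp_neg_le_one_add_mul_rpow_neg_inv {t s : ℝ} (ht : 0 < t) (hts : 0 < 1 + t * s) :
    Real.exp (-s) ≤ (1 + t * s) ^ (-(1 / t)) := by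
  calc Real.exp (-s) = Real.exp (t * s) ^ (-(1 / t)) := by
        rw [← Real.exp_mul]
        congr 1
        field_simp
    _ ≤ (1 + t * s) ^ (-(1 / t)) :=
        Real.rpow_le_rpow_of_nonpos hts (by linarith [Real.add_one_le_exp (t * s)])
          (by simp [ht.le])

lemma phiRho'_le_phiRho' {ρ₁ ρ₂ s : ℝ} (h12 : ρ₁ < ρ₂) (h2 : ρ₂ ≤ 1) (hs : 0 ≤ s) :
    PhiRho' ρ₂ s ≤ PhiRho' ρ₁ s := by
  have h1 : ρ₁ < 1 := h12.trans_le h2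
  rw [phiRho'_of_ne_one h1.ne]
  rcases h2.eq_or_lt with rfl | h2
  · simpa [PhiRho'] using
      exp_neg_le_one_add_mul_rpow_neg_inv (sub_pos.2 h1) (one_add_sub_mul_pos h1.le hs)
  · rw [phiRho'_of_ne_one h2.ne]
    exact one_add_mul_rpow_neg_inv_le_of_le (sub_pos.2 h2) (by linarith) hs

lemma hasDerivAt_phiRho {ρ s : ℝ} (hs : 0 < 1 + (1 - ρ) * s) :
    HasDerivAt (PhiRho ρ) (PhiRho' ρ s) s := by
  unfold PhiRho PhiRho'
  split_ifs with h0 h1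
  · subst h0
    simp only [sub_zero, one_mul] at hs
    simpa using ((hasDerivAt_id s).const_add 1).log hs.ne'
  · simpa using ((hasDerivAt_neg s).exp).const_sub 1
  · have h1' : 1 - ρ ≠ 0 := sub_ne_zero.2 (Ne.symm h1)
    have hexp : -(ρ / (1 - ρ)) - 1 = -(1 / (1 - ρ)) := by field_simp; ring
    refine (((((hasDerivAt_id' s).const_mul (1 - ρ)).const_add 1).rpow_const
      (p := -(ρ / (1 - ρ))) (Or.inl hs.ne')).const_sub 1 |>.const_mul (1 / ρ)).congr_deriv ?_
    rw [hexp]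
    field_simp

lemma phiRho_le_phiRho {ρ₁ ρ₂ s : ℝ} (h12 : ρ₁ < ρ₂) (h2 : ρ₂ ≤ 1) (hs : 0 ≤ s) :
    PhiRho ρ₂ s ≤ PhiRho ρ₁ s := by
  have h1 : ρ₁ ≤ 1 := (h12.trans_le h2).le
  have hderiv : ∀ x ∈ Ici (0 : ℝ), HasDerivAt (fun x ↦ PhiRho ρ₁ x - PhiRho ρ₂ x)
      (PhiRho' ρ₁ x - PhiRho' ρ₂ x) x := fun x hx ↦
    (hasDerivAt_phiRho (one_add_sub_mul_pos h1 hx)).sub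
      (hasDerivAt_phiRho (one_add_sub_mul_pos h2 hx))
  have hmono : MonotoneOn (fun x ↦ PhiRho ρ₁ x - PhiRho ρ₂ x) (Ici 0) :=
    monotoneOn_of_hasDerivWithinAt_nonneg (convex_Ici 0)
      (fun x hx ↦ (hderiv x hx).continuousAt.continuousWithinAt)
      (fun x hx ↦ (hderiv x (interior_subset hx)).hasDerivWithinAt)
      (fun x hx ↦ sub_nonneg.2 (phiRho'_le_phiRho' h12 h2 (interior_subset hx)))
  simpa [phiRho_zero] using hmono self_mem_Ici hs hs

lemma phiRho_pos {ρ s : ℝ} (hρ : ρ ≤ 1) (hs : 0 < s) : 0 < PhiRho ρ s := by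
  have hpos_one : 0 < PhiRho 1 s := by simpa [PhiRho] using hs
  rcases hρ.eq_or_lt with rfl | hρ
  · exact hpos_one
  · exact hpos_one.trans_le (phiRho_le_phiRho hρ le_rfl hs.le)

/-- if `ρ₁ < ρ₂ ≤ 1` then `Φ'_{ρ₁}(s) ≥ Φ'_{ρ₂}(s)` and
`Φ_{ρ₁}(s) ≥ Φ_{ρ₂}(s)` for all `s ≥ 0`; consequently the maximum concavities of the
rescaled penalties satisfy `α²/Φ_{ρ₁}(α) ≤ α²/Φ_{ρ₂}(α)` for every `α > 0`. -/
theorem stmt_5 (ρ₁ ρ₂ : ℝ) (h12 : ρ₁ < ρ₂) (h2 : ρ₂ ≤ 1) :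
    (∀ s : ℝ, 0 ≤ s → PhiRho' ρ₂ s ≤ PhiRho' ρ₁ s ∧ PhiRho ρ₂ s ≤ PhiRho ρ₁ s) ∧
    ∀ α : ℝ, 0 < α → α ^ 2 / PhiRho ρ₁ α ≤ α ^ 2 / PhiRho ρ₂ α :=
  ⟨fun _ hs ↦ ⟨phiRho'_le_phiRho' h12 h2 hs, phiRho_le_phiRho h12 h2 hs⟩, fun α hα ↦
    div_le_div_of_nonneg_left (sq_nonneg α) (phiRho_pos h2 hα) (phiRho_le_phiRho h12 h2 hα.le)⟩
end

section
/- For the family Φ_ρ of Bernstein functions induced by the generalized Gamma measure: (i) if ρ ≤ 0, setting γ = ρ/(ρ−1) ∈ [0,1), one has lim_{α→∞} Φ'_ρ(α)/α^{γ−1} = (1−γ)^{1−γ}; and (ii) for every s > 0, lim_{α→∞} Φ_ρ(αs)/Φ_ρ(α) = 1 if ρ ∈ [0,1], while lim_{α→∞} Φ_ρ(αs)/Φ_ρ(α) = s^{ρ/(ρ−1)} if ρ < 0. -/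
/-!
Write `γ = ρ / (ρ - 1)`. For `ρ ≠ 1`, `Φ'_ρ(s) = (1 + (1 - ρ) s)^(γ - 1)`, and for `ρ ≠ 0, 1`,
`1 - ρ Φ_ρ(s) = (1 + (1 - ρ) s)^γ`. Since `(c + b α) / α → b`, this gives
`Φ'_ρ(α) ~ (1 - ρ)^(γ - 1) α^(γ - 1)`, which is (i) because `1 - γ = 1 / (1 - ρ)`.
For (ii), `Φ_ρ` is regularly varying: `Φ_ρ(α) / α^γ` has a nonzero limit when `ρ < 0`, and
`Φ_ρ → 1 / ρ` when `0 < ρ ≤ 1` (index `0`); a nonzero limit of `f(α) / α^κ` forces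
`f(α s) / f(α) → s^κ`. The logarithm (`ρ = 0`) is slowly varying because
`log (1 + α s) - log (1 + α) → log s`.
-/

open Filter Set Topology

lemma tendsto_affine_div_atTop (b c : ℝ) :
    Tendsto (fun α : ℝ => (c + b * α) / α) atTop (𝓝 b) := by
  have h : Tendsto (fun α : ℝ => c * α⁻¹ + b) atTop (𝓝 (c * 0 + b)) :=
    (tendsto_inv_atTop_zero.const_mul c).add_const b
  rw [mul_zero, zero_add] at h
  refine h.congr' ?_
  filter_upwards [eventually_gt_atTop 0] with α hα
  field_simp

lemma tendsto_affine_rpow_div_rpow_atTop {b : ℝ} (hb : 0 < b) (c e : ℝ) :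
    Tendsto (fun α : ℝ => (c + b * α) ^ e / α ^ e) atTop (𝓝 (b ^ e)) := by
  have h : Tendsto (fun α : ℝ => ((c + b * α) / α) ^ e) atTop (𝓝 (b ^ e)) :=
    (Real.continuousAt_rpow_const b e (Or.inl hb.ne')).tendsto.comp
      (tendsto_affine_div_atTop b c)
  have hpos : ∀ᶠ α : ℝ in atTop, 0 ≤ c + b * α :=
    (tendsto_atTop_add_const_left _ c (tendsto_id.const_mul_atTop hb)).eventually_ge_atTop 0
  refine h.congr' ?_
  filter_upwards [eventually_gt_atTop 0, hpos] with α hα hcα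
  rw [Real.div_rpow hcα hα.le]

lemma tendsto_comp_mul_div_of_tendsto_div_rpow {f : ℝ → ℝ} {γ C s : ℝ} (hC : C ≠ 0)
    (hs : 0 < s) (hf : Tendsto (fun α => f α / α ^ γ) atTop (𝓝 C)) :
    Tendsto (fun α => f (α * s) / f α) atTop (𝓝 (s ^ γ)) := by
  have hfs : Tendsto (fun α => f (α * s) / (α * s) ^ γ * s ^ γ) atTop (𝓝 (C * s ^ γ)) :=
    (hf.comp (tendsto_id.atTop_mul_const hs)).mul_const _
  have h := hfs.div hf hC
  rw [mul_div_cancel_left₀ _ hC] at h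
  refine h.congr' ?_
  filter_upwards [eventually_gt_atTop 0] with α hα
  have hαγ : α ^ γ ≠ 0 := (Real.rpow_pos_of_pos hα γ).ne'
  have hsγ : s ^ γ ≠ 0 := (Real.rpow_pos_of_pos hs γ).ne'
  simp only [Pi.div_apply]
  rw [Real.mul_rpow hα.le hs.le, div_mul_eq_div_div, div_mul_cancel₀ _ hsγ,
    div_div_div_cancel_right₀ hαγ]

lemma tendsto_log_one_add_mul_div_log_one_add {s : ℝ} (hs : 0 < s) :
    Tendsto (fun α => Real.log (1 + α * s) / Real.log (1 + α)) atTop (𝓝 1) := by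
  have hratio : Tendsto (fun α : ℝ => ((1 + s * α) / α) / ((1 + 1 * α) / α)) atTop
      (𝓝 (s / 1)) :=
    (tendsto_affine_div_atTop s 1).div (tendsto_affine_div_atTop 1 1) one_ne_zero
  have hlog : Tendsto (fun α : ℝ => Real.log ((1 + s * α) / α / ((1 + 1 * α) / α))) atTop
      (𝓝 (Real.log (s / 1))) :=
    (Real.continuousAt_log (by positivity)).tendsto.comp hratio
  have hden : Tendsto (fun α : ℝ => Real.log (1 + α)) atTop atTop :=
    Real.tendsto_log_atTop.comp (tendsto_atTop_add_const_left _ 1 tendsto_id)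
  have h := (hlog.div_atTop hden).const_add 1
  rw [add_zero] at h
  refine h.congr' ?_
  filter_upwards [eventually_gt_atTop 0] with α hα
  have hL : Real.log (1 + α) ≠ 0 := (Real.log_pos (by linarith)).ne'
  rw [div_div_div_cancel_right₀ hα.ne', one_mul, mul_comm s,
    Real.log_div (by positivity) (by positivity), sub_div, div_self hL, add_sub_cancel]

lemma PhiRho_of_ne {ρ : ℝ} (hρ0 : ρ ≠ 0) (hρ1 : ρ ≠ 1) (s : ℝ) :
    PhiRho ρ s = (1 / ρ) * (1 - (1 + (1 - ρ) * s) ^ (ρ / (ρ - 1))) := by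
  have hexp : ρ / (ρ - 1) = -(ρ / (1 - ρ)) := by rw [← neg_sub 1 ρ, div_neg]
  rw [PhiRho, if_neg hρ0, if_neg hρ1, hexp]

lemma PhiRho'_of_ne_one {ρ : ℝ} (hρ1 : ρ ≠ 1) (s : ℝ) :
    PhiRho' ρ s = (1 + (1 - ρ) * s) ^ (ρ / (ρ - 1) - 1) := by
  have hexp : ρ / (ρ - 1) - 1 = -(1 / (1 - ρ)) := by
    field_simp [sub_ne_zero.mpr hρ1, sub_ne_zero.mpr hρ1.symm]
    ring
  rw [PhiRho', hexp]
  split_ifs with hρ0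
  · simp [hρ0, Real.rpow_neg_one]
  · rfl

lemma tendsto_PhiRho'_div_rpow {ρ : ℝ} (hρ : ρ < 1) :
    Tendsto (fun α => PhiRho' ρ α / α ^ (ρ / (ρ - 1) - 1)) atTop
      (𝓝 ((1 - ρ / (ρ - 1)) ^ (1 - ρ / (ρ - 1)))) := by
  have hb : 0 < 1 - ρ := by linarith
  have hγ : 1 - ρ / (ρ - 1) = (1 - ρ)⁻¹ := by
    field_simp [hb.ne', (by linarith : ρ - 1 ≠ 0)]
    ring
  have hγ' : ρ / (ρ - 1) - 1 = -(1 - ρ)⁻¹ := by rw [← neg_sub, hγ]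
  have hlim : (1 - ρ) ^ (ρ / (ρ - 1) - 1) = (1 - ρ / (ρ - 1)) ^ (1 - ρ / (ρ - 1)) := by
    rw [hγ, hγ', Real.rpow_neg hb.le, Real.inv_rpow hb.le]
  simp only [PhiRho'_of_ne_one hρ.ne]
  exact hlim ▸ tendsto_affine_rpow_div_rpow_atTop hb 1 _

lemma tendsto_PhiRho_atTop {ρ : ℝ} (hρ0 : 0 < ρ) (hρ1 : ρ ≤ 1) :
    Tendsto (PhiRho ρ) atTop (𝓝 (1 / ρ)) := by
  rcases hρ1.eq_or_lt with rfl | hρ1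
  · have h := (Real.tendsto_exp_atBot.comp tendsto_neg_atTop_atBot).const_sub (1 : ℝ)
    rw [sub_zero, ← div_one 1] at h
    refine h.congr fun α => ?_
    simp [PhiRho]
  · have hb : 0 < 1 - ρ := by linarith
    have hpow : Tendsto (fun α : ℝ => (1 + (1 - ρ) * α) ^ (-(ρ / (1 - ρ)))) atTop (𝓝 0) :=
      (tendsto_rpow_neg_atTop (div_pos hρ0 hb)).comp
        (tendsto_atTop_add_const_left _ 1 (tendsto_id.const_mul_atTop hb))
    have h := (hpow.const_sub 1).const_mul (1 / ρ)
    rw [sub_zero, mul_one] at h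
    refine h.congr fun α => ?_
    rw [PhiRho, if_neg hρ0.ne', if_neg hρ1.ne]

lemma tendsto_PhiRho_div_rpow {ρ : ℝ} (hρ : ρ < 0) :
    Tendsto (fun α => PhiRho ρ α / α ^ (ρ / (ρ - 1))) atTop
      (𝓝 (-((1 - ρ) ^ (ρ / (ρ - 1)) / ρ))) := by
  have hb : 0 < 1 - ρ := by linarith
  have hγ : 0 < ρ / (ρ - 1) := div_pos_of_neg_of_neg hρ (by linarith)
  have h := ((tendsto_rpow_atTop hγ).inv_tendsto_atTop.sub
    (tendsto_affine_rpow_div_rpow_atTop hb 1 (ρ / (ρ - 1)))).const_mul (1 / ρ)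
  rw [one_div_mul_eq_div, zero_sub, neg_div] at h
  refine h.congr fun α => ?_
  rw [PhiRho_of_ne hρ.ne (by linarith), mul_div_assoc, sub_div, one_div (α ^ _)]
  rfl

/-- (i) for `ρ ≤ 0`, with `γ = ρ/(ρ-1) ∈ [0,1)`,
`Φ'_ρ(α)/α^(γ-1) → (1-γ)^(1-γ)` as `α → ∞`; (ii) for every `s > 0`,
`Φ_ρ(αs)/Φ_ρ(α) → 1` as `α → ∞` if `0 ≤ ρ ≤ 1`, while
`Φ_ρ(αs)/Φ_ρ(α) → s^(ρ/(ρ-1))` if `ρ < 0`. -/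
theorem stmt_6 (ρ : ℝ) (hρ : ρ ≤ 1) :
    (ρ ≤ 0 →
      Tendsto (fun α => PhiRho' ρ α / α ^ (ρ / (ρ - 1) - 1)) atTop
        (nhds ((1 - ρ / (ρ - 1)) ^ (1 - ρ / (ρ - 1))))) ∧
    ∀ s : ℝ, 0 < s →
      ((0 ≤ ρ → Tendsto (fun α => PhiRho ρ (α * s) / PhiRho ρ α) atTop (nhds 1)) ∧
       (ρ < 0 → Tendsto (fun α => PhiRho ρ (α * s) / PhiRho ρ α) atTop
          (nhds (s ^ (ρ / (ρ - 1)))))) := by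
  refine ⟨fun hρ0 => tendsto_PhiRho'_div_rpow (by linarith), fun s hs => ⟨fun hρ0 => ?_,
    fun hneg => ?_⟩⟩
  · rcases hρ0.eq_or_lt with rfl | hpos
    · simpa [PhiRho] using tendsto_log_one_add_mul_div_log_one_add hs
    · have h : Tendsto (fun α => PhiRho ρ α / α ^ (0 : ℝ)) atTop (𝓝 (1 / ρ)) := by
        simpa using tendsto_PhiRho_atTop hpos hρ
      simpa using tendsto_comp_mul_div_of_tendsto_div_rpow (by positivity) hs h
  · have hC : -((1 - ρ) ^ (ρ / (ρ - 1)) / ρ) ≠ 0 :=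
      neg_ne_zero.mpr (div_ne_zero (Real.rpow_pos_of_pos (by linarith) _).ne' hneg.ne)
    exact tendsto_comp_mul_div_of_tendsto_div_rpow hC hs (tendsto_PhiRho_div_rpow hneg)
end

section
/- Let Φ be a nonzero Bernstein function with Φ(0+) = 0, lim_{s→∞} Φ(s)/s = 0, Φ'(0+) ∈ (0,∞) and Φ''(0+) ∈ (−∞,0). Fix z ∈ ℝ and λ > 0 with λ ≤ −1/Φ''(0+), and define J₁(b) = (1/2)(z−b)² + λΦ(|b|) for b ∈ ℝ (with Φ(0) = 0). Then: (i) if |z| ≤ λΦ'(0+), the unique global minimizer of J₁ is b = 0; (ii) if |z| > λΦ'(0+), the equation b + λΦ'(b) = |z| has a unique root κ in the interval (0,|z|), and the unique global minimizer of J₁ is b = sgn(z)·κ. -/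
open Filter Set Topology

section Helpers

lemma analytic_iter {f : ℝ → ℝ} {U : Set ℝ} (hU : IsOpen U) (hf : ContDiffOn ℝ (⊤ : ℕ∞) f U) :
    ∀ k : ℕ, ContDiffOn ℝ (⊤ : ℕ∞) (deriv^[k] f) U := by
  intro k
  induction k with
  | zero => exact hf
  | succ k ih =>
    rw [Function.iterate_succ_apply']
    exact ih.deriv_of_isOpen hU (le_of_eq rfl)

lemma hasDerivAt_iter {f : ℝ → ℝ} {U : Set ℝ} (hU : IsOpen U) (hf : ContDiffOn ℝ (⊤ : ℕ∞) f U)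
    (k : ℕ) {x : ℝ} (hx : x ∈ U) :
    HasDerivAt (deriv^[k] f) (deriv^[k+1] f x) x := by
  have h : DifferentiableAt ℝ (deriv^[k] f) x := ((analytic_iter hU hf k).differentiableOn (by simp)).differentiableAt (hU.mem_nhds hx)
  have h2 := h.hasDerivAt
  rwa [show deriv^[k+1] f x = deriv (deriv^[k] f) x by rw [Function.iterate_succ_apply']]

lemma mvt_general {g g' : ℝ → ℝ} {a b : ℝ} (hab : a < b) (hc : ContinuousOn g (Icc a b))
    (hder : ∀ x ∈ Ioo a b, HasDerivAt g (g' x) x) :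
    ∃ ξ ∈ Ioo a b, g b - g a = g' ξ * (b - a) := by
  obtain ⟨ξ, hξ, h⟩ := exists_hasDerivAt_eq_slope g g' hab hc hder
  refine ⟨ξ, hξ, ?_⟩
  rw [h]
  exact (div_mul_cancel₀ _ (sub_ne_zero.mpr hab.ne')).symm

lemma mvt_iter {f : ℝ → ℝ} {U : Set ℝ} (hU : IsOpen U) (hf : ContDiffOn ℝ (⊤ : ℕ∞) f U)
    {a b : ℝ} (hab : a < b) (hsub : Icc a b ⊆ U) (k : ℕ) :
    ∃ ξ ∈ Ioo a b, deriv^[k] f b - deriv^[k] f a = deriv^[k+1] f ξ * (b - a) :=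
  mvt_general hab
    ((analytic_iter hU hf k).continuousOn.mono hsub)
    (fun x hx => hasDerivAt_iter hU hf k (hsub (Ioo_subset_Icc_self hx)))

lemma mono_helper {φ φ' : ℝ → ℝ} {p q : ℝ} (hpq : p ≤ q)
    (hder : ∀ x ∈ Icc p q, HasDerivAt φ (φ' x) x) (hnn : ∀ x ∈ Ioo p q, 0 ≤ φ' x) :
    φ p ≤ φ q := by
  rcases hpq.eq_or_lt with h | h
  · rw [h]
  · obtain ⟨ξ, hξ, h'⟩ := mvt_general (g := φ) (g' := φ') h
      (fun x hx => (hder x hx).continuousAt.continuousWithinAt)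
      (fun x hx => hder x (Ioo_subset_Icc_self hx))
    have := mul_nonneg (hnn ξ hξ) (sub_pos.mpr h).le
    linarith

lemma hasDerivAt_taylor (C a : ℝ) (n : ℕ) (x : ℝ) :
    HasDerivAt (fun y => C * (a - y) ^ (n + 1) / ((n + 1).factorial : ℝ))
      (-(C * (a - x) ^ n / (n.factorial : ℝ))) x := by
  have h := (((hasDerivAt_pow (n + 1) (a - x)).comp x ((hasDerivAt_id x).const_sub a)).const_mul
    C).div_const ((n + 1).factorial : ℝ)
  refine h.congr_deriv ?_
  have hf : (n.factorial : ℝ) ≠ 0 := by positivity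
  rw [Nat.factorial_succ, Nat.add_sub_cancel]
  push_cast
  field_simp

lemma cm_step {g : ℕ → ℝ → ℝ} (hg : ∀ k s, 0 < s → 0 ≤ g k s)
    (hgd : ∀ k s, 0 < s → HasDerivAt (g k) (-g (k + 1) s) s) {r : ℝ} (hr : 0 < r)
    (hvan : ∀ s, r ≤ s → g 0 s = 0) : ∀ s, 3 * r / 4 ≤ s → g 0 s = 0 := by
  intro t ht
  by_cases htr : r ≤ t
  · exact hvan t htr
  push_neg at htr
  have ht0 : 0 < t := by linarith
  have hza : ∀ k, g k (5 * r / 4) = 0 := by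
    have hall : ∀ k s, r < s → g k s = 0 := by
      intro k
      induction k with
      | zero => intro s hs; exact hvan s hs.le
      | succ k ih =>
        intro s hs
        have hev : g k =ᶠ[𝓝 s] fun _ => 0 := by
          filter_upwards [Ioi_mem_nhds hs] with x hx using ih x hx
        have h1 := (hgd k s (hr.trans hs)).deriv
        rw [hev.deriv_eq, deriv_const] at h1
        linarith
    intro k
    exact hall k _ (by linarith)
  have hA : ∀ n k, ∀ s ∈ Icc t (5 * r / 4),
      g k s ≤ g (k + n) t * (5 * r / 4 - s) ^ n / (n.factorial : ℝ) := by
    intro n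
    induction n with
    | zero =>
      intro k s hs
      simp only [add_zero, pow_zero, mul_one, Nat.factorial_zero, Nat.cast_one, div_one]
      have h := mono_helper (φ := fun x => -g k x) (φ' := fun x => g (k + 1) x) hs.1
        (fun x hx => by
          have := (hgd k x (by linarith [hx.1])).neg
          exact this.congr_deriv (neg_neg _))
        (fun x hx => hg _ _ (by linarith [hx.1]))
      linarith
    | succ n ih =>
      intro k s hs
      have h := mono_helper
        (φ := fun x => g k x - g (k + (n + 1)) t * (5 * r / 4 - x) ^ (n + 1) / ((n + 1).factorial : ℝ))
        (φ' := fun x => -g (k + 1) x + g (k + (n + 1)) t * (5 * r / 4 - x) ^ n / (n.factorial : ℝ))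
        hs.2
        (fun x hx => by
          have := (hgd k x (by linarith [hs.1, hx.1])).sub
            (hasDerivAt_taylor (g (k + (n + 1)) t) (5 * r / 4) n x)
          exact this.congr_deriv (by ring))
        (fun x hx => by
          have := ih (k + 1) x ⟨by linarith [hs.1, hx.1], hx.2.le⟩
          rw [show k + 1 + n = k + (n + 1) by omega] at this
          linarith)
      rw [hza k, sub_self (5 * r / 4), zero_pow (Nat.succ_ne_zero n), mul_zero, zero_div] at h
      linarith
  have hQ : ∀ n k, ∀ s ∈ Icc (r / 8) t,
      g (k + n) t * (t - s) ^ n / (n.factorial : ℝ) ≤ g k s := by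
    intro n
    induction n with
    | zero =>
      intro k s hs
      simp only [add_zero, pow_zero, mul_one, Nat.factorial_zero, Nat.cast_one, div_one]
      have h := mono_helper (φ := fun x => -g k x) (φ' := fun x => g (k + 1) x) hs.2
        (fun x hx => by
          have := (hgd k x (by linarith [hs.1, hx.1])).neg
          exact this.congr_deriv (neg_neg _))
        (fun x hx => hg _ _ (by linarith [hs.1, hx.1]))
      linarith
    | succ n ih =>
      intro k s hs
      have h := mono_helper
        (φ := fun x => g (k + (n + 1)) t * (t - x) ^ (n + 1) / ((n + 1).factorial : ℝ) - g k x)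
        (φ' := fun x => -(g (k + (n + 1)) t * (t - x) ^ n / (n.factorial : ℝ)) + g (k + 1) x)
        hs.2
        (fun x hx => by
          have := (hasDerivAt_taylor (g (k + (n + 1)) t) t n x).sub
            (hgd k x (by linarith [hs.1, hx.1]))
          exact this.congr_deriv (by ring))
        (fun x hx => by
          have := ih (k + 1) x ⟨by linarith [hs.1, hx.1], hx.2.le⟩
          rw [show k + 1 + n = k + (n + 1) by omega] at this
          linarith)
      rw [sub_self t, zero_pow (Nat.succ_ne_zero n), mul_zero, zero_div] at h
      have := hg k t ht0
      linarith
  have hkey : ∀ n : ℕ, g 0 t ≤ g 0 (r / 8) * ((5 * r / 4 - t) / (t - r / 8)) ^ n := by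
    intro n
    have hA' := hA n 0 t ⟨le_rfl, by linarith⟩
    have hQ' := hQ n 0 (r / 8) ⟨le_rfl, by linarith⟩
    simp only [zero_add] at hA' hQ'
    have hpos : 0 < t - r / 8 := by linarith
    rw [div_pow, mul_div_assoc', le_div_iff₀ (pow_pos hpos n)]
    calc g 0 t * (t - r / 8) ^ n
        ≤ (g n t * (5 * r / 4 - t) ^ n / (n.factorial : ℝ)) * (t - r / 8) ^ n :=
          mul_le_mul_of_nonneg_right hA' (pow_nonneg hpos.le n)
      _ = (g n t * (t - r / 8) ^ n / (n.factorial : ℝ)) * (5 * r / 4 - t) ^ n := by ring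
      _ ≤ g 0 (r / 8) * (5 * r / 4 - t) ^ n :=
          mul_le_mul_of_nonneg_right hQ' (pow_nonneg (by linarith) n)
  have hρ0 : 0 ≤ (5 * r / 4 - t) / (t - r / 8) := div_nonneg (by linarith) (by linarith)
  have hρ1 : (5 * r / 4 - t) / (t - r / 8) < 1 := by
    rw [div_lt_one (by linarith)]; linarith
  have hlim := (tendsto_pow_atTop_nhds_zero_of_lt_one hρ0 hρ1).const_mul (g 0 (r / 8))
  rw [mul_zero] at hlim
  have hle : g 0 t ≤ 0 := ge_of_tendsto' hlim hkey
  exact le_antisymm hle (hg 0 t ht0)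

end Helpers

set_option maxHeartbeats 1600000 in
theorem stmt_7 (Φ : ℝ → ℝ)
    (hB : IsBernstein Φ)
    (hnz : ∃ s : ℝ, 0 < s ∧ 0 < Φ s)
    (h0 : Tendsto Φ (nhdsWithin 0 (Set.Ioi 0)) (nhds 0))
    (hsub : Tendsto (fun s => Φ s / s) atTop (nhds 0))
    (hΦ0 : Φ 0 = 0)
    (d : ℝ) (hd : Tendsto (deriv Φ) (nhdsWithin 0 (Set.Ioi 0)) (nhds d)) (hd0 : 0 < d)
    (c : ℝ) (hc : Tendsto (deriv^[2] Φ) (nhdsWithin 0 (Set.Ioi 0)) (nhds c)) (hc0 : c < 0)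
    (z lam : ℝ) (hlam : 0 < lam) (hlc : lam ≤ -1 / c) :
    (|z| ≤ lam * d → ∀ b : ℝ, b ≠ 0 →
      (1/2) * (z - 0) ^ 2 + lam * Φ |(0:ℝ)| < (1/2) * (z - b) ^ 2 + lam * Φ |b|) ∧
    (lam * d < |z| →
      ∃ κ : ℝ, (κ ∈ Set.Ioo 0 |z| ∧ κ + lam * deriv Φ κ = |z|) ∧
        (∀ κ' : ℝ, κ' ∈ Set.Ioo 0 |z| → κ' + lam * deriv Φ κ' = |z| → κ' = κ) ∧
        ∀ b : ℝ, b ≠ Real.sign z * κ →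
          (1/2) * (z - Real.sign z * κ) ^ 2 + lam * Φ |Real.sign z * κ|
            < (1/2) * (z - b) ^ 2 + lam * Φ |b|) := by
  obtain ⟨hsm, hpos, hsgn⟩ := hB
  have hU : IsOpen (Ioi (0:ℝ)) := isOpen_Ioi
  have han : ContDiffOn ℝ (⊤ : ℕ∞) Φ (Ioi 0) := hsm
  have hIcc : ∀ {a b : ℝ}, 0 < a → Icc a b ⊆ Ioi (0:ℝ) :=
    fun {a b} ha x hx => lt_of_lt_of_le ha hx.1
  -- sign facts
  have h1 : ∀ s : ℝ, 0 < s → 0 ≤ deriv Φ s := by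
    intro s hs
    have h := hsgn 1 le_rfl s hs
    simpa using h
  have h2 : ∀ s : ℝ, 0 < s → deriv^[2] Φ s ≤ 0 := by
    intro s hs
    have h := hsgn 2 one_le_two s hs
    norm_num at h
    exact h
  have h3 : ∀ s : ℝ, 0 < s → 0 ≤ deriv^[3] Φ s := by
    intro s hs
    have h := hsgn 3 (by norm_num) s hs
    norm_num at h
    exact h
  -- monotonicity
  have mono2 : ∀ u v : ℝ, 0 < u → u < v → deriv^[2] Φ u ≤ deriv^[2] Φ v := by
    intro u v hu huv
    obtain ⟨ξ, hξ, h⟩ := mvt_iter hU han huv (hIcc hu) 2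
    nlinarith [h3 ξ (hu.trans hξ.1), sub_pos.mpr huv]
  have anti1 : ∀ u v : ℝ, 0 < u → u < v → deriv Φ v ≤ deriv Φ u := by
    intro u v hu huv
    obtain ⟨ξ, hξ, h⟩ := mvt_iter hU han huv (hIcc hu) 1
    rw [Function.iterate_one] at h
    nlinarith [h2 ξ (hu.trans hξ.1), sub_pos.mpr huv]
  -- limits give bounds
  have hge_c : ∀ s : ℝ, 0 < s → c ≤ deriv^[2] Φ s := by
    intro s hs
    refine le_of_tendsto hc ?_
    filter_upwards [Ioo_mem_nhdsGT hs] with t ht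
    exact mono2 t s ht.1 ht.2
  have hd_ge : ∀ s : ℝ, 0 < s → deriv Φ s ≤ d := by
    intro s hs
    refine ge_of_tendsto hd ?_
    filter_upwards [Ioo_mem_nhdsGT hs] with t ht
    exact anti1 t s ht.1 ht.2
  -- strict inequality for the second derivative
  have hconst_contra : ∀ s₀ : ℝ, 0 < s₀ → deriv^[2] Φ s₀ = c → False := by
    intro s₀ hs₀ heq
    have hcon : ∀ t ∈ Ioo (0:ℝ) s₀, deriv^[2] Φ t = c :=
      fun t ht => le_antisymm (heq ▸ mono2 t s₀ ht.1 ht.2) (hge_c t ht.1)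
    have hall : ∀ s : ℝ, 0 < s → deriv^[2] Φ s = c := by
      intro s hs
      rcases lt_trichotomy s s₀ with hlt | heq' | hgt
      · exact hcon s ⟨hs, hlt⟩
      · rw [heq', heq]
      · have h3z : deriv^[3] Φ (s₀/2) = 0 := by
          have hev : deriv^[2] Φ =ᶠ[𝓝 (s₀/2)] fun _ => c := by
            filter_upwards [isOpen_Ioo.mem_nhds ⟨half_pos hs₀, half_lt_self hs₀⟩] with t ht
              using hcon t ht
          rw [Function.iterate_succ_apply', hev.deriv_eq, deriv_const]
        obtain ⟨ξ, hξ, h⟩ := mvt_iter hU han hgt (hIcc hs₀) 2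
        obtain ⟨η, hη, h'⟩ := mvt_iter hU han
          (show s₀/2 < ξ by linarith [half_lt_self hs₀, hξ.1]) (hIcc (half_pos hs₀)) 3
        have h4 := hsgn 4 (by norm_num) η (by linarith [half_pos hs₀, hη.1])
        rw [show ((-1:ℝ))^(4-1) = -1 by norm_num] at h4
        have hp : deriv^[4] Φ η * (ξ - s₀/2) ≤ 0 :=
          mul_nonpos_of_nonpos_of_nonneg (by linarith) (by linarith [hξ.1])
        rw [h3z] at h'
        have hz3 : deriv^[2+1] Φ ξ = 0 :=
          le_antisymm (by linarith) (h3 ξ (by linarith [hξ.1]))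
        rw [hz3, zero_mul, heq] at h
        linarith
    have hnum : 0 < deriv Φ s₀ + 1 := by have := h1 s₀ hs₀; linarith
    have hcpos : 0 < -c := neg_pos.mpr hc0
    set s₁ := s₀ + (deriv Φ s₀ + 1) / (-c) with hs₁def
    have hs₁ : s₀ < s₁ := by
      have := div_pos hnum hcpos
      simp only [hs₁def]
      linarith
    obtain ⟨ξ, hξ, h⟩ := mvt_iter hU han hs₁ (hIcc hs₀) 1
    rw [Function.iterate_one, hall ξ (hs₀.trans hξ.1)] at h
    have hval : c * (s₁ - s₀) = -(deriv Φ s₀ + 1) := by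
      have hdiff : s₁ - s₀ = (deriv Φ s₀ + 1) / (-c) := by rw [hs₁def]; ring
      rw [hdiff]
      field_simp
      ring_nf; simp [hc0.ne]
    rw [hval] at h
    have := h1 s₁ (hs₀.trans hs₁)
    linarith
  have hgt_c : ∀ s : ℝ, 0 < s → c < deriv^[2] Φ s := fun s hs =>
    lt_of_le_of_ne (hge_c s hs) (fun h => hconst_contra s hs h.symm)
  -- analytic facts for deriv Φ
  have han1 : ContDiffOn ℝ (⊤ : ℕ∞) (deriv Φ) (Ioi 0) := by
    have := analytic_iter hU han 1
    rwa [Function.iterate_one] at this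
  have hcont1 : ContinuousOn (deriv Φ) (Ioi 0) :=
    han1.continuousOn
  have hder1 : ∀ x : ℝ, 0 < x → HasDerivAt (deriv Φ) (deriv^[2] Φ x) x := by
    intro x hx
    have := hasDerivAt_iter hU han 1 (show x ∈ Ioi 0 from hx)
    rwa [Function.iterate_one] at this
  have hΦcont : ContinuousOn Φ (Ioi 0) :=
    han.continuousOn
  have hderΦ : ∀ x : ℝ, 0 < x → HasDerivAt Φ (deriv Φ x) x := by
    intro x hx
    have := hasDerivAt_iter hU han 0 (show x ∈ Ioi 0 from hx)
    simpa using this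
  -- positivity of deriv Φ
  have hzero_contra : ∀ s₀ : ℝ, 0 < s₀ → deriv Φ s₀ = 0 → False := by
    intro s₀ hs₀ heq
    have hvan : ∀ t, s₀ ≤ t → deriv Φ t = 0 := by
      intro t ht
      rcases eq_or_lt_of_le ht with rfl | h
      · exact heq
      · exact le_antisymm (heq ▸ anti1 s₀ t hs₀ h) (h1 t (hs₀.trans h))
    have hzero : EqOn (deriv Φ) 0 (Ioi 0) := by
      set g : ℕ → ℝ → ℝ := fun k s => (-1:ℝ)^k * deriv^[k+1] Φ s with hgdef
      have hg : ∀ k s, 0 < s → 0 ≤ g k s := by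
        intro k s hs
        have := hsgn (k+1) (by omega) s hs
        simpa [hgdef] using this
      have hgd : ∀ k s, 0 < s → HasDerivAt (g k) (-g (k+1) s) s := by
        intro k s hs
        have := (hasDerivAt_iter hU han (k+1) (show s ∈ Ioi 0 from hs)).const_mul ((-1:ℝ)^k)
        refine this.congr_deriv ?_
        show _ = -((-1:ℝ)^(k+1) * deriv^[k+1+1] Φ s)
        ring
      have hg0 : ∀ s, g 0 s = deriv Φ s := by intro s; simp [hgdef]
      have hall : ∀ m : ℕ, ∀ s, (3/4:ℝ)^m * s₀ ≤ s → g 0 s = 0 := by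
        intro m
        induction m with
        | zero => intro s hs; rw [hg0]; exact hvan s (by simpa using hs)
        | succ m ih =>
          intro s hs
          exact cm_step hg hgd (mul_pos (pow_pos (by norm_num) m) hs₀) ih s
            (by rw [pow_succ] at hs; linarith)
      intro t ht
      obtain ⟨m, hm⟩ := exists_pow_lt_of_lt_one (div_pos ht hs₀) (show (3/4:ℝ) < 1 by norm_num)
      have := hall m t (((lt_div_iff₀ hs₀).mp hm).le)
      rw [hg0] at this
      simpa using this
    have htend : Tendsto (deriv Φ) (𝓝[>] (0:ℝ)) (𝓝 0) := by
      refine Tendsto.congr' ?_ tendsto_const_nhds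
      filter_upwards [self_mem_nhdsWithin] with t ht
      exact (hzero ht).symm
    exact absurd (tendsto_nhds_unique hd htend) (ne_of_gt hd0)
  have hp1 : ∀ s : ℝ, 0 < s → 0 < deriv Φ s := fun s hs =>
    lt_of_le_of_ne (h1 s hs) (fun h => hzero_contra s hs h.symm)
  -- lam * c ≥ -1
  have hlam_c : -1 ≤ lam * c := by
    have hmul := mul_le_mul_of_nonneg_right hlc (le_of_lt (neg_pos.mpr hc0))
    have heq1 : (-1/c) * (-c) = 1 := by field_simp [hc0.ne]
    nlinarith
  -- linear auxiliary derivative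
  have hlin : ∀ (e : ℝ) (x : ℝ), HasDerivAt (fun t : ℝ => e * t) e x := by
    intro e x
    simpa using (hasDerivAt_id x).const_mul e
  -- strict lower bound on deriv Φ
  have hψmono : ∀ u v : ℝ, 0 < u → u < v →
      deriv Φ u - c*u < deriv Φ v - c*v := by
    intro u v hu huv
    obtain ⟨ξ, hξ, h⟩ := mvt_general (g := fun t => deriv Φ t - c*t)
      (g' := fun t => deriv^[2] Φ t - c) huv
      ((hcont1.mono (hIcc hu)).sub ((continuous_const.mul continuous_id).continuousOn))
      (fun x hx => (hder1 x (hu.trans hx.1)).sub (hlin c x))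
    nlinarith [hgt_c ξ (hu.trans hξ.1), sub_pos.mpr huv,
      mul_pos (show (0:ℝ) < deriv^[2] Φ ξ - c by nlinarith [hgt_c ξ (hu.trans hξ.1)])
        (sub_pos.mpr huv)]
  have hψlim : Tendsto (fun t => deriv Φ t - c*t) (𝓝[>] (0:ℝ)) (𝓝 d) := by
    have h2t : Tendsto (fun t : ℝ => c*t) (𝓝[>] (0:ℝ)) (𝓝 0) := by
      have hco : Continuous fun t : ℝ => c * t := continuous_const.mul continuous_id
      simpa using (hco.tendsto 0).mono_left nhdsWithin_le_nhds
    simpa using hd.sub h2t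
  have hψpos : ∀ t : ℝ, 0 < t → d + c * t < deriv Φ t := by
    intro t ht
    have hhalf : d ≤ deriv Φ (t/2) - c*(t/2) := by
      refine le_of_tendsto hψlim ?_
      filter_upwards [Ioo_mem_nhdsGT (half_pos ht)] with s hs
      exact (hψmono s (t/2) hs.1 hs.2).le
    have := hψmono (t/2) t (half_pos ht) (half_lt_self ht)
    linarith
  -- strict lower bound on Φ
  have hquad : ∀ x : ℝ, HasDerivAt (fun t : ℝ => c/2*t^2) (c*x) x := by
    intro x
    have h := (hasDerivAt_pow 2 x).const_mul (c/2)
    have e : c/2*((2:ℕ)*x^(2-1)) = c*x := by push_cast; ring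
    rwa [e] at h
  have hχmono : ∀ u v : ℝ, 0 < u → u < v →
      Φ u - d*u - c/2*u^2 < Φ v - d*v - c/2*v^2 := by
    intro u v hu huv
    obtain ⟨ξ, hξ, h⟩ := mvt_general (g := fun t => Φ t - d*t - c/2*t^2)
      (g' := fun t => deriv Φ t - d - c*t) huv
      (((hΦcont.mono (hIcc hu)).sub ((continuous_const.mul continuous_id).continuousOn)).sub
        ((continuous_const.mul (continuous_pow 2)).continuousOn))
      (fun x hx => ((hderΦ x (hu.trans hx.1)).sub (hlin d x)).sub (hquad x))
    nlinarith [hψpos ξ (hu.trans hξ.1), sub_pos.mpr huv,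
      mul_pos (show (0:ℝ) < deriv Φ ξ - d - c*ξ by nlinarith [hψpos ξ (hu.trans hξ.1)])
        (sub_pos.mpr huv)]
  have hχlim : Tendsto (fun t => Φ t - d*t - c/2*t^2) (𝓝[>] (0:ℝ)) (𝓝 0) := by
    have hl : Tendsto (fun t : ℝ => d*t) (𝓝[>] (0:ℝ)) (𝓝 0) := by
      have hco : Continuous fun t : ℝ => d * t := continuous_const.mul continuous_id
      simpa using (hco.tendsto 0).mono_left nhdsWithin_le_nhds
    have hq : Tendsto (fun t : ℝ => c/2*t^2) (𝓝[>] (0:ℝ)) (𝓝 0) := by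
      have hco : Continuous fun t : ℝ => c/2*t^2 := continuous_const.mul (continuous_pow 2)
      simpa using (hco.tendsto 0).mono_left nhdsWithin_le_nhds
    simpa using (h0.sub hl).sub hq
  have hχpos : ∀ t : ℝ, 0 < t → d*t + c/2*t^2 < Φ t := by
    intro t ht
    have hhalf : (0:ℝ) ≤ Φ (t/2) - d*(t/2) - c/2*(t/2)^2 := by
      refine le_of_tendsto hχlim ?_
      filter_upwards [Ioo_mem_nhdsGT (half_pos ht)] with s hs
      exact (hχmono s (t/2) hs.1 hs.2).le
    have := hχmono (t/2) t (half_pos ht) (half_lt_self ht)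
    linarith
  constructor
  · -- case |z| ≤ lam * d : 0 is the unique minimizer
    intro hz b hb
    have ht : 0 < |b| := abs_pos.mpr hb
    have hΦb := hχpos |b| ht
    have hzb : z*b ≤ |z| * |b| := (le_abs_self _).trans_eq (abs_mul z b)
    have hzt : |z| * |b| ≤ lam * d * |b| := mul_le_mul_of_nonneg_right hz (abs_nonneg b)
    have hkey : lam * (d*|b| + c/2*|b|^2) < lam * Φ |b| :=
      mul_lt_mul_of_pos_left hΦb hlam
    have hnn : (0:ℝ) ≤ (1 + lam*c) * b^2 :=
      mul_nonneg (by linarith) (sq_nonneg b)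
    simp only [abs_zero, hΦ0, sub_zero, mul_zero, add_zero]
    nlinarith [sq_abs b]
  · -- case lam * d < |z|
    intro hz
    have hw : 0 < |z| := lt_trans (mul_pos hlam hd0) hz
    set w := |z| with hwdef
    have hGmono : ∀ u v : ℝ, 0 < u → u < v →
        u + lam*deriv Φ u < v + lam*deriv Φ v := by
      intro u v hu huv
      obtain ⟨ξ, hξ, h⟩ := mvt_general (g := fun t => t + lam * deriv Φ t)
        (g' := fun t => 1 + lam * deriv^[2] Φ t) huv
        ((continuous_id.continuousOn).add (continuousOn_const.mul (hcont1.mono (hIcc hu))))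
        (fun x hx => (hasDerivAt_id' x).add ((hder1 x (hu.trans hx.1)).const_mul lam))
      have hc2 := hgt_c ξ (hu.trans hξ.1)
      have hpos : (0:ℝ) < 1 + lam * deriv^[2] Φ ξ := by
        nlinarith [mul_lt_mul_of_pos_left hc2 hlam]
      nlinarith [mul_pos hpos (sub_pos.mpr huv)]
    -- existence of κ by IVT
    set ε := (w - lam*d)/2 with hεdef
    have hε0 : 0 < ε := div_pos (sub_pos.mpr hz) two_pos
    have hεw : ε < w := by
      have := mul_pos hlam hd0
      rw [hεdef]; linarith
    have hGε : ε + lam * deriv Φ ε < w := by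
      have hle := hd_ge ε hε0
      have := mul_le_mul_of_nonneg_left hle hlam.le
      rw [hεdef]
      rw [hεdef] at this
      linarith
    have hGw : w < w + lam * deriv Φ w := by
      nlinarith [mul_pos hlam (hp1 w hw)]
    have hGcont : ContinuousOn (fun t => t + lam*deriv Φ t) (Icc ε w) :=
      (continuous_id.continuousOn).add (continuousOn_const.mul (hcont1.mono (hIcc hε0)))
    obtain ⟨κ, hκIcc, hκeq0⟩ := intermediate_value_Icc hεw.le hGcont ⟨hGε.le, hGw.le⟩
    have hκeq : κ + lam * deriv Φ κ = w := hκeq0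
    have hκ0 : 0 < κ := lt_of_lt_of_le hε0 hκIcc.1
    have hκw : κ < w := by
      rcases lt_or_eq_of_le hκIcc.2 with h | h
      · exact h
      · exfalso; rw [h] at hκeq; linarith
    refine ⟨κ, ⟨⟨hκ0, hκw⟩, hκeq⟩, ?_, ?_⟩
    · -- uniqueness
      intro κ' hκ' heq'
      rcases lt_trichotomy κ' κ with h | h | h
      · exact absurd (hGmono κ' κ hκ'.1 h) (by rw [heq', hκeq]; exact lt_irrefl w)
      · exact h
      · exact absurd (hGmono κ κ' hκ0 h) (by rw [heq', hκeq]; exact lt_irrefl w)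
    · -- minimization
      intro b hb
      -- MVT for the objective restricted to t ≥ 0
      have hHmvt : ∀ u v : ℝ, 0 < u → u < v → ∃ ξ ∈ Ioo u v,
          ((1:ℝ)/2*(w - v)^2 + lam*Φ v) - ((1:ℝ)/2*(w - u)^2 + lam*Φ u)
            = (ξ + lam*deriv Φ ξ - w) * (v - u) := by
        intro u v hu huv
        refine mvt_general (g := fun t => (1:ℝ)/2*(w - t)^2 + lam*Φ t)
          (g' := fun t => t + lam*deriv Φ t - w) huv ?_ ?_
        · exact ((continuous_const.mul ((continuous_const.sub continuous_id).pow 2)).continuousOn).add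
            (continuousOn_const.mul (hΦcont.mono (hIcc hu)))
        · intro x hx
          have hq1 : HasDerivAt (fun t : ℝ => (1:ℝ)/2*(w - t)^2) (x - w) x := by
            have hh := (((hasDerivAt_id x).const_sub w).pow 2).const_mul ((1:ℝ)/2)
            refine hh.congr_deriv ?_
            push_cast
            simp only [id_eq]
            ring
          have hq2 : HasDerivAt (fun t => lam * Φ t) (lam * deriv Φ x) x :=
            (hderΦ x (hu.trans hx.1)).const_mul lam
          have hh := hq1.add hq2
          have e2 : x - w + lam * deriv Φ x = x + lam*deriv Φ x - w := by ring
          rwa [e2] at hh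
      have hdec : ∀ u v : ℝ, 0 < u → u < v → v ≤ κ →
          (1:ℝ)/2*(w - v)^2 + lam*Φ v < (1:ℝ)/2*(w - u)^2 + lam*Φ u := by
        intro u v hu huv hvκ
        obtain ⟨ξ, hξ, h⟩ := hHmvt u v hu huv
        have hGξ : ξ + lam*deriv Φ ξ < w := by
          have := hGmono ξ κ (hu.trans hξ.1) (lt_of_lt_of_le hξ.2 hvκ)
          linarith
        have hfac : ξ + lam*deriv Φ ξ - w < 0 := by linarith
        nlinarith [mul_neg_of_neg_of_pos hfac (sub_pos.mpr huv)]
      have hhigh : ∀ t : ℝ, κ < t →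
          (1:ℝ)/2*(w - κ)^2 + lam*Φ κ < (1:ℝ)/2*(w - t)^2 + lam*Φ t := by
        intro t htκ
        obtain ⟨ξ, hξ, h⟩ := hHmvt κ t hκ0 htκ
        have hfac : 0 < ξ + lam*deriv Φ ξ - w := by
          have := hGmono κ ξ hκ0 hξ.1
          linarith
        nlinarith [mul_pos hfac (sub_pos.mpr htκ)]
      have hzerocase : (1:ℝ)/2*(w - κ)^2 + lam*Φ κ < (1:ℝ)/2*w^2 := by
        have hHlim : Tendsto (fun t => (1:ℝ)/2*(w - t)^2 + lam*Φ t) (𝓝[>] (0:ℝ))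
            (𝓝 ((1:ℝ)/2*w^2)) := by
          have hqc : Continuous fun t : ℝ => (1:ℝ)/2*(w - t)^2 :=
            continuous_const.mul ((continuous_const.sub continuous_id).pow 2)
          have hq : Tendsto (fun t : ℝ => (1:ℝ)/2*(w - t)^2) (𝓝[>] (0:ℝ))
              (𝓝 ((1:ℝ)/2*(w - 0)^2)) := (hqc.tendsto 0).mono_left nhdsWithin_le_nhds
          have hp : Tendsto (fun t => lam * Φ t) (𝓝[>] (0:ℝ)) (𝓝 (lam * 0)) :=
            h0.const_mul lam
          have := hq.add hp
          simpa using this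
        have hmid : (1:ℝ)/2*(w - κ/2)^2 + lam*Φ (κ/2) ≤ (1:ℝ)/2*w^2 := by
          refine ge_of_tendsto hHlim ?_
          filter_upwards [Ioo_mem_nhdsGT (half_pos hκ0)] with s hs
          exact (hdec s (κ/2) hs.1 hs.2 (by linarith)).le
        have := hdec (κ/2) κ (half_pos hκ0) (half_lt_self hκ0) le_rfl
        linarith
      have hH : ∀ t : ℝ, 0 ≤ t → t ≠ κ →
          (1:ℝ)/2*(w - κ)^2 + lam*Φ κ < (1:ℝ)/2*(w - t)^2 + lam*Φ t := by
        intro t ht htκ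
        rcases ht.eq_or_lt with rfl | ht0
        · simpa [hΦ0] using hzerocase
        · rcases lt_or_gt_of_ne htκ with h | h
          · exact hdec t κ ht0 h le_rfl
          · exact hhigh t h
      have hzsgn : (Real.sign z = 1 ∧ z = w) ∨ (Real.sign z = -1 ∧ z = -w) := by
        rcases lt_trichotomy z 0 with h | h | h
        · right
          refine ⟨Real.sign_of_neg h, ?_⟩
          rw [hwdef, abs_of_neg h]; ring
        · exfalso; rw [hwdef, h] at hw; simp at hw
        · left
          exact ⟨Real.sign_of_pos h, by rw [hwdef, abs_of_pos h]⟩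
      rcases hzsgn with ⟨hs1, hzw⟩ | ⟨hs1, hzw⟩
      · -- z = w > 0
        rw [hs1, one_mul] at hb ⊢
        rw [hzw]
        rw [abs_of_pos hκ0]
        rcases eq_or_ne |b| κ with hbb | hbb
        · have hbneg : b = -κ := by
            rcases (abs_eq hκ0.le).mp hbb with h | h
            · exact absurd h hb
            · exact h
          rw [hbneg, abs_neg, abs_of_pos hκ0]
          nlinarith [mul_pos hw hκ0]
        · have hHt := hH |b| (abs_nonneg b) hbb
          have h2b : w*b ≤ w*|b| := mul_le_mul_of_nonneg_left (le_abs_self b) hw.le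
          nlinarith [sq_abs b]
      · -- z = -w < 0
        rw [hs1, neg_one_mul] at hb ⊢
        rw [hzw]
        rw [abs_neg, abs_of_pos hκ0]
        rcases eq_or_ne |b| κ with hbb | hbb
        · have hbpos : b = κ := by
            rcases (abs_eq hκ0.le).mp hbb with h | h
            · exact h
            · exact absurd h hb
          rw [hbpos, abs_of_pos hκ0]
          nlinarith [mul_pos hw hκ0]
        · have hHt := hH |b| (abs_nonneg b) hbb
          have h2b : w*(-b) ≤ w*|b| := mul_le_mul_of_nonneg_left (neg_le_abs b) hw.le
          nlinarith [sq_abs b]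
end

section
/- Let Φ be a nonzero Bernstein function with Φ(0+) = 0, lim_{s→∞} Φ(s)/s = 0, Φ'(0+) = 1 and Φ''(0+) > −∞, and fix λ > 0 with λ ≤ −1/Φ''(0+). For each z with |z| > λΦ'(0+) let κ(|z|) denote the unique root in (0,|z|) of the equation b + λΦ'(b) = |z|. Then κ is strictly increasing: if λΦ'(0+) < |z₁| < |z₂|, then κ(|z₁|) < κ(|z₂|). -/
open Filter Set Topology

/-- for a nonzero Bernstein function `Φ` with `Φ(0+) = 0`,
`lim_{s→∞} Φ(s)/s = 0`, `Φ'(0+) = 1`, `Φ''(0+) > -∞`, and `0 < λ ≤ -1/Φ''(0+)`: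
the root `κ(|z|) ∈ (0,|z|)` of `b + λΦ'(b) = |z|` is strictly increasing in `|z|`:
if `λΦ'(0+) = λ < |z₁| < |z₂|` then `κ(|z₁|) < κ(|z₂|)`. -/
theorem stmt_10 (Φ : ℝ → ℝ)
    (hB : IsBernstein Φ)
    (hnz : ∃ s : ℝ, 0 < s ∧ 0 < Φ s)
    (h0 : Tendsto Φ (nhdsWithin 0 (Set.Ioi 0)) (nhds 0))
    (hsub : Tendsto (fun s => Φ s / s) atTop (nhds 0))
    (hd1 : Tendsto (deriv Φ) (nhdsWithin 0 (Set.Ioi 0)) (nhds 1))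
    (c : ℝ) (hc : Tendsto (deriv^[2] Φ) (nhdsWithin 0 (Set.Ioi 0)) (nhds c))
    (lam : ℝ) (hlam : 0 < lam) (hlc : lam ≤ -1 / c) :
    ∀ z₁ z₂ κ₁ κ₂ : ℝ,
      lam * 1 < |z₁| → |z₁| < |z₂| →
      κ₁ ∈ Set.Ioo 0 |z₁| → κ₁ + lam * deriv Φ κ₁ = |z₁| →
      κ₂ ∈ Set.Ioo 0 |z₂| → κ₂ + lam * deriv Φ κ₂ = |z₂| →
      κ₁ < κ₂ := by
  intro z₁ z₂ κ₁ κ₂ hz1 hz12 hκ₁ he1 hκ₂ he2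
  have hopen : IsOpen (Set.Ioi (0:ℝ)) := isOpen_Ioi
  -- smoothness of iterated derivatives
  have hCD : ∀ k : ℕ, ContDiffOn ℝ (⊤ : ℕ∞) (deriv^[k] Φ) (Set.Ioi (0:ℝ)) := by
    intro k
    induction k with
    | zero => exact hB.1
    | succ n ih =>
      rw [Function.iterate_succ_apply']
      exact ih.deriv_of_isOpen hopen (by simp)
  -- Φ'' ≤ 0 on (0,∞)
  have hd2 : ∀ s : ℝ, 0 < s → deriv^[2] Φ s ≤ 0 := by
    intro s hs
    have := hB.2.2 2 (by norm_num) s hs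
    simpa using this
  -- Φ''' ≥ 0 on (0,∞)
  have hd3 : ∀ s : ℝ, 0 < s → 0 ≤ deriv^[3] Φ s := by
    intro s hs
    have := hB.2.2 3 (by norm_num) s hs
    simpa using this
  -- c < 0
  have hcle : c ≤ 0 := by
    refine le_of_tendsto hc ?_
    filter_upwards [self_mem_nhdsWithin] with t ht
    exact hd2 t ht
  have hcne : c ≠ 0 := by
    intro h
    rw [h] at hlc
    simp at hlc
    linarith
  have hcneg : c < 0 := lt_of_le_of_ne hcle hcne
  -- Φ'' is monotone on (0,∞)
  have mono2 : MonotoneOn (deriv^[2] Φ) (Set.Ioi (0:ℝ)) := by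
    refine monotoneOn_of_deriv_nonneg (convex_Ioi 0) ((hCD 2).continuousOn) ?_ ?_
    · rw [interior_Ioi]
      exact (hCD 2).differentiableOn (by simp)
    · rw [interior_Ioi]
      intro x hx
      have hdiff : DifferentiableAt ℝ (deriv^[2] Φ) x :=
        ((hCD 2).differentiableOn (by simp)).differentiableAt (hopen.mem_nhds hx)
      have : deriv (deriv^[2] Φ) x = deriv^[3] Φ x := by
        rw [← Function.iterate_succ_apply' deriv 2 Φ]
      rw [this]
      exact hd3 x hx
  -- Φ'' ≥ c on (0,∞)
  have hge : ∀ s : ℝ, 0 < s → c ≤ deriv^[2] Φ s := by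
    intro s hs
    refine le_of_tendsto hc ?_
    filter_upwards [Ioo_mem_nhdsGT_of_mem (show (0:ℝ) ∈ Set.Ico 0 s from ⟨le_refl 0, hs⟩)] with t ht
    exact mono2 ht.1 hs ht.2.le
  -- -1 ≤ lam * c
  have hlamc : -1 ≤ lam * c := by
    rw [le_div_iff_of_neg hcneg] at hlc
    linarith [hlc]
  -- g := fun x => x + lam * deriv Φ x is monotone on (0,∞)
  set g : ℝ → ℝ := fun x => x + lam * deriv Φ x with hg
  have monog : MonotoneOn g (Set.Ioi (0:ℝ)) := by
    refine monotoneOn_of_deriv_nonneg (convex_Ioi 0) ?_ ?_ ?_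
    · exact (continuousOn_id.add (continuousOn_const.mul ((hCD 1).continuousOn)))
    · rw [interior_Ioi]
      intro x hx
      have h1 : DifferentiableAt ℝ (deriv Φ) x :=
        ((hCD 1).differentiableOn (by simp)).differentiableAt (hopen.mem_nhds hx)
      exact ((differentiableAt_id.add (h1.const_mul lam))).differentiableWithinAt
    · rw [interior_Ioi]
      intro x hx
      have h1 : DifferentiableAt ℝ (deriv Φ) x :=
        ((hCD 1).differentiableOn (by simp)).differentiableAt (hopen.mem_nhds hx)
      have hderiv : deriv g x = 1 + lam * deriv (deriv Φ) x := by
        rw [hg]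
        rw [deriv_fun_add differentiableAt_fun_id (h1.const_mul lam), deriv_id'',
          deriv_const_mul lam h1]
      have h2 : deriv (deriv Φ) x = deriv^[2] Φ x := rfl
      rw [hderiv, h2]
      have := hge x hx
      nlinarith [hlam.le]
  by_contra hcon
  push_neg at hcon
  have : g κ₂ ≤ g κ₁ := monog hκ₂.1 hκ₁.1 hcon
  rw [hg] at this
  simp only at this
  rw [he1, he2] at this
  linarith
end

section
/- Let Φ be a nonzero Bernstein function with Φ(0+) = 0, lim_{s→∞} Φ(s)/s = 0, Φ'(0+) = 1 and Φ''(0+) > −∞, and let λ > 0 satisfy λ < −1/Φ''(0+). Then the function b ↦ (1/2)b² + λΦ(|b|) (with Φ(0) = 0) is strictly convex on ℝ. -/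
open Filter Set Topology

private lemma abs_strictConvexOn {g : ℝ → ℝ}
    (hgsc : StrictConvexOn ℝ (Set.Ici 0) g) (hgmono : StrictMonoOn g (Set.Ici 0))
    {f : ℝ → ℝ} (hf : ∀ b, f b = g |b|) :
    StrictConvexOn ℝ Set.univ f := by
  refine ⟨convex_univ, ?_⟩
  intro x _ y _ hxy a b ha hb hab
  simp only [smul_eq_mul, hf]
  have habs : |a * x + b * y| ≤ a * |x| + b * |y| := by
    calc |a * x + b * y| ≤ |a * x| + |b * y| := abs_add_le _ _
    _ = a * |x| + b * |y| := by
        rw [abs_mul, abs_mul, abs_of_pos ha, abs_of_pos hb]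
  have hmem1 : |x| ∈ Set.Ici (0:ℝ) := abs_nonneg x
  have hmem2 : |y| ∈ Set.Ici (0:ℝ) := abs_nonneg y
  rcases eq_or_ne |x| |y| with heq | hne
  · -- |x| = |y|, x ≠ y, so y = -x, x ≠ 0
    have hyx : y = -x := by
      rcases abs_eq_abs.mp heq with h | h
      · exact absurd h hxy
      · linarith [h]
    have hx0 : x ≠ 0 := by
      intro h; apply hxy; rw [h, hyx, h]; ring
    have hlt : |a * x + b * y| < a * |x| + b * |y| := by
      rw [hyx, abs_neg]
      have h2 : a * x + b * -x = (a - b) * x := by ring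
      rw [h2, abs_mul]
      have hab1 : |a - b| < 1 := by
        rw [abs_lt]; constructor <;> linarith
      have hx0' : 0 < |x| := abs_pos.mpr hx0
      nlinarith
    have hm := hgmono (Set.mem_Ici.mpr (abs_nonneg _))
      (Set.mem_Ici.mpr (by positivity : (0:ℝ) ≤ a * |x| + b * |y|)) hlt
    calc g |a * x + b * y| < g (a * |x| + b * |y|) := hm
    _ = a * g |x| + b * g |y| := by
        rw [← heq, show a * |x| + b * |x| = |x| from by rw [← add_mul, hab, one_mul],
          ← add_mul, hab, one_mul]
  · -- |x| ≠ |y|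
    have h1 : g |a * x + b * y| ≤ g (a * |x| + b * |y|) :=
      hgmono.monotoneOn (Set.mem_Ici.mpr (abs_nonneg _))
        (Set.mem_Ici.mpr (by positivity : (0:ℝ) ≤ a * |x| + b * |y|)) habs
    have h2 : g (a * |x| + b * |y|) < a * g |x| + b * g |y| := by
      have := hgsc.2 hmem1 hmem2 hne ha hb hab
      simpa using this
    exact lt_of_le_of_lt h1 h2

/-- for a nonzero Bernstein function `Φ` with `Φ(0+) = 0`,
`lim_{s→∞} Φ(s)/s = 0`, `Φ'(0+) = 1`, `Φ''(0+) > -∞` and `0 < λ < -1/Φ''(0+)`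
(with the convention `Φ 0 = 0`), the function `b ↦ (1/2)b² + λΦ(|b|)` is strictly
convex on `ℝ`. -/
theorem stmt_11 (Φ : ℝ → ℝ)
    (hB : IsBernstein Φ)
    (hnz : ∃ s : ℝ, 0 < s ∧ 0 < Φ s)
    (h0 : Tendsto Φ (nhdsWithin 0 (Set.Ioi 0)) (nhds 0))
    (hsub : Tendsto (fun s => Φ s / s) atTop (nhds 0))
    (hΦ0 : Φ 0 = 0)
    (hd1 : Tendsto (deriv Φ) (nhdsWithin 0 (Set.Ioi 0)) (nhds 1))
    (c : ℝ) (hc : Tendsto (deriv^[2] Φ) (nhdsWithin 0 (Set.Ioi 0)) (nhds c))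
    (lam : ℝ) (hlam : 0 < lam) (hlc : lam < -1 / c) :
    StrictConvexOn ℝ Set.univ (fun b : ℝ => (1/2) * b ^ 2 + lam * Φ |b|) := by
  obtain ⟨hsmooth, hnn, hder⟩ := hB
  have hopen : IsOpen (Set.Ioi (0:ℝ)) := isOpen_Ioi
  -- smoothness of iterated derivatives on (0,∞)
  have C1 : ContDiffOn ℝ (⊤ : ℕ∞) (deriv Φ) (Set.Ioi 0) :=
    hsmooth.deriv_of_isOpen hopen (by simp)
  have hit2 : deriv^[2] Φ = deriv (deriv Φ) := by
    funext x; simp [Function.iterate_succ_apply']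
  have hit3 : deriv^[3] Φ = deriv (deriv^[2] Φ) := by
    funext x; simp [Function.iterate_succ_apply']
  have C2 : ContDiffOn ℝ (⊤ : ℕ∞) (deriv^[2] Φ) (Set.Ioi 0) := by
    rw [hit2]; exact C1.deriv_of_isOpen hopen (by simp)
  -- differentiability at points of (0,∞)
  have hdiffΦ : ∀ x : ℝ, 0 < x → DifferentiableAt ℝ Φ x := fun x hx =>
    (hsmooth.differentiableOn (by simp)).differentiableAt (hopen.mem_nhds hx)
  have hdiffΦ' : ∀ x : ℝ, 0 < x → DifferentiableAt ℝ (deriv Φ) x := fun x hx =>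
    (C1.differentiableOn (by simp)).differentiableAt (hopen.mem_nhds hx)
  have hdiffΦ'' : ∀ x : ℝ, 0 < x → DifferentiableAt ℝ (deriv^[2] Φ) x := fun x hx =>
    (C2.differentiableOn (by simp)).differentiableAt (hopen.mem_nhds hx)
  -- Φ'' is monotone on (0,∞) since Φ''' ≥ 0
  have hmono2 : MonotoneOn (deriv^[2] Φ) (Set.Ioi 0) := by
    apply monotoneOn_of_deriv_nonneg (convex_Ioi 0) (C2.continuousOn)
    · rw [interior_Ioi]
      exact fun x hx => (hdiffΦ'' x hx).differentiableWithinAt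
    · intro x hx
      rw [interior_Ioi] at hx
      have := hder 3 (by norm_num) x hx
      rw [hit3] at this
      simpa using this
  -- c ≤ Φ''(x) for every x > 0
  have hge : ∀ x : ℝ, 0 < x → c ≤ deriv^[2] Φ x := by
    intro x hx
    refine le_of_tendsto hc ?_
    filter_upwards [Ioo_mem_nhdsGT_of_mem (show (0:ℝ) ∈ Set.Ico 0 x from ⟨le_refl _, hx⟩)]
      with y hy
    exact hmono2 hy.1 hx hy.2.le
  -- c < 0
  have hcneg : c < 0 := by
    by_contra h
    push_neg at h
    have : -1 / c ≤ 0 := by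
      rcases h.eq_or_lt with h' | h'
      · rw [← h', div_zero]
      · have := div_neg_of_neg_of_pos (show (-1:ℝ) < 0 by norm_num) h'
        linarith
    linarith
  -- 1 + lam * c > 0
  have hkey : 0 < 1 + lam * c := by
    have h1 : lam < 1 / (-c) := by
      have he : -1 / c = 1 / (-c) := by
        rw [neg_div, div_neg]
      rwa [he] at hlc
    have := (lt_div_iff₀ (by linarith : (0:ℝ) < -c)).mp h1
    nlinarith
  -- the function g on [0,∞)
  set g : ℝ → ℝ := fun x => (1/2) * x ^ 2 + lam * Φ x with hg
  -- continuity of g on [0,∞)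
  have hΦcont : ContinuousOn Φ (Set.Ici 0) := by
    intro x hx
    rcases eq_or_lt_of_le (show (0:ℝ) ≤ x from hx) with h | h
    · subst h
      unfold ContinuousWithinAt
      rw [hΦ0]
      have : Set.Ici (0:ℝ) = insert 0 (Set.Ioi 0) := by
        ext y; simp [Set.mem_Ici, Set.mem_Ioi, le_iff_lt_or_eq, or_comm, eq_comm]
      rw [this, nhdsWithin_insert]
      refine Tendsto.sup ?_ h0
      rw [Filter.tendsto_pure_left]
      intro s hs
      simpa [hΦ0] using mem_of_mem_nhds hs
    · exact ((hdiffΦ x h).continuousAt).continuousWithinAt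
  have hgcont : ContinuousOn g (Set.Ici 0) := by
    apply ContinuousOn.add
    · fun_prop
    · exact continuousOn_const.mul hΦcont
  -- derivative of g on (0,∞)
  have hderg : ∀ x : ℝ, 0 < x → HasDerivAt g (x + lam * deriv Φ x) x := by
    intro x hx
    have h1 : HasDerivAt (fun y : ℝ => (1/2) * y ^ 2) x x := by
      have := (hasDerivAt_pow 2 x).const_mul (1/2 : ℝ)
      simpa using this.congr_deriv (by ring)
    have h2 : HasDerivAt Φ (deriv Φ x) x := (hdiffΦ x hx).hasDerivAt
    exact h1.add (h2.const_mul lam)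
  have hderg' : ∀ x : ℝ, 0 < x → deriv g x = x + lam * deriv Φ x := fun x hx =>
    (hderg x hx).deriv
  -- second derivative of g on (0,∞)
  have hder2g : ∀ x : ℝ, 0 < x → deriv^[2] g x = 1 + lam * deriv^[2] Φ x := by
    intro x hx
    have heq : deriv g =ᶠ[nhds x] fun y => y + lam * deriv Φ y := by
      filter_upwards [hopen.mem_nhds hx] with y hy using hderg' y hy
    have h2 : HasDerivAt (fun y : ℝ => y + lam * deriv Φ y)
        (1 + lam * deriv^[2] Φ x) x := by
      have := ((hdiffΦ' x hx).hasDerivAt.const_mul lam).const_add 0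
      have h' : HasDerivAt (fun y : ℝ => y) 1 x := hasDerivAt_id x
      have h'' := h'.add ((hdiffΦ' x hx).hasDerivAt.const_mul lam)
      rw [hit2]
      exact h''
    show deriv (deriv g) x = _
    rw [heq.deriv_eq]
    exact h2.deriv
  -- g is strictly convex on [0,∞)
  have hgsc : StrictConvexOn ℝ (Set.Ici 0) g := by
    apply strictConvexOn_of_deriv2_pos (convex_Ici 0) hgcont
    intro x hx
    rw [interior_Ici] at hx
    rw [hder2g x hx]
    have h1 : c ≤ deriv^[2] Φ x := hge x hx
    nlinarith
  -- g is strictly monotone on [0,∞)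
  have hgmono : StrictMonoOn g (Set.Ici 0) := by
    apply strictMonoOn_of_deriv_pos (convex_Ici 0) hgcont
    intro x hx
    rw [interior_Ici] at hx
    rw [hderg' x hx]
    have hx' : (0:ℝ) < x := hx
    have h1 : 0 ≤ deriv Φ x := by simpa using hder 1 le_rfl x hx
    nlinarith
  exact abs_strictConvexOn hgsc hgmono (fun b => by simp [hg, sq_abs])
end

section
/- Let Φ be a nonzero Bernstein function with Φ(0+) = 0, lim_{s→∞} Φ(s)/s = 0, Φ'(0+) = 1 and Φ''(0+) ∈ (−∞,0), and assume lim_{α→∞} αΦ'(α)/Φ(α) = 0. Fix z ≠ 0 and η > 0. Then for all sufficiently large α > 0 the condition η > −Φ(α)/(α² Φ''(0+)) holds, so there is a unique s*_α > 0 with 1 + (ηα²/Φ(α))Φ''(α s*_α) = 0, and the thresholding operator is defined by S_α(z,η) = 0 if |z| ≤ s*_α + (ηα/Φ(α))Φ'(α s*_α), and otherwise S_α(z,η) = sgn(z)·κ_α, where κ_α is the unique root in (s*_α, |z|) of b + (ηα/Φ(α))Φ'(αb) = |z|. Moreover lim_{α→∞} S_α(z,η) = z. -/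
open Filter Set Topology

section BernAux

variable {Φ : ℝ → ℝ}

lemma bern_cd (h : ContDiffOn ℝ (⊤ : ℕ∞) Φ (Set.Ioi (0:ℝ))) (k : ℕ) :
    ContDiffOn ℝ (⊤ : ℕ∞) (deriv^[k] Φ) (Set.Ioi (0:ℝ)) := by
  induction k with
  | zero => exact h
  | succ k ih =>
      rw [Function.iterate_succ_apply']
      exact ih.deriv_of_isOpen isOpen_Ioi (by exact_mod_cast le_top)

lemma bern_an (h : ContDiffOn ℝ (⊤ : ℕ∞) Φ (Set.Ioi (0:ℝ))) (k : ℕ) :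
    ∀ x ∈ Set.Ioi (0:ℝ), DifferentiableAt ℝ (deriv^[k] Φ) x := fun x hx =>
  (((bern_cd h k).differentiableOn (by simp)) x hx).differentiableAt
    (Ioi_mem_nhds hx)

lemma cm_taylor {f : ℝ → ℝ} (hf : ContDiffOn ℝ (⊤ : ℕ∞) f (Set.Ioi (0:ℝ)))
    {y x : ℝ} (hy : 0 < y) (hyx : y < x) (n : ℕ) :
    ∃ ξ ∈ Set.Ioo y x, f y = (∑ k ∈ Finset.range (n+1),
        (-1:ℝ)^k * deriv^[k] f x * (x - y)^k / (k.factorial : ℝ)) +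
      (-1:ℝ)^(n+1) * deriv^[n+1] f ξ * (x - y)^(n+1) / ((n+1).factorial : ℝ) := by
  have hxy : x ≠ y := hyx.ne'
  have hsub : uIcc x y ⊆ Set.Ioi 0 := by
    rw [uIcc_of_ge hyx.le]; intro w hw; exact lt_of_lt_of_le hy hw.1
  have hc : ContDiffOn ℝ (n+1) f (uIcc x y) :=
    (hf.of_le (by exact_mod_cast le_top)).mono hsub
  obtain ⟨ξ, hξ, e⟩ := taylor_mean_remainder_lagrange_iteratedDeriv hxy hc
  rw [taylor_within_apply] at e
  have hterm : ∀ k ∈ Finset.range (n+1),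
      (((k.factorial : ℝ))⁻¹ * (y - x)^k) • iteratedDerivWithin k f (uIcc x y) x =
        (-1:ℝ)^k * deriv^[k] f x * (x - y)^k / (k.factorial : ℝ) := by
    intro k _
    rw [iteratedDerivWithin_eq_iteratedDeriv (uniqueDiffOn_uIcc hxy)
      ((hf.contDiffAt (Ioi_mem_nhds (hy.trans hyx))).of_le (by exact_mod_cast le_top))
      left_mem_uIcc]
    rw [iteratedDeriv_eq_iterate, smul_eq_mul, show y - x = (-1) * (x - y) by ring, mul_pow,
      div_eq_mul_inv]
    ring
  rw [Finset.sum_congr rfl hterm] at e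
  rw [uIoo_of_ge hyx.le] at hξ
  refine ⟨ξ, hξ, ?_⟩
  rw [iteratedDeriv_eq_iterate, show y - x = (-1) * (x - y) by ring, mul_pow] at e
  linear_combination e

lemma cm_lower {f : ℝ → ℝ} (hf : ContDiffOn ℝ (⊤ : ℕ∞) f (Set.Ioi (0:ℝ)))
    (hs : ∀ j : ℕ, ∀ x : ℝ, 0 < x → 0 ≤ (-1:ℝ)^j * deriv^[j] f x)
    {y x : ℝ} (hy : 0 < y) (hyx : y < x) (n : ℕ) :
    (-1:ℝ)^n * deriv^[n] f x * (x - y)^n / (n.factorial : ℝ) ≤ f y := by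
  obtain ⟨ξ, hξ, e⟩ := cm_taylor hf hy hyx n
  rw [e]
  have hd : 0 ≤ x - y := (sub_pos.2 hyx).le
  have hR : 0 ≤ (-1:ℝ)^(n+1) * deriv^[n+1] f ξ * (x - y)^(n+1) / ((n+1).factorial : ℝ) :=
    div_nonneg (mul_nonneg (hs (n+1) ξ (hy.trans hξ.1)) (pow_nonneg hd _)) (by positivity)
  have hS := Finset.single_le_sum
    (f := fun k => (-1:ℝ)^k * deriv^[k] f x * (x - y)^k / (k.factorial : ℝ))
    (fun k _ => div_nonneg (mul_nonneg (hs k x (hy.trans hyx)) (pow_nonneg hd _))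
      (by positivity)) (Finset.self_mem_range_succ n)
  linarith

lemma cm_upper {f : ℝ → ℝ} (hf : ContDiffOn ℝ (⊤ : ℕ∞) f (Set.Ioi (0:ℝ)))
    (hs : ∀ j : ℕ, ∀ x : ℝ, 0 < x → 0 ≤ (-1:ℝ)^j * deriv^[j] f x)
    {y x b : ℝ} (hy : 0 < y) (hyx : y < x) (hxb : x < b) (hz : ∀ k : ℕ, deriv^[k] f b = 0)
    (n : ℕ) : f x ≤ f y * ((b - x) / (x - y))^(n+1) := by
  obtain ⟨ξ, hξ, e⟩ := cm_taylor hf (hy.trans hyx) hxb n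
  have hsum : (∑ k ∈ Finset.range (n+1),
      (-1:ℝ)^k * deriv^[k] f b * (b - x)^k / (k.factorial : ℝ)) = 0 :=
    Finset.sum_eq_zero (fun k _ => by rw [hz k]; ring)
  rw [hsum, zero_add] at e
  have hξ0 : 0 < ξ := (hy.trans hyx).trans hξ.1
  have hL := cm_lower hf hs hy (hyx.trans hξ.1) (n+1)
  have hA0 : 0 ≤ (-1:ℝ)^(n+1) * deriv^[n+1] f ξ / ((n+1).factorial : ℝ) :=
    div_nonneg (hs (n+1) ξ hξ0) (by positivity)
  have hxy : 0 ≤ x - y := (sub_pos.2 hyx).le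
  have h1 : (-1:ℝ)^(n+1) * deriv^[n+1] f ξ / ((n+1).factorial : ℝ) * (x - y)^(n+1) ≤ f y := by
    refine le_trans (mul_le_mul_of_nonneg_left
      (pow_le_pow_left₀ hxy (by linarith [hξ.1] : x - y ≤ ξ - y) _) hA0) ?_
    refine le_of_eq_of_le ?_ hL
    ring
  have hp : 0 ≤ (b - x)^(n+1) := pow_nonneg (sub_pos.2 hxb).le _
  have key := mul_le_mul_of_nonneg_right h1 hp
  rw [div_pow, mul_div_assoc', le_div_iff₀ (pow_pos (sub_pos.2 hyx) _), e]
  refine le_of_eq_of_le ?_ key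
  ring

lemma cm_zero {f : ℝ → ℝ} (hf : ContDiffOn ℝ (⊤ : ℕ∞) f (Set.Ioi (0:ℝ)))
    (hs : ∀ j : ℕ, ∀ x : ℝ, 0 < x → 0 ≤ (-1:ℝ)^j * deriv^[j] f x)
    {t : ℝ} (ht : 0 < t) (h0 : f t = 0) : ∀ x : ℝ, 0 < x → f x = 0 := by
  have nonneg : ∀ x : ℝ, 0 < x → 0 ≤ f x := fun x hx => by simpa using hs 0 x hx
  have anti : AntitoneOn f (Set.Ioi 0) := by
    refine antitoneOn_of_deriv_nonpos (convex_Ioi 0) hf.continuousOn ?_ ?_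
    · rw [interior_Ioi]; exact hf.differentiableOn (by simp)
    · rw [interior_Ioi]; intro x hx; have := hs 1 x hx; simp at this; linarith
  have vanish : ∀ s : ℝ, 0 < s → f s = 0 → ∀ k : ℕ, ∀ x : ℝ, s < x → deriv^[k] f x = 0 := by
    intro s hs0 hfs k
    induction k with
    | zero =>
        intro x hx
        simp only [Function.iterate_zero_apply]
        exact le_antisymm (hfs ▸ anti hs0 (hs0.trans hx) hx.le) (nonneg x (hs0.trans hx))
    | succ k ih =>
        intro x hx
        rw [Function.iterate_succ_apply']
        have hev : deriv^[k] f =ᶠ[𝓝 x] fun _ => (0:ℝ) := by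
          filter_upwards [Ioi_mem_nhds hx] with w hw using ih w hw
        rw [hev.deriv_eq]; simp
  have step : ∀ s : ℝ, 0 < s → f s = 0 → f (3/4*s) = 0 := by
    intro s hs0 hfs
    have hb := fun k => vanish s hs0 hfs k (9/8*s) (by linarith)
    have hup : ∀ n : ℕ, f (3/4*s) ≤ f (s/4) * (3/4:ℝ)^(n+1) := by
      intro n
      have := cm_upper hf hs (by positivity : (0:ℝ) < s/4) (by linarith : s/4 < 3/4*s)
        (by linarith : 3/4*s < 9/8*s) hb n
      rwa [show (9/8*s - 3/4*s) = 3/4 * (3/4*s - s/4) by ring, mul_div_assoc,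
        div_self (by linarith : (3/4*s - s/4) ≠ 0), mul_one] at this
    have hT := (tendsto_pow_atTop_nhds_zero_of_lt_one (by norm_num : (0:ℝ) ≤ 3/4)
      (by norm_num)).const_mul (f (s/4) * (3/4))
    rw [mul_zero] at hT
    have hle := ge_of_tendsto' hT (fun n => (hup n).trans_eq (by ring))
    exact le_antisymm hle (nonneg _ (by positivity))
  have iter : ∀ n : ℕ, f ((3/4:ℝ)^n * t) = 0 := by
    intro n
    induction n with
    | zero => simpa using h0
    | succ n ih =>
        rw [show (3/4:ℝ)^(n+1) * t = 3/4 * ((3/4)^n * t) by ring]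
        exact step _ (by positivity) ih
  intro x hx
  obtain ⟨n, hn⟩ := exists_pow_lt_of_lt_one (div_pos hx ht) (by norm_num : (3/4:ℝ) < 1)
  have hn' : (3/4:ℝ)^n * t < x := by rwa [lt_div_iff₀ ht] at hn
  refine le_antisymm ?_ (nonneg x hx)
  rw [← iter n]
  exact anti (Set.mem_Ioi.2 (by positivity)) hx hn'.le

lemma bern_hd (h : ContDiffOn ℝ (⊤ : ℕ∞) Φ (Set.Ioi (0:ℝ))) (k : ℕ) {x : ℝ} (hx : 0 < x) :
    HasDerivAt (deriv^[k] Φ) (deriv^[k+1] Φ x) x := by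
  have h1 := ((bern_an h k) x hx).hasDerivAt
  have e : deriv^[k+1] Φ x = deriv (deriv^[k] Φ) x := by
    rw [Function.iterate_succ_apply']
  rw [e]
  exact h1

lemma bern_slope (h : ContDiffOn ℝ (⊤ : ℕ∞) Φ (Set.Ioi (0:ℝ))) (k : ℕ) {a b : ℝ}
    (ha : 0 < a) (hab : a < b) :
    ∃ ξ, ξ ∈ Set.Ioo a b ∧
      deriv^[k] Φ b - deriv^[k] Φ a = deriv^[k+1] Φ ξ * (b - a) := by
  have hcont : ContinuousOn (deriv^[k] Φ) (Set.Icc a b) := fun x hx =>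
    ((bern_an h k) x (lt_of_lt_of_le ha hx.1)).continuousAt.continuousWithinAt
  have hder : ∀ x ∈ Set.Ioo a b, HasDerivAt (deriv^[k] Φ) (deriv^[k+1] Φ x) x :=
    fun x hx => bern_hd h k (ha.trans hx.1)
  obtain ⟨ξ, hξ, hs⟩ := exists_hasDerivAt_eq_slope (deriv^[k] Φ) _ hab hcont hder
  refine ⟨ξ, hξ, ?_⟩
  rw [hs, div_mul_cancel₀]
  exact sub_ne_zero.2 hab.ne'

lemma bern_id (h : ContDiffOn ℝ (⊤ : ℕ∞) Φ (Set.Ioi (0:ℝ)))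
    (hsign : ∀ k : ℕ, 1 ≤ k → ∀ s : ℝ, 0 < s → 0 ≤ (-1 : ℝ) ^ (k - 1) * (deriv^[k] Φ) s)
    (k : ℕ) {K u v : ℝ}
    (hu : 0 < u) (huv : u < v) (hK : ∀ x ∈ Set.Ioo u v, deriv^[k] Φ x = K)
    {x : ℝ} (hx : 0 < x) : deriv^[k] Φ x = K := by
  have m : (u + v)/2 ∈ Set.Ioo u v := ⟨by linarith, by linarith⟩
  have hm : ((u+v)/2) ∈ Set.Ioi (0:ℝ) := by
    simp only [Set.mem_Ioi]; linarith
  have hev : deriv^[k] Φ =ᶠ[𝓝 ((u+v)/2)] fun _ => K :=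
    Filter.eventually_of_mem (isOpen_Ioo.mem_nhds m) hK
  have hmid : deriv^[k+1] Φ ((u+v)/2) = 0 := by
    rw [Function.iterate_succ_apply', hev.deriv_eq]; simp
  have hcomm : ∀ j : ℕ, deriv^[j] (fun y => (-1:ℝ)^k * deriv^[k+1] Φ y) =
      fun y => (-1:ℝ)^k * deriv^[j + (k+1)] Φ y := by
    intro j
    induction j with
    | zero => simp
    | succ j ih =>
        rw [Function.iterate_succ_apply', ih, deriv_const_mul_field']
        funext y
        rw [show j + 1 + (k+1) = (j + (k+1)) + 1 by omega, Function.iterate_succ_apply']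
  have hzero := cm_zero (f := fun y => (-1:ℝ)^k * deriv^[k+1] Φ y)
    (contDiffOn_const.mul (bern_cd h (k+1)))
    (by
      intro j y hy
      rw [hcomm j]
      have := hsign (j+(k+1)) (by omega) y hy
      rw [show j + (k+1) - 1 = j + k by omega, pow_add] at this
      rw [← mul_assoc]; exact this)
    hm (show (-1:ℝ)^k * deriv^[k+1] Φ ((u+v)/2) = 0 by rw [hmid, mul_zero])
  have hz : ∀ y : ℝ, 0 < y → deriv^[k+1] Φ y = 0 := by
    intro y hy
    have := hzero y hy
    exact (mul_eq_zero.1 this).resolve_left (pow_ne_zero _ (by norm_num))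
  rcases lt_trichotomy x ((u+v)/2) with hlt | heq | hgt
  · obtain ⟨ξ, hξ, e⟩ := bern_slope h k hx hlt
    rw [hz ξ (hx.trans hξ.1), zero_mul, sub_eq_zero] at e
    rw [← e]; exact hK _ m
  · rw [heq]; exact hK _ m
  · obtain ⟨ξ, hξ, e⟩ := bern_slope h k hm hgt
    rw [hz ξ (lt_trans hm hξ.1), zero_mul, sub_eq_zero] at e
    rw [e]; exact hK _ m

lemma bern_mono (h : ContDiffOn ℝ (⊤ : ℕ∞) Φ (Set.Ioi (0:ℝ))) (k : ℕ)
    (hsign : ∀ s : ℝ, 0 < s → 0 ≤ deriv^[k+1] Φ s) :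
    MonotoneOn (deriv^[k] Φ) (Set.Ioi (0:ℝ)) := by
  intro a ha b hb hab
  rcases eq_or_lt_of_le hab with rfl | hab
  · exact le_rfl
  obtain ⟨ξ, hξ, e⟩ := bern_slope h k ha hab
  nlinarith [hsign ξ (lt_trans ha hξ.1), sub_pos.2 hab]

lemma bern_anti (h : ContDiffOn ℝ (⊤ : ℕ∞) Φ (Set.Ioi (0:ℝ))) (k : ℕ)
    (hsign : ∀ s : ℝ, 0 < s → deriv^[k+1] Φ s ≤ 0) :
    AntitoneOn (deriv^[k] Φ) (Set.Ioi (0:ℝ)) := by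
  intro a ha b hb hab
  rcases eq_or_lt_of_le hab with rfl | hab
  · exact le_rfl
  obtain ⟨ξ, hξ, e⟩ := bern_slope h k ha hab
  nlinarith [hsign ξ (lt_trans ha hξ.1), sub_pos.2 hab]

end BernAux

set_option maxHeartbeats 1000000 in
/-- with `Φ'(0+) = 1`, `Φ''(0+) = c ∈ (-∞,0)` and
`lim_{α→∞} αΦ'(α)/Φ(α) = 0`, for fixed `z ≠ 0` and `η > 0`: the regime condition
`η > -Φ(α)/(α²c)` holds for all sufficiently large `α`; in that regime there is a unique
`s*_α > 0` with `1 + (ηα²/Φ(α))Φ''(αs*_α) = 0` and a unique root `κ_α ∈ (s*_α,|z|)` of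
the thresholding equation when `|z|` exceeds the threshold; and any function `S`
satisfying the defining rule of `S_α(z,η)` converges to `z` as `α → ∞`. -/
theorem stmt_13 (Φ : ℝ → ℝ)
    (hB : IsBernstein Φ)
    (hnz : ∃ s : ℝ, 0 < s ∧ 0 < Φ s)
    (h0 : Tendsto Φ (nhdsWithin 0 (Set.Ioi 0)) (nhds 0))
    (hsub : Tendsto (fun s => Φ s / s) atTop (nhds 0))
    (hΦ0 : Φ 0 = 0)
    (hd1 : Tendsto (deriv Φ) (nhdsWithin 0 (Set.Ioi 0)) (nhds 1))
    (c : ℝ) (hc : Tendsto (deriv^[2] Φ) (nhdsWithin 0 (Set.Ioi 0)) (nhds c)) (hc0 : c < 0)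
    (hslow : Tendsto (fun α => α * deriv Φ α / Φ α) atTop (nhds 0))
    (z η : ℝ) (hz : z ≠ 0) (hη : 0 < η) :
    (∀ᶠ α in atTop, -Φ α / (α ^ 2 * c) < η) ∧
    (∀ α : ℝ, 0 < α → -Φ α / (α ^ 2 * c) < η →
      ∃! s : ℝ, 0 < s ∧ 1 + (η * α ^ 2 / Φ α) * (deriv^[2] Φ) (α * s) = 0) ∧
    (∀ α : ℝ, 0 < α → -Φ α / (α ^ 2 * c) < η →
      ∀ sstar : ℝ, 0 < sstar → 1 + (η * α ^ 2 / Φ α) * (deriv^[2] Φ) (α * sstar) = 0 →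
        sstar + (η * α / Φ α) * deriv Φ (α * sstar) < |z| →
        ∃! κ : ℝ, κ ∈ Set.Ioo sstar |z| ∧
          κ + (η * α / Φ α) * deriv Φ (α * κ) = |z|) ∧
    ∀ S : ℝ → ℝ,
      (∀ α : ℝ, 0 < α → -Φ α / (α ^ 2 * c) < η →
        ∀ sstar : ℝ, 0 < sstar → 1 + (η * α ^ 2 / Φ α) * (deriv^[2] Φ) (α * sstar) = 0 →
          (|z| ≤ sstar + (η * α / Φ α) * deriv Φ (α * sstar) → S α = 0) ∧
          (sstar + (η * α / Φ α) * deriv Φ (α * sstar) < |z| →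
            ∀ κ : ℝ, κ ∈ Set.Ioo sstar |z| →
              κ + (η * α / Φ α) * deriv Φ (α * κ) = |z| → S α = Real.sign z * κ)) →
      Tendsto S atTop (nhds z) := by
  obtain ⟨hsm, hpos, hsign⟩ := hB
  have it1 : deriv^[1] Φ = deriv Φ := congrFun (Function.iterate_one deriv) Φ
  have e12 : deriv^[1+1] Φ = deriv^[2] Φ := rfl
  have e23 : deriv^[2+1] Φ = deriv^[3] Φ := rfl
  -- sign facts
  have s1 : ∀ s : ℝ, 0 < s → 0 ≤ deriv Φ s := by
    intro s hs
    have h := hsign 1 le_rfl s hs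
    rw [it1] at h; simpa using h
  have s2 : ∀ s : ℝ, 0 < s → deriv^[2] Φ s ≤ 0 := by
    intro s hs
    have h := hsign 2 one_le_two s hs
    have e : ((-1:ℝ)) ^ (2-1) = -1 := by norm_num
    rw [e] at h
    linarith
  have s3 : ∀ s : ℝ, 0 < s → 0 ≤ deriv^[3] Φ s := by
    intro s hs
    have h := hsign 3 (by norm_num) s hs
    have e : ((-1:ℝ)) ^ (3-1) = 1 := by norm_num
    rw [e] at h
    linarith
  -- monotonicity
  have monoΦ : MonotoneOn Φ (Set.Ioi (0:ℝ)) := by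
    have := bern_mono hsm 0 (by intro s hs; rw [show deriv^[0+1] Φ = deriv Φ from it1]; exact s1 s hs)
    simpa using this
  have anti1 : AntitoneOn (deriv Φ) (Set.Ioi (0:ℝ)) := by
    have := bern_anti hsm 1 (by intro s hs; rw [e12]; exact s2 s hs)
    rwa [it1] at this
  have mono2 : MonotoneOn (deriv^[2] Φ) (Set.Ioi (0:ℝ)) :=
    bern_mono hsm 2 (by intro s hs; rw [e23]; exact s3 s hs)
  -- Φ' > 0 on (0,∞)
  have M0 : ∀ t : ℝ, 0 < t → 0 < deriv Φ t := by
    intro t ht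
    rcases (s1 t ht).lt_or_eq with h | h
    · exact h
    exfalso
    have hz0 : ∀ x ∈ Set.Ioo t (t+1), deriv^[1] Φ x = 0 := by
      intro x hx
      rw [it1]
      have h1 : deriv Φ x ≤ deriv Φ t := anti1 ht (by simp only [Set.mem_Ioi]; linarith [hx.1]) hx.1.le
      have h2 := s1 x (by linarith [hx.1])
      rw [← h] at h1
      linarith
    have hall : ∀ x : ℝ, 0 < x → deriv Φ x = 0 := by
      intro x hx
      have := bern_id hsm hsign 1 ht (by linarith) hz0 hx
      rwa [it1] at this
    have hev : deriv Φ =ᶠ[nhdsWithin 0 (Set.Ioi 0)] (fun _ => (0:ℝ)) := by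
      filter_upwards [self_mem_nhdsWithin] with x hx using hall x hx
    have h2 : Tendsto (deriv Φ) (nhdsWithin 0 (Set.Ioi (0:ℝ))) (nhds 0) :=
      Tendsto.congr' hev.symm tendsto_const_nhds
    have h10 : (1:ℝ) = 0 := tendsto_nhds_unique hd1 h2
    norm_num at h10
  -- Φ > 0 on (0,∞)
  have M1 : ∀ α : ℝ, 0 < α → 0 < Φ α := by
    intro α hα
    obtain ⟨ξ, hξ, e⟩ := bern_slope hsm 0 (half_pos hα) (half_lt_self hα)
    rw [show deriv^[0+1] Φ = deriv Φ from it1] at e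
    simp only [Function.iterate_zero_apply] at e
    have h1 := M0 ξ (lt_trans (half_pos hα) hξ.1)
    have h2 := hpos (α/2) (half_pos hα)
    nlinarith
  -- no uniform negative bound on Φ''
  have noNegBound : ∀ b : ℝ, b < 0 → (∀ T : ℝ, 0 < T → deriv^[2] Φ T ≤ b) → False := by
    intro b hb hall
    set s := 1 + (deriv Φ 1 + 1)/(-b) with hs
    have hd10 : 0 ≤ deriv Φ 1 := s1 1 one_pos
    have hfrac : 0 < (deriv Φ 1 + 1)/(-b) := div_pos (by linarith) (by linarith)
    have hs1 : (1:ℝ) < s := by rw [hs]; linarith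
    obtain ⟨ξ, hξ, e⟩ := bern_slope hsm 1 one_pos hs1
    rw [it1, e12] at e
    have hξb := hall ξ (by linarith [hξ.1])
    have hsub : s - 1 = (deriv Φ 1 + 1)/(-b) := by rw [hs]; ring
    have hbne : b ≠ 0 := hb.ne
    have hbs : b * (s - 1) = -(deriv Φ 1 + 1) := by
      rw [hsub, ← mul_div_assoc, div_neg, mul_div_cancel_left₀ _ hbne]
    have hle : deriv^[2] Φ ξ * (s - 1) ≤ b * (s - 1) :=
      mul_le_mul_of_nonneg_right hξb (by linarith)
    have hpos' := s1 s (by linarith)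
    linarith
  -- Φ'' is not constant on any interval
  have const2 : ∀ (K u v : ℝ), 0 < u → u < v →
      (∀ x ∈ Set.Ioo u v, deriv^[2] Φ x = K) → False := by
    intro K u v hu huv hK
    have hall : ∀ x : ℝ, 0 < x → deriv^[2] Φ x = K := fun x hx => bern_id hsm hsign 2 hu huv hK hx
    have hev : deriv^[2] Φ =ᶠ[nhdsWithin 0 (Set.Ioi 0)] (fun _ => K) := by
      filter_upwards [self_mem_nhdsWithin] with x hx using hall x hx
    have h2 : Tendsto (deriv^[2] Φ) (nhdsWithin 0 (Set.Ioi (0:ℝ))) (nhds K) :=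
      Tendsto.congr' hev.symm tendsto_const_nhds
    have hKc : K = c := tendsto_nhds_unique h2 hc
    refine noNegBound c hc0 ?_
    intro T hT
    rw [hall T hT, hKc]
  -- Φ'' < 0 on (0,∞)
  have M2 : ∀ t : ℝ, 0 < t → deriv^[2] Φ t < 0 := by
    intro t ht
    rcases (s2 t ht).lt_or_eq with h | h
    · exact h
    exfalso
    refine const2 0 t (t+1) ht (by linarith) ?_
    intro x hx
    have h1 : deriv^[2] Φ t ≤ deriv^[2] Φ x :=
      mono2 ht (by simp only [Set.mem_Ioi]; linarith [hx.1]) hx.1.le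
    have h2 := s2 x (by linarith [hx.1])
    rw [h] at h1
    linarith
  -- Φ'' strictly monotone
  have SM2 : ∀ u v : ℝ, 0 < u → u < v → deriv^[2] Φ u < deriv^[2] Φ v := by
    intro u v hu huv
    have hv : (0:ℝ) < v := by linarith
    rcases (mono2 hu (Set.mem_Ioi.2 hv) huv.le).lt_or_eq with h | h
    · exact h
    exfalso
    refine const2 (deriv^[2] Φ u) u v hu huv ?_
    intro x hx
    have hx0 : (0:ℝ) < x := lt_trans hu hx.1
    have h1 := mono2 hu (Set.mem_Ioi.2 hx0) hx.1.le
    have h2 := mono2 (Set.mem_Ioi.2 hx0) (Set.mem_Ioi.2 hv) hx.2.le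
    rw [← h] at h2
    linarith
  -- Φ'' → 0 at ∞
  have M3 : Tendsto (deriv^[2] Φ) atTop (nhds 0) := by
    rw [tendsto_order]
    constructor
    · intro b hb
      have hT : ∃ T : ℝ, 0 < T ∧ b < deriv^[2] Φ T := by
        by_contra hcon
        push_neg at hcon
        exact noNegBound b hb fun T hT => hcon T hT
      obtain ⟨T, hT0, hbT⟩ := hT
      filter_upwards [eventually_ge_atTop T] with α hα
      have := mono2 (Set.mem_Ioi.2 hT0) (Set.mem_Ioi.2 (lt_of_lt_of_le hT0 hα)) hα
      linarith
    · intro b hb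
      filter_upwards [eventually_gt_atTop 0] with α hα
      exact lt_of_le_of_lt (s2 α hα) hb
  -- Φ(α)/α² → 0
  have M4 : Tendsto (fun α => Φ α / α^2) atTop (nhds 0) := by
    have h1 : Tendsto (fun α : ℝ => (Φ α / α) * α⁻¹) atTop (nhds (0 * 0)) :=
      hsub.mul tendsto_inv_atTop_zero
    rw [mul_zero] at h1
    refine h1.congr' ?_
    filter_upwards [eventually_gt_atTop 0] with α hα
    rw [pow_two, ← div_div, div_eq_mul_inv (Φ α / α) α]
  -- Part 1
  have part1 : ∀ᶠ α in atTop, -Φ α / (α ^ 2 * c) < η := by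
    have h1 : Tendsto (fun α => -Φ α / (α ^ 2 * c)) atTop (nhds 0) := by
      have h2 : Tendsto (fun α => (Φ α / α^2) * (-c⁻¹)) atTop (nhds (0 * (-c⁻¹))) :=
        M4.mul_const _
      rw [zero_mul] at h2
      refine h2.congr' ?_
      filter_upwards with α
      rw [neg_div, div_eq_mul_inv, div_eq_mul_inv, mul_inv]
      ring
    exact h1.eventually_lt_const hη
  -- regime algebra
  have REG : ∀ α : ℝ, 0 < α → -Φ α / (α ^ 2 * c) < η → c < -Φ α / (η * α ^ 2) := by
    intro α hα hreg
    have hneg : α ^ 2 * c < 0 := mul_neg_of_pos_of_neg (by positivity) hc0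
    rw [div_lt_iff_of_neg hneg] at hreg
    rw [lt_div_iff₀ (by positivity : (0:ℝ) < η * α ^ 2)]
    nlinarith
  have vNeg : ∀ α : ℝ, 0 < α → -Φ α / (η * α ^ 2) < 0 := by
    intro α hα
    have h1 : 0 < Φ α / (η * α ^ 2) := div_pos (M1 α hα) (by positivity)
    rw [neg_div]
    linarith
  -- equation characterization
  have EqIff : ∀ α : ℝ, 0 < α → ∀ X : ℝ,
      (1 + (η * α ^ 2 / Φ α) * X = 0 ↔ X = -Φ α / (η * α ^ 2)) := by
    intro α hα X
    have hΦ := M1 α hα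
    constructor
    · intro h
      have h2 : (η * α ^ 2 / Φ α) * X = -1 := by linarith
      rw [div_mul_eq_mul_div, div_eq_iff hΦ.ne'] at h2
      rw [eq_div_iff (by positivity : (η:ℝ) * α ^ 2 ≠ 0)]
      linear_combination h2
    · intro h
      rw [h]
      have hne : (η:ℝ) * α ^ 2 ≠ 0 := by positivity
      field_simp
      ring
  -- Part 2
  have part2 : ∀ α : ℝ, 0 < α → -Φ α / (α ^ 2 * c) < η →
      ∃! s : ℝ, 0 < s ∧ 1 + (η * α ^ 2 / Φ α) * (deriv^[2] Φ) (α * s) = 0 := by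
    intro α hα hreg
    have hΦ := M1 α hα
    have hcv : c < -Φ α / (η * α ^ 2) := REG α hα hreg
    have hv0 : -Φ α / (η * α ^ 2) < 0 := vNeg α hα
    obtain ⟨t₁, ht₁v, ht₁0⟩ :=
      ((hc.eventually_lt_const hcv).and self_mem_nhdsWithin).exists
    obtain ⟨t₂, ht₂v, ht₂0⟩ :=
      ((M3.eventually_const_lt hv0).and (eventually_gt_atTop 0)).exists
    have ht₁0 : (0:ℝ) < t₁ := ht₁0
    have ht12 : t₁ < t₂ := by
      by_contra hle
      push_neg at hle
      have := mono2 (Set.mem_Ioi.2 ht₂0) (Set.mem_Ioi.2 ht₁0) hle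
      linarith
    have hIcc : Set.Icc (deriv^[2] Φ t₁) (deriv^[2] Φ t₂) ⊆ deriv^[2] Φ '' Set.Icc t₁ t₂ :=
      intermediate_value_Icc ht12.le (fun x hx =>
        ((bern_an hsm 2) x (lt_of_lt_of_le ht₁0 hx.1)).continuousAt.continuousWithinAt)
    obtain ⟨t, htmem, htv⟩ := hIcc ⟨ht₁v.le, ht₂v.le⟩
    have ht0 : 0 < t := lt_of_lt_of_le ht₁0 htmem.1
    have hat : α * (t/α) = t := by field_simp
    refine ⟨t/α, ⟨div_pos ht0 hα, ?_⟩, ?_⟩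
    · rw [hat]
      exact (EqIff α hα _).2 htv
    · rintro y ⟨hy0, hyeq⟩
      have h1 : deriv^[2] Φ (α * y) = -Φ α / (η * α ^ 2) := (EqIff α hα _).1 hyeq
      rcases lt_trichotomy y (t/α) with h | h | h
      · exfalso
        have := SM2 (α * y) (α * (t/α)) (by positivity) (by nlinarith)
        rw [hat, htv, h1] at this
        linarith
      · exact h
      · exfalso
        have := SM2 (α * (t/α)) (α * y) (by rw [hat]; exact ht0) (by nlinarith)
        rw [hat, htv, h1] at this
        linarith
  -- derivative of the thresholding function
  have HD2 : ∀ x : ℝ, 0 < x → HasDerivAt (deriv Φ) (deriv^[2] Φ x) x := by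
    intro x hx
    have h := bern_hd hsm 1 hx
    rw [it1, e12] at h
    exact h
  have HDF : ∀ (α : ℝ), 0 < α → ∀ (x : ℝ), 0 < x →
      HasDerivAt (fun b => b + (η * α / Φ α) * deriv Φ (α * b))
        (1 + (η * α / Φ α) * (deriv^[2] Φ (α * x) * α)) x := by
    intro α hα x hx
    have h1 : HasDerivAt (fun b : ℝ => α * b) α x := by
      simpa using (hasDerivAt_id x).const_mul α
    have h2 : HasDerivAt (fun b : ℝ => deriv Φ (α * b)) (deriv^[2] Φ (α * x) * α) x :=
      (HD2 (α * x) (by positivity)).comp x h1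
    exact (hasDerivAt_id x).add (h2.const_mul _)
  -- Part 3
  have part3 : ∀ α : ℝ, 0 < α → -Φ α / (α ^ 2 * c) < η →
      ∀ sstar : ℝ, 0 < sstar → 1 + (η * α ^ 2 / Φ α) * (deriv^[2] Φ) (α * sstar) = 0 →
        sstar + (η * α / Φ α) * deriv Φ (α * sstar) < |z| →
        ∃! κ : ℝ, κ ∈ Set.Ioo sstar |z| ∧
          κ + (η * α / Φ α) * deriv Φ (α * κ) = |z| := by
    intro α hα hreg sstar hst heq hthr
    have hΦ := M1 α hα
    have hv : deriv^[2] Φ (α * sstar) = -Φ α / (η * α ^ 2) := (EqIff α hα _).1 heq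
    have hCpos : 0 < η * α / Φ α := by positivity
    -- strict monotonicity of F on [sstar, ∞)
    have key : ∀ b b' : ℝ, sstar ≤ b → b < b' →
        b + (η * α / Φ α) * deriv Φ (α * b) < b' + (η * α / Φ α) * deriv Φ (α * b') := by
      intro b b' hb hbb'
      have hb0 : 0 < b := lt_of_lt_of_le hst hb
      have hcont : ContinuousOn (fun x => x + (η * α / Φ α) * deriv Φ (α * x)) (Set.Icc b b') :=
        fun x hx => (HDF α hα x (lt_of_lt_of_le hb0 hx.1)).continuousAt.continuousWithinAt
      obtain ⟨ξ, hξ, hs⟩ := exists_hasDerivAt_eq_slope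
        (fun x => x + (η * α / Φ α) * deriv Φ (α * x))
        (fun x => 1 + (η * α / Φ α) * (deriv^[2] Φ (α * x) * α)) hbb' hcont
        (fun x hx => HDF α hα x (lt_of_lt_of_le hb0 hx.1.le))
      have hξ0 : 0 < ξ := lt_of_lt_of_le hb0 hξ.1.le
      have hgt : deriv^[2] Φ (α * sstar) < deriv^[2] Φ (α * ξ) := by
        refine SM2 (α * sstar) (α * ξ) (by positivity) ?_
        have : sstar < ξ := lt_of_le_of_lt hb hξ.1
        nlinarith
      have hCv : (η * α / Φ α) * (deriv^[2] Φ (α * sstar) * α) = -1 := by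
        rw [hv]
        field_simp
      have hpos2 : 0 < 1 + (η * α / Φ α) * (deriv^[2] Φ (α * ξ) * α) := by
        have h3 : (η * α / Φ α) * (deriv^[2] Φ (α * sstar) * α) <
            (η * α / Φ α) * (deriv^[2] Φ (α * ξ) * α) := by
          apply mul_lt_mul_of_pos_left _ hCpos
          exact mul_lt_mul_of_pos_right hgt hα
        linarith
      have hslope : (fun x => x + (η * α / Φ α) * deriv Φ (α * x)) b' -
          (fun x => x + (η * α / Φ α) * deriv Φ (α * x)) b =
          (1 + (η * α / Φ α) * (deriv^[2] Φ (α * ξ) * α)) * (b' - b) := by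
        rw [hs, div_mul_cancel₀]
        exact sub_ne_zero.2 hbb'.ne'
      simp only at hslope
      nlinarith [sub_pos.2 hbb']
    have habs : 0 < |z| := abs_pos.2 hz
    have hf1st : 0 ≤ deriv Φ (α * sstar) := s1 _ (by positivity)
    have hsz : sstar < |z| := by nlinarith
    have hFz : |z| < |z| + (η * α / Φ α) * deriv Φ (α * |z|) := by
      have := M0 (α * |z|) (by positivity)
      nlinarith
    have hcontF : ContinuousOn (fun x => x + (η * α / Φ α) * deriv Φ (α * x))
        (Set.Icc sstar |z|) :=
      fun x hx => (HDF α hα x (lt_of_lt_of_le hst hx.1)).continuousAt.continuousWithinAt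
    have hIcc := intermediate_value_Icc hsz.le hcontF
    obtain ⟨κ, hκmem, hκeq⟩ := hIcc ⟨hthr.le, hFz.le⟩
    simp only at hκeq
    have hκ1 : sstar < κ := by
      rcases hκmem.1.lt_or_eq with h | h
      · exact h
      · exfalso; rw [← h] at hκeq; linarith
    have hκ2 : κ < |z| := by
      rcases hκmem.2.lt_or_eq with h | h
      · exact h
      · exfalso; rw [h] at hκeq; linarith
    refine ⟨κ, ⟨⟨hκ1, hκ2⟩, hκeq⟩, ?_⟩
    rintro y ⟨⟨hy1, hy2⟩, hyeq⟩
    rcases lt_trichotomy y κ with h | h | h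
    · exfalso
      have := key y κ hy1.le h
      rw [hyeq, hκeq] at this
      linarith
    · exact h
    · exfalso
      have := key κ y hκ1.le h
      rw [hyeq, hκeq] at this
      linarith
  refine ⟨part1, part2, part3, ?_⟩
  -- Part 4
  intro S hS
  rw [Metric.tendsto_nhds]
  intro ε hε
  have habs : 0 < |z| := abs_pos.2 hz
  set δ := min (min ε |z|) 2 / 3 with hδdef
  have hδ0 : 0 < δ := by
    have h1 : 0 < min (min ε |z|) 2 := lt_min (lt_min hε habs) two_pos
    positivity
  have h3ε : 3 * δ ≤ ε := by
    have h1 := min_le_left (min ε |z|) 2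
    have h2 := min_le_left ε |z|
    rw [hδdef]; linarith
  have h3z : 3 * δ ≤ |z| := by
    have h1 := min_le_left (min ε |z|) 2
    have h2 := min_le_right ε |z|
    rw [hδdef]; linarith
  have hδ1 : δ ≤ 1 := by
    have h1 := min_le_right (min ε |z|) 2
    rw [hδdef]; linarith
  -- eventual smallness of the slow-variation quantity at α·(δ/2) and α·δ
  have ht1 : Tendsto (fun α : ℝ => α * (δ/2)) atTop atTop :=
    Tendsto.atTop_mul_const (by positivity) tendsto_id
  have ht2 : Tendsto (fun α : ℝ => α * δ) atTop atTop :=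
    Tendsto.atTop_mul_const hδ0 tendsto_id
  have ev3 : ∀ᶠ α : ℝ in atTop,
      (α * (δ/2)) * deriv Φ (α * (δ/2)) / Φ (α * (δ/2)) < δ^2/(4*η) :=
    (hslow.comp ht1).eventually_lt_const (by positivity)
  have ev4 : ∀ᶠ α : ℝ in atTop,
      (α * δ) * deriv Φ (α * δ) / Φ (α * δ) < δ^2/η :=
    (hslow.comp ht2).eventually_lt_const (by positivity)
  filter_upwards [eventually_gt_atTop 0, part1, ev3, ev4] with α hα hreg hg3 hg4
  have hΦ := M1 α hα
  obtain ⟨sstar, ⟨hst0, hsteq⟩, _⟩ := part2 α hα hreg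
  have hv : deriv^[2] Φ (α * sstar) = -Φ α / (η * α ^ 2) := (EqIff α hα _).1 hsteq
  have hCpos : 0 < η * α / Φ α := by positivity
  -- E1 : sstar < δ
  have E1 : sstar < δ := by
    by_contra hcon
    push_neg at hcon
    have h1 : α * (δ/2) < α * δ := by nlinarith
    have h2 : α * δ ≤ α * sstar := by nlinarith
    obtain ⟨ξ, hξ, e⟩ := bern_slope hsm 1 (by positivity : (0:ℝ) < α * (δ/2)) h1
    rw [it1, e12] at e
    have hξ0 : 0 < ξ := lt_trans (by positivity) hξ.1
    have hm1 : deriv^[2] Φ ξ ≤ deriv^[2] Φ (α * δ) :=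
      mono2 (Set.mem_Ioi.2 hξ0) (Set.mem_Ioi.2 (by positivity)) hξ.2.le
    have hm2 : deriv^[2] Φ (α * δ) ≤ deriv^[2] Φ (α * sstar) := by
      rcases h2.lt_or_eq with h | h
      · exact (SM2 _ _ (by positivity) h).le
      · rw [h]
    have hA : Φ α / (η * α ^ 2) ≤ -deriv^[2] Φ ξ := by
      have := hm1.trans hm2
      rw [hv, neg_div] at this
      linarith
    have hf1δ : 0 ≤ deriv Φ (α * δ) := s1 _ (by positivity)
    -- from MVT : deriv Φ (α*(δ/2)) ≥ (Φ α/(η α²)) * (α*δ - α*(δ/2))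
    have hstar : Φ α / (η * α ^ 2) * (α * δ - α * (δ/2)) ≤ deriv Φ (α * (δ/2)) := by
      have hd : 0 < α * δ - α * (δ/2) := by nlinarith
      nlinarith [mul_le_mul_of_nonneg_right hA hd.le]
    -- compare with the slow-variation bound
    have hΦs : 0 < Φ (α * (δ/2)) := M1 _ (by positivity)
    have hΦle : Φ (α * (δ/2)) ≤ Φ α := by
      refine monoΦ (Set.mem_Ioi.2 (by positivity)) (Set.mem_Ioi.2 hα) ?_
      nlinarith
    have hq : (α * (δ/2)) * (Φ α / (η * α ^ 2) * (α * δ - α * (δ/2))) / Φ α ≤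
        (α * (δ/2)) * deriv Φ (α * (δ/2)) / Φ (α * (δ/2)) := by
      have hx0 : (0:ℝ) < α * (δ/2) := by positivity
      refine div_le_div₀ (mul_nonneg hx0.le (s1 _ hx0)) ?_ hΦs hΦle
      exact mul_le_mul_of_nonneg_left hstar hx0.le
    have hval : (α * (δ/2)) * (Φ α / (η * α ^ 2) * (α * δ - α * (δ/2))) / Φ α = δ^2/(4*η) := by
      field_simp
      ring
    rw [hval] at hq
    linarith
  -- E2 : (η α/Φ α) * deriv Φ (α * sstar) < 2δ
  have E2 : (η * α / Φ α) * deriv Φ (α * sstar) < 2 * δ := by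
    have hlt : α * sstar < α * sstar + α * δ := by nlinarith
    obtain ⟨ξ, hξ, e⟩ := bern_slope hsm 1 (by positivity : (0:ℝ) < α * sstar) hlt
    rw [it1, e12] at e
    have hξ0 : 0 < ξ := lt_trans (by positivity) hξ.1
    have hm : deriv^[2] Φ (α * sstar) ≤ deriv^[2] Φ ξ :=
      (SM2 _ _ (by positivity) hξ.1).le
    have hnegf : -deriv^[2] Φ ξ ≤ Φ α / (η * α ^ 2) := by
      rw [hv, neg_div] at hm
      linarith
    have hanti : deriv Φ (α * sstar + α * δ) ≤ deriv Φ (α * δ) := by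
      refine anti1 (Set.mem_Ioi.2 (by positivity)) (Set.mem_Ioi.2 (by positivity)) ?_
      nlinarith
    -- deriv Φ (α sstar) ≤ deriv Φ (α δ) + (Φα/(ηα²)) * (αδ)
    have hb1 : deriv Φ (α * sstar) ≤ deriv Φ (α * δ) + Φ α / (η * α ^ 2) * (α * δ) := by
      have hΔ : (α * sstar + α * δ) - α * sstar = α * δ := by ring
      rw [hΔ] at e
      nlinarith [mul_le_mul_of_nonneg_right hnegf (by positivity : (0:ℝ) ≤ α * δ)]
    -- multiply by C
    have hb2 : (η * α / Φ α) * deriv Φ (α * sstar) ≤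
        (η * α / Φ α) * deriv Φ (α * δ) + δ := by
      have hCterm : (η * α / Φ α) * (Φ α / (η * α ^ 2) * (α * δ)) = δ := by
        field_simp
      nlinarith [mul_le_mul_of_nonneg_left hb1 hCpos.le]
    -- bound C * deriv Φ (α δ) by the slow-variation quantity
    have hΦδ : 0 < Φ (α * δ) := M1 _ (by positivity)
    have hΦle : Φ (α * δ) ≤ Φ α := by
      refine monoΦ (Set.mem_Ioi.2 (by positivity)) (Set.mem_Ioi.2 hα) ?_
      nlinarith
    have hf1δ : 0 ≤ deriv Φ (α * δ) := s1 _ (by positivity)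
    have hb3 : (η * α / Φ α) * deriv Φ (α * δ) ≤
        (η / δ) * ((α * δ) * deriv Φ (α * δ) / Φ (α * δ)) := by
      have h1 : (η * α / Φ α) * deriv Φ (α * δ) =
          (η / δ) * ((α * δ) * deriv Φ (α * δ) / Φ α) := by
        field_simp
      rw [h1]
      refine mul_le_mul_of_nonneg_left ?_ (by positivity : (0:ℝ) ≤ η / δ)
      refine div_le_div_of_nonneg_left ?_ hΦδ hΦle
      positivity
    have hb4 : (η / δ) * ((α * δ) * deriv Φ (α * δ) / Φ (α * δ)) < (η / δ) * (δ^2/η) := by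
      apply mul_lt_mul_of_pos_left hg4 (by positivity)
    have hb5 : (η / δ) * (δ^2/η) = δ := by field_simp
    linarith
  -- threshold below |z|
  have hthr : sstar + (η * α / Φ α) * deriv Φ (α * sstar) < |z| := by linarith
  obtain ⟨κ, ⟨hκIoo, hκeq⟩, _⟩ := part3 α hα hreg sstar hst0 hsteq hthr
  have hSα : S α = Real.sign z * κ :=
    (hS α hα hreg sstar hst0 hsteq).2 hthr κ hκIoo hκeq
  -- conclude
  have hsz : Real.sign z * |z| = z := by
    rcases hz.lt_or_gt with h | h
    · rw [Real.sign_of_neg h, abs_of_neg h]; ring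
    · rw [Real.sign_of_pos h, abs_of_pos h]; ring
  have hsabs : |Real.sign z| = 1 := by
    rcases hz.lt_or_gt with h | h
    · rw [Real.sign_of_neg h]; norm_num
    · rw [Real.sign_of_pos h]; norm_num
  rw [Real.dist_eq, hSα]
  have hre : Real.sign z * κ - z = Real.sign z * (κ - |z|) := by
    rw [mul_sub, hsz]
  rw [hre, abs_mul, hsabs, one_mul]
  have hκz : κ < |z| := hκIoo.2
  rw [abs_of_neg (by linarith : κ - |z| < 0)]
  -- |z| - κ = C * deriv Φ (α κ) ≤ C * deriv Φ (α sstar) < 2δ ≤ ε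
  have hκd : |z| - κ = (η * α / Φ α) * deriv Φ (α * κ) := by linarith
  have hanti : deriv Φ (α * κ) ≤ deriv Φ (α * sstar) := by
    have hκ0 : 0 < κ := lt_trans hst0 hκIoo.1
    refine anti1 (Set.mem_Ioi.2 (mul_pos hα hst0)) (Set.mem_Ioi.2 (mul_pos hα hκ0)) ?_
    nlinarith [hκIoo.1]
  have hfin : (η * α / Φ α) * deriv Φ (α * κ) ≤ (η * α / Φ α) * deriv Φ (α * sstar) :=
    mul_le_mul_of_nonneg_left hanti hCpos.le
  linarith
end

section
/- Let Φ be a nonzero Bernstein function with Φ(0+) = 0, lim_{s→∞} Φ(s)/s = 0 and Φ''(0+) > −∞, let λ > 0, and let L : ℝ → ℝ be a differentiable function that is strongly convex with modulus γ > 0, i.e., L(u) − L(v) ≥ L'(v)(u−v) + (γ/2)(u−v)² for all u, v ∈ ℝ. Assume γ + λΦ''(0+) > 0 and define g(u) = L(u) + λΦ(|u|) for u ∈ ℝ (with Φ(0) = 0). If u₀ is a global minimizer of g, then for every δ ∈ ℝ, g(u₀ + δ) − g(u₀) ≥ ((γ + λΦ''(0+))/2) δ². -/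
open Filter Set Topology

/-- sufficient-decrease inequality. For a nonzero Bernstein penalty `Φ`
(with `Φ''(0+) = c > -∞`), `λ > 0`, and a differentiable `γ`-strongly convex loss `L`
with `γ + λc > 0`, if `u₀` globally minimizes `g(u) = L(u) + λΦ(|u|)`, then
`g(u₀+δ) - g(u₀) ≥ ((γ + λc)/2)δ²` for every `δ`. -/
theorem stmt_14 (Φ : ℝ → ℝ)
    (hB : IsBernstein Φ)
    (hnz : ∃ s : ℝ, 0 < s ∧ 0 < Φ s)
    (h0 : Tendsto Φ (nhdsWithin 0 (Set.Ioi 0)) (nhds 0))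
    (hsub : Tendsto (fun s => Φ s / s) atTop (nhds 0))
    (hΦ0 : Φ 0 = 0)
    (c : ℝ) (hc : Tendsto (deriv^[2] Φ) (nhdsWithin 0 (Set.Ioi 0)) (nhds c))
    (lam : ℝ) (hlam : 0 < lam)
    (L : ℝ → ℝ) (hL : Differentiable ℝ L)
    (γ : ℝ) (hγ : 0 < γ)
    (hsc : ∀ u v : ℝ, deriv L v * (u - v) + γ / 2 * (u - v) ^ 2 ≤ L u - L v)
    (hpos : 0 < γ + lam * c)
    (u₀ : ℝ) (hmin : ∀ u : ℝ, L u₀ + lam * Φ |u₀| ≤ L u + lam * Φ |u|) :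
    ∀ δ : ℝ, ((γ + lam * c) / 2) * δ ^ 2
        ≤ (L (u₀ + δ) + lam * Φ |u₀ + δ|) - (L u₀ + lam * Φ |u₀|) := by
  obtain ⟨hsm, hnn, hsign⟩ := hB
  -- differentiability facts on (0,∞)
  have hΦat : ∀ x : ℝ, 0 < x → DifferentiableAt ℝ Φ x := fun x hx =>
    (hsm.contDiffAt (isOpen_Ioi.mem_nhds hx)).differentiableAt (by simp)
  have hd1 : ContDiffOn ℝ (⊤ : ℕ∞) (deriv Φ) (Set.Ioi (0:ℝ)) := hsm.deriv_of_isOpen isOpen_Ioi (by simp)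
  have hd1at : ∀ x : ℝ, 0 < x → DifferentiableAt ℝ (deriv Φ) x := fun x hx =>
    (hd1.contDiffAt (isOpen_Ioi.mem_nhds hx)).differentiableAt (by simp)
  have hd2 : ContDiffOn ℝ (⊤ : ℕ∞) (deriv^[2] Φ) (Set.Ioi (0:ℝ)) := by
    have h' : ContDiffOn ℝ (⊤ : ℕ∞) (deriv (deriv Φ)) (Set.Ioi (0:ℝ)) :=
      hd1.deriv_of_isOpen isOpen_Ioi (by simp)
    have e : deriv^[2] Φ = deriv (deriv Φ) := by
      rw [show (2:ℕ) = 1 + 1 from rfl, Function.iterate_succ_apply' deriv 1 Φ]; rfl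
    rw [e]; exact h'
  -- sign facts
  have hΦ'nonneg : ∀ s : ℝ, 0 < s → 0 ≤ deriv Φ s := by
    intro s hs
    have := hsign 1 le_rfl s hs
    simpa using this
  have hΦ''nonpos : ∀ s : ℝ, 0 < s → deriv^[2] Φ s ≤ 0 := by
    intro s hs
    have := hsign 2 (by norm_num) s hs
    have h' : 0 ≤ -(deriv^[2] Φ s) := by simpa using this
    linarith
  have hΦ'''nonneg : ∀ s : ℝ, 0 < s → 0 ≤ deriv^[3] Φ s := by
    intro s hs
    have := hsign 3 (by norm_num) s hs
    simpa using this
  -- Φ'' monotone on (0,∞)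
  have hmono2 : MonotoneOn (deriv^[2] Φ) (Set.Ioi (0:ℝ)) := by
    apply monotoneOn_of_deriv_nonneg (convex_Ioi 0) (hd2.continuousOn)
    · rw [interior_Ioi]
      exact fun x hx => ((hd2.contDiffAt (isOpen_Ioi.mem_nhds hx)).differentiableAt
        (by simp)).differentiableWithinAt
    · rw [interior_Ioi]
      intro x hx
      have e : deriv (deriv^[2] Φ) = deriv^[3] Φ :=
        (Function.iterate_succ_apply' deriv 2 Φ).symm ▸ rfl
      rw [e]
      exact hΦ'''nonneg x hx
  have hc0 : c ≤ 0 := by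
    refine le_of_tendsto hc ?_
    filter_upwards [self_mem_nhdsWithin] with s hs using hΦ''nonpos s hs
  have hcle : ∀ s : ℝ, 0 < s → c ≤ deriv^[2] Φ s := by
    intro s hs
    refine le_of_tendsto hc ?_
    filter_upwards [Ioo_mem_nhdsGT_of_mem ⟨le_refl 0, hs⟩] with t ht
    exact hmono2 ht.1 hs ht.2.le
  -- continuity of Φ on [0,∞)
  have hΦcont : ContinuousOn Φ (Set.Ici (0:ℝ)) := by
    intro x hx
    rcases eq_or_lt_of_le (mem_Ici.mp hx) with h | h
    · rw [← h]
      rw [ContinuousWithinAt, show Set.Ici (0:ℝ) = insert 0 (Set.Ioi 0) by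
        rw [Set.Ioi_insert], nhdsWithin_insert]
      rw [hΦ0]
      exact Tendsto.sup (by simpa [hΦ0] using tendsto_pure_nhds Φ 0) h0
    · exact ((hsm.contDiffAt (isOpen_Ioi.mem_nhds h)).continuousAt).continuousWithinAt
  -- the shifted function f
  set f : ℝ → ℝ := fun s => Φ s - c / 2 * s ^ 2 with hf_def
  have hfat : ∀ x : ℝ, 0 < x → DifferentiableAt ℝ f x := fun x hx =>
    (hΦat x hx).sub (by fun_prop)
  have hderiv_f : ∀ s ∈ Set.Ioi (0:ℝ), deriv f s = deriv Φ s - c * s := by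
    intro s hs
    rw [hf_def]
    rw [deriv_fun_sub (hΦat s hs) (by fun_prop)]
    have : deriv (fun s : ℝ => c / 2 * s ^ 2) s = c / 2 * (2 * s) := by
      rw [deriv_const_mul _ (by fun_prop)]
      simp [deriv_pow]
    rw [this]; ring
  have hfconv : ConvexOn ℝ (Set.Ici (0:ℝ)) f := by
    apply convexOn_of_deriv2_nonneg (convex_Ici 0)
    · exact hΦcont.sub (by fun_prop)
    · rw [interior_Ici]
      exact fun x hx => (hfat x hx).differentiableWithinAt
    · rw [interior_Ici]
      intro x hx
      have hev : deriv f =ᶠ[𝓝 x] fun s => deriv Φ s - c * s := by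
        filter_upwards [isOpen_Ioi.mem_nhds hx] with s hs using hderiv_f s hs
      have : DifferentiableAt ℝ (fun s => deriv Φ s - c * s) x :=
        (hd1at x hx).sub (by fun_prop)
      exact (this.congr_of_eventuallyEq hev).differentiableWithinAt
    · rw [interior_Ici]
      intro x hx
      have hev : deriv f =ᶠ[𝓝 x] fun s => deriv Φ s - c * s := by
        filter_upwards [isOpen_Ioi.mem_nhds hx] with s hs using hderiv_f s hs
      have e2 : deriv^[2] f x = deriv (fun s => deriv Φ s - c * s) x := by
        rw [show deriv^[2] f = deriv (deriv f) by
          rw [show (2:ℕ) = 1 + 1 from rfl, Function.iterate_succ_apply' deriv 1 f]; rfl]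
        exact hev.deriv_eq
      rw [e2, deriv_fun_sub (hd1at x hx) (by fun_prop)]
      have : deriv (fun s : ℝ => c * s) x = c := by
        have h := (hasDerivAt_id x).const_mul c
        simpa using h.deriv
      rw [this]
      have e3 : deriv (deriv Φ) x = deriv^[2] Φ x := by
        rw [show deriv^[2] Φ = deriv (deriv Φ) by
          rw [show (2:ℕ) = 1 + 1 from rfl, Function.iterate_succ_apply' deriv 1 Φ]; rfl]
      rw [e3]
      linarith [hcle x hx]
  have hfmono : MonotoneOn f (Set.Ici (0:ℝ)) := by
    apply monotoneOn_of_deriv_nonneg (convex_Ici 0) (hΦcont.sub (by fun_prop))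
    · rw [interior_Ici]
      exact fun x hx => (hfat x hx).differentiableWithinAt
    · rw [interior_Ici]
      intro x hx
      show 0 ≤ deriv f x
      rw [hderiv_f x hx]
      have := hΦ'nonneg x hx
      nlinarith [mem_Ioi.mp hx]
  -- F(u) = f |u| is convex on ℝ
  have hF : ConvexOn ℝ Set.univ (fun u : ℝ => f |u|) := by
    refine ⟨convex_univ, ?_⟩
    intro x _ y _ a b ha hb hab
    simp only [smul_eq_mul]
    calc f |a * x + b * y| ≤ f (a * |x| + b * |y|) := by
          apply hfmono (mem_Ici.mpr (abs_nonneg _))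
          · exact mem_Ici.mpr (by positivity)
          · calc |a * x + b * y| ≤ |a * x| + |b * y| := abs_add_le _ _
              _ = a * |x| + b * |y| := by rw [abs_mul, abs_mul, abs_of_nonneg ha, abs_of_nonneg hb]
        _ ≤ a * f |x| + b * f |y| := by
          have := hfconv.2 (mem_Ici.mpr (abs_nonneg x)) (mem_Ici.mpr (abs_nonneg y)) ha hb hab
          simpa using this
  -- main argument
  intro δ
  have key : ∀ t : ℝ, t ∈ Set.Ioo (0:ℝ) 1 →
      ((γ + lam * c) / 2) * (1 - t) * δ ^ 2
        ≤ (L (u₀ + δ) + lam * Φ |u₀ + δ|) - (L u₀ + lam * Φ |u₀|) := by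
    intro t ht
    obtain ⟨ht0, ht1⟩ := ht
    set u : ℝ := u₀ + δ with hu
    set v : ℝ := u₀ + t * δ with hv
    have hconv : f |t • u + (1 - t) • u₀| ≤ t • f |u| + (1 - t) • f |u₀| :=
      hF.2 (Set.mem_univ u) (Set.mem_univ u₀) ht0.le (by linarith) (by ring)
    simp only [smul_eq_mul] at hconv
    rw [show t * u + (1 - t) * u₀ = v by rw [hu, hv]; ring] at hconv
    -- hconv : f |v| ≤ t * f |u| + (1-t) * f |u₀|
    have hq : Φ |v| ≤ t * Φ |u| + (1 - t) * Φ |u₀| - c / 2 * (t * (1 - t) * δ ^ 2) := by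
      have h1 : f |v| = Φ |v| - c / 2 * v ^ 2 := by simp [hf_def, sq_abs]
      have h2 : f |u| = Φ |u| - c / 2 * u ^ 2 := by simp [hf_def, sq_abs]
      have h3 : f |u₀| = Φ |u₀| - c / 2 * u₀ ^ 2 := by simp [hf_def, sq_abs]
      rw [h1, h2, h3] at hconv
      nlinarith [hconv]
    have hsc1 := hsc u v
    have hsc2 := hsc u₀ v
    have hmv := hmin v
    have huv : u - v = (1 - t) * δ := by rw [hu, hv]; ring
    have hu0v : u₀ - v = -(t * δ) := by rw [hv]; ring
    rw [huv] at hsc1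
    rw [hu0v] at hsc2
    -- multiply through and combine
    have step : t * (((γ + lam * c) / 2) * (1 - t) * δ ^ 2)
        ≤ t * ((L u + lam * Φ |u|) - (L u₀ + lam * Φ |u₀|)) := by
      nlinarith [mul_le_mul_of_nonneg_left hsc1 ht0.le,
        mul_le_mul_of_nonneg_left hsc2 (by linarith : (0:ℝ) ≤ 1 - t),
        mul_le_mul_of_nonneg_left hq hlam.le, hmv]
    exact le_of_mul_le_mul_left step ht0
  have hlim : Tendsto (fun t : ℝ => ((γ + lam * c) / 2) * (1 - t) * δ ^ 2) (𝓝[>] (0:ℝ))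
      (𝓝 (((γ + lam * c) / 2) * δ ^ 2)) := by
    have : ContinuousAt (fun t : ℝ => ((γ + lam * c) / 2) * (1 - t) * δ ^ 2) 0 := by fun_prop
    have h := this.continuousWithinAt (s := Set.Ioi (0:ℝ))
    simpa using h.tendsto
  refine le_of_tendsto hlim ?_
  filter_upwards [Ioo_mem_nhdsGT_of_mem ⟨le_refl 0, one_pos⟩] with t ht using key t ht
end

section
/- Let Φ be a nonzero Bernstein function with Φ(0+) = 0, lim_{s→∞} Φ(s)/s = 0, Φ'(0+) ∈ (0,∞) and Φ''(0+) ∈ (−∞,0). Let X be an n×p real matrix, y ∈ ℝⁿ, λ > 0 and α > 0, and define F(b) = (1/2)‖y − Xb‖² + λ Σ_{j=1}^p Φ(α|b_j|)/Φ(α) for b ∈ ℝᵖ (with Φ(0) = 0). Let b* ∈ ℝᵖ with support S = {j : b*_j ≠ 0}, and write X_S for the submatrix of X with columns indexed by S. Suppose: (i) for every j ∈ S, the j-th entry of Xᵀ(Xb* − y) plus (λα/Φ(α))Φ'(α|b*_j|)·sgn(b*_j) equals 0; (ii) for every j ∉ S, the j-th entry of Xᵀ(Xb* − y) has absolute value strictly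 less than (λα/Φ(α))Φ'(0+); and (iii) λ_min(X_Sᵀ X_S) + (λα²/Φ(α))Φ''(0+) > 0, where λ_min denotes the smallest eigenvalue. Then b* is a strict local minimizer of F. -/
open Filter Set Topology

set_option maxHeartbeats 1600000

section BernAux

variable {Φ : ℝ → ℝ} (hB : IsBernstein Φ)
include hB

lemma bern_diffOn : DifferentiableOn ℝ Φ (Set.Ioi (0:ℝ)) :=
  hB.1.differentiableOn (by simp)

lemma bern_diffAt {s : ℝ} (hs : 0 < s) : DifferentiableAt ℝ Φ s :=
  ((bern_diffOn hB) s hs).differentiableAt (isOpen_Ioi.mem_nhds hs)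

lemma bern_cd1 : ContDiffOn ℝ (⊤ : ℕ∞) (deriv Φ) (Set.Ioi (0:ℝ)) :=
  hB.1.deriv_of_isOpen isOpen_Ioi (by simp)

lemma bern_cd2 : ContDiffOn ℝ (⊤ : ℕ∞) (deriv (deriv Φ)) (Set.Ioi (0:ℝ)) :=
  (bern_cd1 hB).deriv_of_isOpen isOpen_Ioi (by simp)

lemma bern_d1At {s : ℝ} (hs : 0 < s) : DifferentiableAt ℝ (deriv Φ) s :=
  (((bern_cd1 hB).differentiableOn (by simp)) s hs).differentiableAt (isOpen_Ioi.mem_nhds hs)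

omit hB in
lemma bern_iter2 : (deriv^[2] Φ) = deriv (deriv Φ) := rfl

omit hB in
lemma bern_iter3 : (deriv^[3] Φ) = deriv (deriv (deriv Φ)) := rfl

lemma bern_d1_nonneg {s : ℝ} (hs : 0 < s) : 0 ≤ deriv Φ s := by
  have := hB.2.2 1 le_rfl s hs; simpa using this

lemma bern_d2_nonpos {s : ℝ} (hs : 0 < s) : deriv (deriv Φ) s ≤ 0 := by
  have := hB.2.2 2 (by norm_num) s hs
  rw [bern_iter2] at this
  simpa using this

lemma bern_d3_nonneg {s : ℝ} (hs : 0 < s) : 0 ≤ deriv (deriv (deriv Φ)) s := by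
  have := hB.2.2 3 (by norm_num) s hs
  rw [bern_iter3] at this
  simpa using this

lemma bern_d2_mono : MonotoneOn (deriv (deriv Φ)) (Set.Ioi (0:ℝ)) := by
  apply monotoneOn_of_deriv_nonneg (convex_Ioi 0) ((bern_cd2 hB).continuousOn)
  · rw [interior_Ioi]
    exact (bern_cd2 hB).differentiableOn (by simp)
  · intro x hx
    rw [interior_Ioi] at hx
    exact bern_d3_nonneg hB hx

lemma bern_mono_s15 : MonotoneOn Φ (Set.Ioi (0:ℝ)) := by
  apply monotoneOn_of_deriv_nonneg (convex_Ioi 0) (hB.1.continuousOn)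
  · rw [interior_Ioi]; exact bern_diffOn hB
  · intro x hx; rw [interior_Ioi] at hx; exact bern_d1_nonneg hB hx

variable {c : ℝ} (hc : Tendsto (deriv^[2] Φ) (nhdsWithin 0 (Set.Ioi 0)) (nhds c))
include hc

lemma bern_d2_ge {s : ℝ} (hs : 0 < s) : c ≤ deriv (deriv Φ) s := by
  rw [bern_iter2] at hc
  apply le_of_tendsto hc
  filter_upwards [Ioo_mem_nhdsGT_of_mem (show (0:ℝ) ∈ Ico 0 s from ⟨le_rfl, hs⟩)] with t ht
  exact bern_d2_mono hB ht.1 hs ht.2.le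

omit hc in
lemma psi_hasDeriv {s : ℝ} (hs : 0 < s) :
    HasDerivAt (fun x => Φ x - c/2 * x^2) (deriv Φ s - c*s) s := by
  have h1 : HasDerivAt Φ (deriv Φ s) s := (bern_diffAt hB hs).hasDerivAt
  have h2 : HasDerivAt (fun x : ℝ => c/2 * x^2) (c*s) s := by
    have := (hasDerivAt_pow 2 s).const_mul (c/2)
    exact this.congr_deriv (by push_cast; ring)
  exact h1.sub h2

omit hc in
lemma psi_deriv {s : ℝ} (hs : 0 < s) :
    deriv (fun x => Φ x - c/2 * x^2) s = deriv Φ s - c*s :=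
  (psi_hasDeriv hB hs).deriv

omit hc in
lemma psi_deriv_ev {s : ℝ} (hs : 0 < s) :
    deriv (fun x => Φ x - c/2 * x^2) =ᶠ[nhds s] fun t => deriv Φ t - c*t := by
  filter_upwards [isOpen_Ioi.mem_nhds hs] with t ht
  exact psi_deriv hB ht

lemma psi_convex : ConvexOn ℝ (Set.Ioi (0:ℝ)) (fun x => Φ x - c/2 * x^2) := by
  apply MonotoneOn.convexOn_of_deriv (convex_Ioi 0)
  · intro s hs
    exact ((psi_hasDeriv hB hs).differentiableAt).continuousAt.continuousWithinAt
  · rw [interior_Ioi]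
    intro s hs
    exact ((psi_hasDeriv hB hs).differentiableAt).differentiableWithinAt
  · rw [interior_Ioi]
    apply monotoneOn_of_deriv_nonneg (convex_Ioi 0)
    · apply ContinuousOn.congr (f := fun t => deriv Φ t - c*t)
      · exact ((bern_cd1 hB).continuousOn).sub (continuous_const.mul continuous_id).continuousOn
      · intro t ht; exact psi_deriv hB ht
    · rw [interior_Ioi]
      intro s hs
      have hd : DifferentiableAt ℝ (fun t => deriv Φ t - c*t) s :=
        (bern_d1At hB hs).sub ((differentiable_id.const_mul c) s)
      exact (hd.congr_of_eventuallyEq (psi_deriv_ev hB hs)).differentiableWithinAt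
    · rw [interior_Ioi]
      intro s hs
      have hev := (psi_deriv_ev (c := c) hB hs).deriv_eq
      rw [hev]
      have h2 : HasDerivAt (fun t => deriv Φ t - c*t) (deriv (deriv Φ) s - c) s :=
        ((bern_d1At hB hs).hasDerivAt).sub (by simpa using (hasDerivAt_id s).const_mul c)
      rw [h2.deriv]
      have := bern_d2_ge hB hc hs
      linarith

lemma psi_key {s₁ s₂ : ℝ} (h1 : 0 < s₁) (h2 : 0 < s₂) :
    (deriv Φ s₁ - c*s₁) * (s₂ - s₁) ≤
      (Φ s₂ - c/2 * s₂^2) - (Φ s₁ - c/2 * s₁^2) := by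
  have hkey : deriv (fun x => Φ x - c/2 * x^2) s₁ * (s₂ - s₁) ≤
      (fun x => Φ x - c/2 * x^2) s₂ - (fun x => Φ x - c/2 * x^2) s₁ := by
    rcases lt_trichotomy s₁ s₂ with h | h | h
    · have := (psi_convex hB hc).deriv_le_slope h1 h2 h (psi_hasDeriv hB h1).differentiableAt
      rw [slope_def_field] at this
      have hpos : 0 < s₂ - s₁ := by linarith
      exact (le_div_iff₀ hpos).mp this
    · subst h; simp
    · have := (psi_convex hB hc).slope_le_deriv h2 h1 h (psi_hasDeriv hB h1).differentiableAt
      rw [slope_def_field] at this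
      have hpos : 0 < s₁ - s₂ := by linarith
      have h3 := (div_le_iff₀ hpos).mp this
      nlinarith [h3]
  rw [psi_deriv hB h1] at hkey
  exact hkey

lemma bern_taylor {s₁ s₂ : ℝ} (h1 : 0 < s₁) (h2 : 0 < s₂) :
    Φ s₁ + deriv Φ s₁ * (s₂ - s₁) + c/2*(s₂-s₁)^2 ≤ Φ s₂ := by
  have := psi_key hB hc h1 h2
  nlinarith [this]

variable {d : ℝ} (hd : Tendsto (deriv Φ) (nhdsWithin 0 (Set.Ioi 0)) (nhds d))
  (h0 : Tendsto Φ (nhdsWithin 0 (Set.Ioi 0)) (nhds 0))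
include hd h0

lemma bern_lower {s : ℝ} (hs : 0 < s) : d*s + c/2*s^2 ≤ Φ s := by
  have hψ0 : Tendsto (fun x => Φ x - c/2 * x^2) (nhdsWithin 0 (Set.Ioi 0)) (nhds 0) := by
    have hcont : Continuous (fun t : ℝ => c/2 * t^2) := by continuity
    have h2' : Tendsto (fun t : ℝ => c/2*t^2) (nhdsWithin 0 (Set.Ioi 0)) (nhds (c/2*0^2)) :=
      (hcont.tendsto 0).mono_left nhdsWithin_le_nhds
    have := h0.sub h2'
    simpa using this
  have hψd : Tendsto (fun t => deriv Φ t - c*t) (nhdsWithin 0 (Set.Ioi 0)) (nhds d) := by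
    have hcont : Continuous (fun t : ℝ => c * t) := by continuity
    have h2' : Tendsto (fun t : ℝ => c*t) (nhdsWithin 0 (Set.Ioi 0)) (nhds (c*0)) :=
      (hcont.tendsto 0).mono_left nhdsWithin_le_nhds
    have h3 := hd.sub h2'
    simpa using h3
  have hev : ∀ᶠ t in nhdsWithin 0 (Set.Ioi 0),
      (Φ t - c/2 * t^2) + (deriv Φ t - c*t) * (s - t) ≤ Φ s - c/2 * s^2 := by
    filter_upwards [Ioo_mem_nhdsGT_of_mem (show (0:ℝ) ∈ Ico 0 s from ⟨le_rfl, hs⟩)] with t ht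
    have := psi_key hB hc ht.1 hs
    linarith
  have hlim : Tendsto (fun t => (Φ t - c/2 * t^2) + (deriv Φ t - c*t) * (s - t))
      (nhdsWithin 0 (Set.Ioi 0)) (nhds (0 + d * (s - 0))) := by
    apply hψ0.add
    apply hψd.mul
    have hcont : Continuous (fun t : ℝ => s - t) := by continuity
    exact (hcont.tendsto 0).mono_left nhdsWithin_le_nhds
  have := le_of_tendsto hlim hev
  linarith

lemma bern_phi_pos {c0 : c < 0} {d0 : 0 < d} {a : ℝ} (ha : 0 < a) : 0 < Φ a := by
  set s1 := min a (d / (-c)) with hs1def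
  have hr : 0 < d / (-c) := div_pos d0 (by linarith)
  have hs1 : 0 < s1 := lt_min ha hr
  have hmono := bern_mono_s15 hB (show s1 ∈ Set.Ioi (0:ℝ) from hs1) (show a ∈ Set.Ioi (0:ℝ) from ha)
      (min_le_left _ _)
  have hlow := bern_lower hB hc hd h0 hs1
  have hle : s1 * (-c) ≤ d := by
    have h1 := min_le_right a (d / (-c))
    rw [← le_div_iff₀ (by linarith : (0:ℝ) < -c)]
    exact h1
  nlinarith [mul_le_mul_of_nonneg_left hle hs1.le, d0, hs1, hmono, hlow]

end BernAux

section SumAux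

lemma stmt15_sum_transpose {n p : ℕ} (X : Matrix (Fin n) (Fin p) ℝ) (e : Fin n → ℝ)
    (h : Fin p → ℝ) :
    ∑ i, e i * X.mulVec h i = ∑ j, (X.transpose.mulVec e) j * h j := by
  simp only [Matrix.mulVec, dotProduct, Matrix.transpose_apply]
  rw [Finset.sum_congr rfl (fun i _ => Finset.mul_sum Finset.univ (fun j => X i j * h j) (e i))]
  rw [Finset.sum_comm]
  apply Finset.sum_congr rfl
  intro j _
  rw [Finset.sum_mul]
  apply Finset.sum_congr rfl
  intro i _
  ring

lemma stmt15_cs_row {n p : ℕ} (X : Matrix (Fin n) (Fin p) ℝ) (w : Fin p → ℝ) (i : Fin n) :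
    (X.mulVec w i)^2 ≤ (∑ j, (X i j)^2) * ∑ j, (w j)^2 := by
  have := Finset.sum_mul_sq_le_sq_mul_sq Finset.univ (fun j => X i j) w
  simpa [Matrix.mulVec, dotProduct] using this

lemma stmt15_sum_sq_expand {n : ℕ} (a b : Fin n → ℝ) :
    ∑ i, (a i + b i)^2
      = (∑ i, (a i)^2) + 2*(∑ i, a i * b i) + (∑ i, (b i)^2) := by
  have h : ∀ i, (a i + b i)^2 = (a i)^2 + 2*(a i * b i) + (b i)^2 := fun i => by ring
  rw [Finset.sum_congr rfl (fun i _ => h i), Finset.sum_add_distrib, Finset.sum_add_distrib,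
    ← Finset.mul_sum]

lemma stmt15_tcross {n : ℕ} (a b : Fin n → ℝ) (t : ℝ) :
    0 ≤ t^2*(∑ i, (a i)^2) + 2*t*(∑ i, a i * b i) + (∑ i, (b i)^2) := by
  have h : ∀ i, (t*a i + b i)^2 = t^2*(a i)^2 + 2*t*(a i*b i) + (b i)^2 := fun i => by ring
  have h0 : 0 ≤ ∑ i, (t*a i + b i)^2 := Finset.sum_nonneg fun i _ => sq_nonneg _
  rw [Finset.sum_congr rfl (fun i _ => h i), Finset.sum_add_distrib, Finset.sum_add_distrib,
    ← Finset.mul_sum, ← Finset.mul_sum] at h0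
  exact h0

lemma stmt15_exists_m {n p : ℕ} (X : Matrix (Fin n) (Fin p) ℝ) (bstar : Fin p → ℝ) (κ : ℝ)
    (heig : ∀ v : Fin p → ℝ, v ≠ 0 → (∀ j, bstar j = 0 → v j = 0) →
      0 < (∑ i, (X.mulVec v i) ^ 2) + κ * (∑ j, (v j) ^ 2)) :
    ∃ m > 0, ∀ v : Fin p → ℝ, (∀ j, bstar j = 0 → v j = 0) →
      m * (∑ j, (v j)^2) ≤ (∑ i, (X.mulVec v i) ^ 2) + κ * (∑ j, (v j) ^ 2) := by
  set Q : (Fin p → ℝ) → ℝ := fun v => (∑ i, (X.mulVec v i) ^ 2) + κ * (∑ j, (v j) ^ 2) with hQ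
  have hQc : Continuous Q := by
    apply Continuous.add
    · apply continuous_finset_sum
      intro i _
      have : Continuous (fun v : Fin p → ℝ => X.mulVec v i) := by
        simp only [Matrix.mulVec, dotProduct]
        exact continuous_finset_sum _ fun j _ => continuous_const.mul (continuous_apply j)
      exact this.pow 2
    · exact continuous_const.mul (continuous_finset_sum _ fun j _ => (continuous_apply j).pow 2)
  set K : Set (Fin p → ℝ) :=
    {v | ∀ j, bstar j = 0 → v j = 0} ∩ {v | ∑ j, (v j)^2 = 1} with hK
  have hscale : ∀ (r : ℝ) (v : Fin p → ℝ), Q (r • v) = r^2 * Q v := by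
    intro r v
    simp only [hQ, Matrix.mulVec_smul]
    have h1 : ∀ i, ((r • X.mulVec v) i)^2 = r^2 * (X.mulVec v i)^2 := by
      intro i; simp [Pi.smul_apply, smul_eq_mul]; ring
    have h2 : ∀ j, ((r • v) j)^2 = r^2 * (v j)^2 := by
      intro j; simp [Pi.smul_apply, smul_eq_mul]; ring
    rw [Finset.sum_congr rfl (fun i _ => h1 i), Finset.sum_congr rfl (fun j _ => h2 j),
      ← Finset.mul_sum, ← Finset.mul_sum]
    ring
  have hsum_sq : ∀ (r : ℝ) (v : Fin p → ℝ), ∑ j, ((r • v) j)^2 = r^2 * ∑ j, (v j)^2 := by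
    intro r v
    have h2 : ∀ j, ((r • v) j)^2 = r^2 * (v j)^2 := by
      intro j; simp [Pi.smul_apply, smul_eq_mul]; ring
    rw [Finset.sum_congr rfl (fun j _ => h2 j), ← Finset.mul_sum]
  by_cases hKne : K.Nonempty
  · have hc1 : IsClosed {v : Fin p → ℝ | ∀ j, bstar j = 0 → v j = 0} := by
      have he : {v : Fin p → ℝ | ∀ j, bstar j = 0 → v j = 0}
          = ⋂ j, {v | bstar j = 0 → v j = 0} := by ext v; simp
      rw [he]
      apply isClosed_iInter
      intro j
      by_cases hbj : bstar j = 0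
      · have : {v : Fin p → ℝ | bstar j = 0 → v j = 0} = {v | v j = 0} := by ext v; simp [hbj]
        rw [this]; exact isClosed_eq (continuous_apply j) continuous_const
      · have : {v : Fin p → ℝ | bstar j = 0 → v j = 0} = univ := by ext v; simp [hbj]
        rw [this]; exact isClosed_univ
    have hc2 : IsClosed {v : Fin p → ℝ | ∑ j, (v j)^2 = 1} :=
      isClosed_eq (continuous_finset_sum _ fun j _ => (continuous_apply j).pow 2) continuous_const
    have hKclosed : IsClosed K := hc1.inter hc2
    have hKsub : K ⊆ Metric.closedBall 0 1 := by
      intro v hv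
      rw [Metric.mem_closedBall, dist_pi_le_iff (by norm_num)]
      intro j
      have h1 : (v j)^2 ≤ 1 := by
        have := Finset.single_le_sum (f := fun j => (v j)^2)
          (fun k _ => sq_nonneg (v k)) (Finset.mem_univ j)
        rw [hv.2] at this
        exact this
      rw [Real.dist_eq, Pi.zero_apply, sub_zero]
      exact abs_le_one_iff_mul_self_le_one.mpr (by nlinarith)
    have hKcomp : IsCompact K :=
      (isCompact_closedBall (0 : Fin p → ℝ) 1).of_isClosed_subset hKclosed hKsub
    obtain ⟨v₀, hv₀K, hmin⟩ := hKcomp.exists_isMinOn hKne hQc.continuousOn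
    have hv₀ne : v₀ ≠ 0 := by
      intro h
      rw [h] at hv₀K
      have := hv₀K.2
      simp at this
    have hm0 : 0 < Q v₀ := heig v₀ hv₀ne hv₀K.1
    refine ⟨Q v₀, hm0, ?_⟩
    intro v hsupp
    by_cases hv0 : v = 0
    · subst hv0
      simp [hQ, Matrix.mulVec_zero]
    · have hS : 0 < ∑ j, (v j)^2 := by
        obtain ⟨j, hj⟩ := Function.ne_iff.mp hv0
        apply Finset.sum_pos' (fun k _ => sq_nonneg (v k)) ⟨j, Finset.mem_univ j, ?_⟩
        have : v j ≠ 0 := by simpa using hj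
        positivity
      set r := Real.sqrt (∑ j, (v j)^2) with hr
      have hr0 : 0 < r := Real.sqrt_pos.mpr hS
      have hr2 : r^2 = ∑ j, (v j)^2 := Real.sq_sqrt hS.le
      have hv'K : r⁻¹ • v ∈ K := by
        constructor
        · intro j hj
          simp [Pi.smul_apply, hsupp j hj]
        · show ∑ j, ((r⁻¹ • v) j)^2 = 1
          rw [hsum_sq, ← hr2]
          field_simp
      have hle := isMinOn_iff.mp hmin _ hv'K
      rw [hscale] at hle
      have h2 : Q v₀ * r^2 ≤ (r⁻¹)^2 * Q v * r^2 :=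
        mul_le_mul_of_nonneg_right hle (by positivity)
      have heq : (r⁻¹)^2 * Q v * r^2 = Q v := by
        field_simp
      rw [heq, hr2] at h2
      exact h2
  · refine ⟨1, one_pos, ?_⟩
    intro v hsupp
    by_cases hv0 : v = 0
    · subst hv0; simp [hQ, Matrix.mulVec_zero]
    · exfalso
      apply hKne
      have hS : 0 < ∑ j, (v j)^2 := by
        obtain ⟨j, hj⟩ := Function.ne_iff.mp hv0
        apply Finset.sum_pos' (fun k _ => sq_nonneg (v k)) ⟨j, Finset.mem_univ j, ?_⟩
        have : v j ≠ 0 := by simpa using hj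
        positivity
      set r := Real.sqrt (∑ j, (v j)^2) with hr
      have hr0 : 0 < r := Real.sqrt_pos.mpr hS
      have hr2 : r^2 = ∑ j, (v j)^2 := Real.sq_sqrt hS.le
      refine ⟨r⁻¹ • v, ?_, ?_⟩
      · intro j hj
        simp [Pi.smul_apply, hsupp j hj]
      · show ∑ j, ((r⁻¹ • v) j)^2 = 1
        rw [hsum_sq, ← hr2]
        field_simp

lemma stmt15_per_zero (q d c α a G x gj Φv κc δ : ℝ)
    (hq0 : 0 < q) (ha0 : 0 ≤ a)
    (hlow : q*(d*(α*a) + c/2*(α*a)^2) ≤ q*Φv)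
    (hκx : κc/2*x^2 = q*(c/2*(α*a)^2))
    (hg : -(G*a) ≤ gj*x)
    (hδm : δ*a ≤ (q*α*d - G)*a) :
    δ*a + κc/2*x^2 ≤ gj*x + q*Φv := by nlinarith [hlow, hκx, hg, hδm]

lemma stmt15_per_supp (q c α x σ D' Φ1 Φ2 κc : ℝ)
    (hq0 : 0 < q)
    (htay : Φ1 + D'*(α*(σ*x)) + c/2*(α^2*x^2) ≤ Φ2)
    (hκx : κc/2*x^2 = q*(c/2*(α^2*x^2))) :
    κc/2*x^2 ≤ (-(q*α*D'*σ))*x + (q*Φ2 - q*Φ1) := by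
  nlinarith [mul_le_mul_of_nonneg_left htay hq0.le, hκx]

lemma stmt15_final_alg (m κc M2' δ t ε SU SW LW A B CR : ℝ)
    (hm0 : 0 < m) (hκc : κc < 0) (hM : 0 < M2') (hδ0 : 0 < δ)
    (ht : t = m / (2*(m - κc + M2')))
    (hε : ε ≤ δ*t/(2*(M2'/2 - κc/4)))
    (hSU : 0 ≤ SU) (hSW : 0 ≤ SW) (hLW : 0 ≤ LW) (hB : 0 ≤ B)
    (hcross : 0 ≤ t^2*A + 2*t*CR + B)
    (hBb : B ≤ M2'*SW) (hmA : (m - κc)*SU ≤ A) (hSWb : SW ≤ ε*LW)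
    (hne : 0 < SU ∨ 0 < LW) :
    0 < δ*LW + κc/2*(SU+SW) + (1/2)*(A + 2*CR + B) := by
  have hD : 0 < m - κc + M2' := by linarith
  have ht0 : 0 < t := by rw [ht]; exact div_pos hm0 (by linarith)
  have htD : t*(2*(m - κc + M2')) = m := by rw [ht]; field_simp
  have ht1 : t ≤ 1/2 := by nlinarith [htD, hD, mul_pos ht0 hM]
  have htc : t*(m - κc) ≤ m/2 := by nlinarith [htD, mul_pos ht0 hM]
  have hC1 : 0 < M2'/2 - κc/4 := by linarith
  have hεC : ε*(M2'/2 - κc/4) ≤ δ*t/2 := by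
    have h1 := mul_le_mul_of_nonneg_right hε hC1.le
    have heq : δ*t/(2*(M2'/2-κc/4))*(M2'/2-κc/4) = δ*t/2 := by
      rw [div_mul_eq_mul_div, mul_comm (2:ℝ) (M2'/2-κc/4), ← div_div,
        mul_div_assoc, div_self (ne_of_gt hC1)]
      ring
    linarith
  have kcross : -(t^2*A + B)/2 ≤ t*CR := by linarith
  have kB : -(1/2)*(M2'*SW) ≤ ((t-1)/2)*B := by
    nlinarith [mul_nonneg hM.le hSW, hBb, hB, ht1, ht0]
  have coefA : (0:ℝ) ≤ (t/2)*(1-t) := by nlinarith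
  have kA : (t/2)*(1-t)*((m-κc)*SU) ≤ (t/2)*(1-t)*A := mul_le_mul_of_nonneg_left hmA coefA
  have kSU : (t/2)*(m/2)*SU ≤ (t/2)*(m - t*(m-κc))*SU := by
    apply mul_le_mul_of_nonneg_right _ hSU
    apply mul_le_mul_of_nonneg_left _ (by linarith : (0:ℝ) ≤ t/2)
    linarith
  have kSW : (κc/4 - M2'/2)*SW ≤ (κc*t/2 - M2'/2)*SW := by
    apply mul_le_mul_of_nonneg_right _ hSW
    nlinarith
  have kLW : (δ*t - ε*(M2'/2 - κc/4))*LW ≥ (δ*t/2)*LW := by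
    apply mul_le_mul_of_nonneg_right _ hLW
    linarith
  have kSWb : (M2'/2 - κc/4)*SW ≤ (M2'/2 - κc/4)*(ε*LW) := mul_le_mul_of_nonneg_left hSWb hC1.le
  have hpos : 0 < (t/2)*(m/2)*SU + (δ*t/2)*LW := by
    have n1 : 0 ≤ (t/2)*(m/2)*SU := by positivity
    have n2 : 0 ≤ (δ*t/2)*LW := by positivity
    rcases hne with h | h
    · have : 0 < (t/2)*(m/2)*SU := by positivity
      linarith
    · have : 0 < (δ*t/2)*LW := by positivity
      linarith
  have key : (t/2)*(m/2)*SU + (δ*t/2)*LW ≤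
      t*(δ*LW + κc/2*(SU+SW) + (1/2)*(A + 2*CR + B)) := by
    nlinarith [kcross, kB, kA, kSU, kSW, kLW, kSWb]
  nlinarith [key, hpos, ht0]

end SumAux


/-- strict local minimizer from the KKT conditions. For the penalized
least-squares objective `F(b) = (1/2)‖y - Xb‖² + λ Σⱼ Φ(α|bⱼ|)/Φ(α)`, if `b*` satisfies
the stationarity condition on its support `S`, the strict dual feasibility condition off
`S`, and the restricted positive-definiteness condition
`λ_min(X_Sᵀ X_S) + (λα²/Φ(α))Φ''(0+) > 0` (expressed via the quadratic form on vectors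
supported on `S`), then `b*` is a strict local minimizer of `F`. -/
theorem stmt_15 {n p : ℕ} (Φ : ℝ → ℝ)
    (hB : IsBernstein Φ)
    (hnz : ∃ s : ℝ, 0 < s ∧ 0 < Φ s)
    (h0 : Tendsto Φ (nhdsWithin 0 (Set.Ioi 0)) (nhds 0))
    (hsub : Tendsto (fun s => Φ s / s) atTop (nhds 0))
    (hΦ0 : Φ 0 = 0)
    (d : ℝ) (hd : Tendsto (deriv Φ) (nhdsWithin 0 (Set.Ioi 0)) (nhds d)) (hd0 : 0 < d)
    (c : ℝ) (hc : Tendsto (deriv^[2] Φ) (nhdsWithin 0 (Set.Ioi 0)) (nhds c)) (hc0 : c < 0)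
    (X : Matrix (Fin n) (Fin p) ℝ) (y : Fin n → ℝ)
    (lam α : ℝ) (hlam : 0 < lam) (hα : 0 < α)
    (bstar : Fin p → ℝ)
    (hstat : ∀ j, bstar j ≠ 0 →
      (Matrix.transpose X).mulVec (X.mulVec bstar - y) j
        + (lam * α / Φ α) * deriv Φ (α * |bstar j|) * Real.sign (bstar j) = 0)
    (hdual : ∀ j, bstar j = 0 →
      |(Matrix.transpose X).mulVec (X.mulVec bstar - y) j| < (lam * α / Φ α) * d)
    (heig : ∀ v : Fin p → ℝ, v ≠ 0 → (∀ j, bstar j = 0 → v j = 0) →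
      0 < (∑ i, (X.mulVec v i) ^ 2) + (lam * α ^ 2 / Φ α) * c * (∑ j, (v j) ^ 2)) :
    ∃ ε > 0, ∀ b : Fin p → ℝ, b ≠ bstar → dist b bstar < ε →
      (1/2) * (∑ i, (y i - X.mulVec bstar i) ^ 2) + lam * ∑ j, Φ (α * |bstar j|) / Φ α
        < (1/2) * (∑ i, (y i - X.mulVec b i) ^ 2) + lam * ∑ j, Φ (α * |b j|) / Φ α := by
  classical
  have hPα : 0 < Φ α := bern_phi_pos hB hc hd h0 (c0 := hc0) (d0 := hd0) hα
  set q : ℝ := lam / Φ α with hqdef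
  have hq0 : 0 < q := div_pos hlam hPα
  set g : Fin p → ℝ := fun j => (Matrix.transpose X).mulVec (X.mulVec bstar - y) j with hgdef
  set κc : ℝ := lam * α^2 / Φ α * c with hκcdef
  have hκc0 : κc < 0 := by
    rw [hκcdef]
    apply mul_neg_of_pos_of_neg _ hc0
    positivity
  have heig' : ∀ v : Fin p → ℝ, v ≠ 0 → (∀ j, bstar j = 0 → v j = 0) →
      0 < (∑ i, (X.mulVec v i) ^ 2) + κc * (∑ j, (v j) ^ 2) := by
    intro v hv hsupp
    have := heig v hv hsupp
    exact this
  obtain ⟨m, hm0, hm⟩ := stmt15_exists_m X bstar κc heig'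
  set M2' : ℝ := (∑ i, ∑ j, (X i j)^2) + 1 with hM2def
  have hM2'0 : 0 < M2' := by
    rw [hM2def]
    have : (0:ℝ) ≤ ∑ i, ∑ j, (X i j)^2 :=
      Finset.sum_nonneg fun i _ => Finset.sum_nonneg fun j _ => sq_nonneg _
    linarith
  -- δ : margin of dual feasibility
  obtain ⟨δ, hδ0, hδ⟩ : ∃ δ > 0, ∀ j, bstar j = 0 → δ ≤ (lam * α / Φ α) * d - |g j| := by
    set T := Finset.univ.filter (fun j => bstar j = 0) with hT
    by_cases hTne : T.Nonempty
    · obtain ⟨j₀, hj₀, hminT⟩ := T.exists_min_image (fun j => (lam * α / Φ α) * d - |g j|) hTne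
      have hj₀' : bstar j₀ = 0 := by
        have := Finset.mem_filter.mp hj₀
        exact this.2
      refine ⟨(lam * α / Φ α) * d - |g j₀|, ?_, ?_⟩
      · have h1 := hdual j₀ hj₀'
        have hgj : |g j₀| = |(Matrix.transpose X).mulVec (X.mulVec bstar - y) j₀| := rfl
        rw [hgj]
        linarith
      · intro j hj
        exact hminT j (Finset.mem_filter.mpr ⟨Finset.mem_univ j, hj⟩)
    · refine ⟨1, one_pos, ?_⟩
      intro j hj
      exact absurd ⟨j, Finset.mem_filter.mpr ⟨Finset.mem_univ j, hj⟩⟩ hTne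
  -- ε₁ : distance to the support boundary
  obtain ⟨ε₁, hε₁0, hε₁⟩ : ∃ ε₁ > 0, ∀ j, bstar j ≠ 0 → ε₁ ≤ |bstar j| := by
    set T := Finset.univ.filter (fun j => bstar j ≠ 0) with hT
    by_cases hTne : T.Nonempty
    · obtain ⟨j₀, hj₀, hminT⟩ := T.exists_min_image (fun j => |bstar j|) hTne
      have hj₀' : bstar j₀ ≠ 0 := (Finset.mem_filter.mp hj₀).2
      refine ⟨_, abs_pos.mpr hj₀', ?_⟩
      intro j hj
      exact hminT j (Finset.mem_filter.mpr ⟨Finset.mem_univ j, hj⟩)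
    · refine ⟨1, one_pos, ?_⟩
      intro j hj
      exact absurd ⟨j, Finset.mem_filter.mpr ⟨Finset.mem_univ j, hj⟩⟩ hTne
  set t : ℝ := m / (2*(m - κc + M2')) with htdef
  have hD : 0 < m - κc + M2' := by linarith
  have ht0 : 0 < t := by rw [htdef]; exact div_pos hm0 (by linarith)
  have hC10 : 0 < M2'/2 - κc/4 := by linarith
  set ε : ℝ := min ε₁ (δ*t/(2*(M2'/2 - κc/4))) with hεdef
  have hε0 : 0 < ε := lt_min hε₁0 (by positivity)
  refine ⟨ε, hε0, ?_⟩
  intro b hbne hdist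
  set h : Fin p → ℝ := fun j => b j - bstar j with hhdef
  have hcoord : ∀ j, |h j| < ε := by
    intro j
    have := (dist_pi_lt_iff hε0).mp hdist j
    rwa [Real.dist_eq] at this
  set u : Fin p → ℝ := fun j => if bstar j = 0 then 0 else h j with hudef
  set w : Fin p → ℝ := fun j => if bstar j = 0 then h j else 0 with hwdef
  have husupp : ∀ j, bstar j = 0 → u j = 0 := fun j hj => by simp [hudef, hj]
  -- per-coordinate bound
  have hper : ∀ j, δ * |w j| + κc/2 * (h j)^2 ≤
      g j * h j + (lam * Φ (α * |b j|) / Φ α - lam * Φ (α * |bstar j|) / Φ α) := by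
    intro j
    by_cases hj : bstar j = 0
    · have hwj : w j = h j := by simp [hwdef, hj]
      have hbj : b j = h j := by simp [hhdef, hj]
      have hzero : Φ (α * |bstar j|) = 0 := by rw [hj]; simpa using hΦ0
      rw [hzero, hwj, hbj]
      by_cases hhj : h j = 0
      · simp [hhj, hΦ0]
      · have habs0 : 0 < |h j| := abs_pos.mpr hhj
        have hs : 0 < α * |h j| := mul_pos hα habs0
        have hlow := bern_lower hB hc hd h0 hs
        have hsq : |h j|^2 = (h j)^2 := sq_abs _
        have hg1 : -(|g j| * |h j|) ≤ g j * h j := by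
          have := neg_abs_le (g j * h j)
          rw [abs_mul] at this
          linarith
        have hδj : δ ≤ q*α*d - |g j| := by
          have h1 := hδ j hj
          have h2 : (lam * α / Φ α) * d = q*α*d := by rw [hqdef]; ring
          linarith [h1, h2.le, h2.ge]
        have hml := mul_le_mul_of_nonneg_left hlow hq0.le
        have hδm := mul_le_mul_of_nonneg_right hδj (abs_nonneg (h j))
        have hκx : κc/2*(h j)^2 = q * (c/2*(α*|h j|)^2) := by
          rw [hκcdef, hqdef, ← hsq]; ring
        have hid3 : lam * Φ (α * |h j|) / Φ α = q * Φ (α * |h j|) := by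
          rw [hqdef]; ring
        rw [mul_zero, zero_div, sub_zero, hid3]
        exact stmt15_per_zero q d c α (|h j|) (|g j|) (h j) (g j) (Φ (α * |h j|)) κc δ
          hq0 (abs_nonneg _) hml hκx hg1 hδm
    · have hwj : w j = 0 := by simp [hwdef, hj]
      have hb0 : h j = b j - bstar j := rfl
      have hεle : ε ≤ |bstar j| := le_trans (min_le_left _ _) (hε₁ j hj)
      have habs : |h j| < |bstar j| := lt_of_lt_of_le (hcoord j) hεle
      have hltabs := abs_lt.mp habs
      -- sign analysis
      have hsgn : |b j| - |bstar j| = Real.sign (bstar j) * h j ∧ 0 < |b j| := by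
        rcases lt_or_gt_of_ne hj with hneg | hpos
        · have hbneg : b j < 0 := by
            have h1 : |bstar j| = -bstar j := abs_of_neg hneg
            rw [h1] at hltabs
            have h2 := hltabs.2
            rw [hb0] at h2
            linarith
          rw [Real.sign_of_neg hneg, abs_of_neg hbneg, abs_of_neg hneg, hb0]
          constructor
          · ring
          · linarith
        · have hbpos : 0 < b j := by
            have h1 : |bstar j| = bstar j := abs_of_pos hpos
            rw [h1] at hltabs
            have h2 := hltabs.1
            rw [hb0] at h2
            linarith
          rw [Real.sign_of_pos hpos, abs_of_pos hbpos, abs_of_pos hpos, hb0]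
          constructor
          · ring
          · linarith
      obtain ⟨hsgneq, hbabs⟩ := hsgn
      have hs1 : 0 < α * |bstar j| := mul_pos hα (abs_pos.mpr hj)
      have hs2 : 0 < α * |b j| := mul_pos hα hbabs
      have htay := bern_taylor hB hc hs1 hs2
      have hdiffeq : α * |b j| - α * |bstar j| = α * (Real.sign (bstar j) * h j) := by
        rw [← hsgneq]; ring
      rw [hdiffeq] at htay
      have hσ2 : Real.sign (bstar j) * Real.sign (bstar j) = 1 := by
        rcases lt_or_gt_of_ne hj with hneg | hpos
        · rw [Real.sign_of_neg hneg]; norm_num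
        · rw [Real.sign_of_pos hpos]; norm_num
      have hexp : (α*(Real.sign (bstar j)*h j))^2 = α^2*(h j)^2 := by
        have hσ2' : Real.sign (bstar j)^2 = 1 := by rw [sq, hσ2]
        calc (α*(Real.sign (bstar j)*h j))^2
            = α^2*(Real.sign (bstar j)^2*(h j)^2) := by ring
          _ = α^2*(h j)^2 := by rw [hσ2']; ring
      rw [hexp] at htay
      have hgj : g j = -((lam*α/Φ α) * deriv Φ (α*|bstar j|) * Real.sign (bstar j)) := by
        have := hstat j hj
        rw [hgdef]
        linarith
      have hid3 : lam * Φ (α * |b j|) / Φ α = q * Φ (α * |b j|) := by rw [hqdef]; ring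
      have hid4 : lam * Φ (α * |bstar j|) / Φ α = q * Φ (α * |bstar j|) := by rw [hqdef]; ring
      have hκx : κc/2*(h j)^2 = q * (c/2*(α^2*(h j)^2)) := by rw [hκcdef, hqdef]; ring
      have htay' : Φ (α * |bstar j|) + deriv Φ (α*|bstar j|)*(α*(Real.sign (bstar j)*h j))
          + c/2*(α^2*(h j)^2) ≤ Φ (α * |b j|) := by linarith [htay]
      have hkey := stmt15_per_supp q c α (h j) (Real.sign (bstar j))
        (deriv Φ (α*|bstar j|)) (Φ (α * |bstar j|)) (Φ (α * |b j|)) κc hq0 htay' hκx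
      have hgj' : g j * h j = (-(q*α*(deriv Φ (α*|bstar j|))*(Real.sign (bstar j))))*(h j) := by
        rw [hgj, hqdef]; ring
      rw [hwj, abs_zero, mul_zero, zero_add, hid3, hid4, hgj']
      linarith [hkey]
  -- sums
  set SU : ℝ := ∑ j, (u j)^2 with hSUdef
  set SW : ℝ := ∑ j, (w j)^2 with hSWdef
  set LW : ℝ := ∑ j, |w j| with hLWdef
  set A : ℝ := ∑ i, (X.mulVec u i)^2 with hAdef
  set B : ℝ := ∑ i, (X.mulVec w i)^2 with hBdef
  set CR : ℝ := ∑ i, (X.mulVec u i) * (X.mulVec w i) with hCRdef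
  have hSH : ∑ j, (h j)^2 = SU + SW := by
    rw [hSUdef, hSWdef, ← Finset.sum_add_distrib]
    apply Finset.sum_congr rfl
    intro j _
    by_cases hj : bstar j = 0 <;> simp [hudef, hwdef, hj]
  have hXhsplit : ∀ i, X.mulVec h i = X.mulVec u i + X.mulVec w i := by
    intro i
    have huv : h = u + w := by
      funext j
      by_cases hj : bstar j = 0 <;> simp [hudef, hwdef, hj]
    rw [huv, Matrix.mulVec_add]
    simp
  have hexpand : ∑ i, (X.mulVec h i)^2 = A + 2*CR + B := by
    rw [hAdef, hCRdef, hBdef, ← stmt15_sum_sq_expand]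
    apply Finset.sum_congr rfl
    intro i _
    rw [hXhsplit i]
  have hcross : 0 ≤ t^2*A + 2*t*CR + B := stmt15_tcross _ _ t
  have hBb : B ≤ M2'*SW := by
    have h1 : ∀ i (_ : i ∈ Finset.univ), (X.mulVec w i)^2 ≤ (∑ j, (X i j)^2) * SW :=
      fun i _ => stmt15_cs_row X w i
    have h2 := Finset.sum_le_sum h1
    rw [← Finset.sum_mul] at h2
    have hSWnn : 0 ≤ SW := Finset.sum_nonneg fun j _ => sq_nonneg _
    have h3 : (∑ i, ∑ j, (X i j)^2) * SW ≤ M2' * SW := by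
      apply mul_le_mul_of_nonneg_right _ hSWnn
      rw [hM2def]; linarith
    rw [hBdef]
    linarith
  have hmA : (m - κc)*SU ≤ A := by
    have := hm u husupp
    rw [← hSUdef, ← hAdef] at this
    have hexp2 : (m - κc)*SU = m*SU - κc*SU := by ring
    linarith [this, hexp2.le, hexp2.ge]
  have hSWb : SW ≤ ε*LW := by
    rw [hSWdef, hLWdef, Finset.mul_sum]
    apply Finset.sum_le_sum
    intro j _
    by_cases hj : bstar j = 0
    · have hwj : w j = h j := by simp [hwdef, hj]
      rw [hwj]
      have h1 : (h j)^2 = |h j| * |h j| := by rw [abs_mul_abs_self]; ring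
      rw [h1]
      exact mul_le_mul_of_nonneg_right (hcoord j).le (abs_nonneg _)
    · simp [hwdef, hj]
  have hne : 0 < SU ∨ 0 < LW := by
    have : ∃ j, h j ≠ 0 := by
      by_contra hcon
      push_neg at hcon
      apply hbne
      funext j
      have := hcon j
      rw [hhdef] at this
      simpa [sub_eq_zero] using this
    obtain ⟨j, hj⟩ := this
    by_cases hbj : bstar j = 0
    · right
      rw [hLWdef]
      apply Finset.sum_pos' (fun k _ => abs_nonneg _) ⟨j, Finset.mem_univ j, ?_⟩
      have : w j = h j := by simp [hwdef, hbj]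
      rw [this]
      exact abs_pos.mpr hj
    · left
      rw [hSUdef]
      apply Finset.sum_pos' (fun k _ => sq_nonneg _) ⟨j, Finset.mem_univ j, ?_⟩
      have huj : u j = h j := by simp [hudef, hbj]
      rw [huj]
      positivity
  have hεfin : ε ≤ δ*t/(2*(M2'/2 - κc/4)) := min_le_right _ _
  have hSUnn : 0 ≤ SU := Finset.sum_nonneg fun j _ => sq_nonneg _
  have hSWnn : 0 ≤ SW := Finset.sum_nonneg fun j _ => sq_nonneg _
  have hLWnn : 0 ≤ LW := Finset.sum_nonneg fun j _ => abs_nonneg _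
  have hBnn : 0 ≤ B := Finset.sum_nonneg fun i _ => sq_nonneg _
  have hfinal := stmt15_final_alg m κc M2' δ t ε SU SW LW A B CR hm0 hκc0 hM2'0 hδ0
    htdef hεfin hSUnn hSWnn hLWnn hBnn hcross hBb hmA hSWb hne
  -- sum the per-coordinate bounds
  have hsum := Finset.sum_le_sum (fun j (_ : j ∈ Finset.univ) => hper j)
  have hLsum : ∑ j, (δ * |w j| + κc/2 * (h j)^2) = δ*LW + κc/2*(SU+SW) := by
    rw [Finset.sum_add_distrib, ← Finset.mul_sum, ← Finset.mul_sum, hSH, ← hLWdef]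
  have hRsum : ∑ j, (g j * h j + (lam * Φ (α * |b j|) / Φ α - lam * Φ (α * |bstar j|) / Φ α))
      = (∑ j, g j * h j) + (lam * ∑ j, Φ (α * |b j|) / Φ α)
        - (lam * ∑ j, Φ (α * |bstar j|) / Φ α) := by
    rw [Finset.sum_add_distrib, Finset.sum_sub_distrib]
    have e1 : ∑ j, lam * Φ (α * |b j|) / Φ α = lam * ∑ j, Φ (α * |b j|) / Φ α := by
      rw [Finset.mul_sum]
      apply Finset.sum_congr rfl
      intro j _; ring
    have e2 : ∑ j, lam * Φ (α * |bstar j|) / Φ α = lam * ∑ j, Φ (α * |bstar j|) / Φ α := by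
      rw [Finset.mul_sum]
      apply Finset.sum_congr rfl
      intro j _; ring
    rw [e1, e2]
    ring
  rw [hLsum, hRsum] at hsum
  -- quadratic identity
  have hquad : (1/2) * (∑ i, (y i - X.mulVec b i)^2)
      = (1/2) * (∑ i, (y i - X.mulVec bstar i)^2) + (∑ j, g j * h j)
        + (1/2) * ∑ i, (X.mulVec h i)^2 := by
    have hXb : ∀ i, X.mulVec b i = X.mulVec bstar i + X.mulVec h i := by
      intro i
      have hb : b = fun j => bstar j + h j := by
        funext j; rw [hhdef]; ring
      rw [hb]
      have : (fun j => bstar j + h j) = bstar + h := rfl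
      rw [this, Matrix.mulVec_add]
      simp
    have hei : ∀ i, (y i - X.mulVec b i)^2 = (y i - X.mulVec bstar i)^2
        + 2*((X.mulVec bstar i - y i) * X.mulVec h i) + (X.mulVec h i)^2 := by
      intro i
      rw [hXb i]
      ring
    have hgh : ∑ i, (X.mulVec bstar i - y i) * X.mulVec h i = ∑ j, g j * h j := by
      have := stmt15_sum_transpose X (fun i => X.mulVec bstar i - y i) h
      have he : (fun i => X.mulVec bstar i - y i) = X.mulVec bstar - y := rfl
      rw [he] at this
      rw [hgdef]
      exact this
    rw [Finset.sum_congr rfl (fun i _ => hei i), Finset.sum_add_distrib,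
      Finset.sum_add_distrib, ← Finset.mul_sum, hgh]
    ring
  rw [hexpand] at hquad
  linarith [hsum, hquad, hfinal]
end
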